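/- arXiv:math/0511159 — 12 statements merged into one kernel-verified Lean document; each statement's English description precedes it below -/
import Mathlib

section
/- Let A be a ring and let T be a class of right A-modules that is closed under isomorphisms, submodules, quotient modules, extensions, and arbitrary direct products. Set I := ⋂ {K : K is a right ideal of A with A/K ∈ T}. Then I is a two-sided ideal of A, I·I = I, and T = {M : M is a right A-module with MI = 0}. -/
/-!
Let `I` be the intersection of the right ideals `K` with `A/K ∈ T`. Since `A/I` embeds into
`∏ A/K`, it lies in `T`. A module `M ∈ T` is annihilated by `I`, because each cyclic
submodule `mA ≅ A/ann(m)` lies in `T`, so `I ⊆ ann(m)`; applied to `M = A/I` this makes `I`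
two-sided. Conversely a module annihilated by `I` is a quotient of a direct sum of copies of
`A/I`, and direct sums are submodules of products. Finally, with `J = I²`, the module `I/J` is
annihilated by `I`, so the extension `0 → I/J → A/J → A/I → 0` puts `A/J` in `T`, whence
`I ⊆ J`.
-/

open MulOpposite

def IsExtensionClosed (R : Type) [Ring R] (T : ∀ (M : Type) [AddCommGroup M] [Module R M], Prop) :
    Prop :=
  ∀ (M₁ M M₂ : Type) [AddCommGroup M₁] [Module R M₁] [AddCommGroup M] [Module R M]
    [AddCommGroup M₂] [Module R M₂] (f : M₁ →ₗ[R] M) (g : M →ₗ[R] M₂),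
    Function.Injective f → Function.Surjective g → LinearMap.range f = LinearMap.ker g →
    T M₁ → T M₂ → T M

structure IsSubQuotProdClosed (R : Type) [Ring R]
    (T : ∀ (M : Type) [AddCommGroup M] [Module R M], Prop) : Prop where
  of_equiv : ∀ (M N : Type) [AddCommGroup M] [Module R M] [AddCommGroup N] [Module R N],
    (M ≃ₗ[R] N) → T M → T N
  submodule : ∀ (M : Type) [AddCommGroup M] [Module R M], T M → ∀ N : Submodule R M, T N
  quotient : ∀ (M : Type) [AddCommGroup M] [Module R M],
    T M → ∀ N : Submodule R M, T (M ⧸ N)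
  pi : ∀ (ι : Type) (M : ι → Type) [∀ i, AddCommGroup (M i)] [∀ i, Module R (M i)],
    (∀ i, T (M i)) → T (∀ i, M i)

section General

variable {R : Type} [Ring R] {T : ∀ (M : Type) [AddCommGroup M] [Module R M], Prop}
  {M N : Type} [AddCommGroup M] [Module R M] [AddCommGroup N] [Module R N]

theorem IsExtensionClosed.of_submodule_of_quotient (hT : IsExtensionClosed R T)
    (N : Submodule R M) (hN : T N) (hQ : T (M ⧸ N)) : T M :=
  hT _ _ _ N.subtype N.mkQ N.injective_subtype N.mkQ_surjective
    (by rw [N.range_subtype, N.ker_mkQ]) hN hQ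

theorem Submodule.mem_addSubgroupClosure_of_mem_span {s : Set M}
    (hs : ∀ r : R, ∀ x ∈ s, r • x ∈ s) {x : M} (hx : x ∈ span R s) :
    x ∈ AddSubgroup.closure s := by
  induction hx using Submodule.closure_induction with
  | zero => exact zero_mem _
  | add _ _ _ _ hx hy => exact add_mem hx hy
  | smul_mem r x hx => exact AddSubgroup.subset_closure (hs r x hx)

namespace IsSubQuotProdClosed

theorem of_injective (hT : IsSubQuotProdClosed R T) (f : N →ₗ[R] M)
    (hf : Function.Injective f) (hM : T M) : T N :=
  hT.of_equiv _ _ (LinearEquiv.ofInjective f hf).symm (hT.submodule _ hM _)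

theorem of_surjective (hT : IsSubQuotProdClosed R T) (f : M →ₗ[R] N)
    (hf : Function.Surjective f) (hM : T M) : T N :=
  hT.of_equiv _ _ (f.quotKerEquivOfSurjective hf) (hT.quotient _ hM _)

theorem quotient_ker (hT : IsSubQuotProdClosed R T) (f : N →ₗ[R] M) (hM : T M) :
    T (N ⧸ LinearMap.ker f) :=
  hT.of_equiv _ _ f.quotKerEquivRange.symm (hT.submodule _ hM _)

theorem quotient_sInf (hT : IsSubQuotProdClosed R T) {S : Set (Submodule R M)}
    (hS : ∀ K ∈ S, T (M ⧸ K)) : T (M ⧸ sInf S) := by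
  let f : M →ₗ[R] ∀ K : S, M ⧸ (K : Submodule R M) := LinearMap.pi fun K => K.1.mkQ
  have hker : LinearMap.ker f = sInf S := by
    ext x
    simp [f, funext_iff, Submodule.mem_sInf]
  exact hT.of_equiv _ _ (Submodule.quotEquivOfEq _ _ hker)
    (hT.quotient_ker f (hT.pi _ _ fun K => hS K K.2))

theorem finsupp (hT : IsSubQuotProdClosed R T) (ι : Type) (hM : T M) : T (ι →₀ M) :=
  hT.of_injective (Finsupp.lcoeFun (R := R)) DFunLike.coe_injective (hT.pi _ _ fun _ => hM)

end IsSubQuotProdClosed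

end General

section RightModules

variable {A : Type} [Ring A] {T : ∀ (M : Type) [AddCommGroup M] [Module Aᵐᵒᵖ M], Prop}
  {M : Type} [AddCommGroup M] [Module Aᵐᵒᵖ M]

def toSpanSingletonRight (m : M) : A →ₗ[Aᵐᵒᵖ] M :=
  LinearMap.toSpanSingleton Aᵐᵒᵖ M m ∘ₗ (opLinearEquiv Aᵐᵒᵖ).toLinearMap

def classIdeal (T : ∀ (M : Type) [AddCommGroup M] [Module Aᵐᵒᵖ M], Prop) :
    Submodule Aᵐᵒᵖ A :=
  sInf {K | T (A ⧸ K)}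

namespace IsSubQuotProdClosed

theorem quotient_classIdeal (hT : IsSubQuotProdClosed Aᵐᵒᵖ T) : T (A ⧸ classIdeal T) :=
  hT.quotient_sInf fun _ hK => hK

theorem smul_eq_zero_of_mem_classIdeal (hT : IsSubQuotProdClosed Aᵐᵒᵖ T) (hM : T M) (m : M)
    {a : A} (ha : a ∈ classIdeal T) : op a • m = 0 :=
  (sInf_le (hT.quotient_ker (toSpanSingletonRight m) hM) :
    classIdeal T ≤ LinearMap.ker (toSpanSingletonRight m)) ha

theorem of_forall_smul_eq_zero (hT : IsSubQuotProdClosed Aᵐᵒᵖ T)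
    (hM : ∀ m : M, ∀ a ∈ classIdeal T, op a • m = 0) : T M := by
  let f : M → (A ⧸ classIdeal T) →ₗ[Aᵐᵒᵖ] M := fun m =>
    (classIdeal T).liftQ (toSpanSingletonRight m) fun a ha => hM m a ha
  refine hT.of_surjective (Finsupp.lsum ℕ f)
    (fun m => ⟨Finsupp.single m (Submodule.Quotient.mk 1), ?_⟩)
    (hT.finsupp M hT.quotient_classIdeal)
  rw [Finsupp.lsum_single]
  exact one_smul Aᵐᵒᵖ m

theorem mul_mem_classIdeal (hT : IsSubQuotProdClosed Aᵐᵒᵖ T) {a : A} (ha : a ∈ classIdeal T)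
    (b : A) : b * a ∈ classIdeal T := by
  have := hT.smul_eq_zero_of_mem_classIdeal hT.quotient_classIdeal (Submodule.Quotient.mk b) ha
  rwa [← Submodule.Quotient.mk_smul, op_smul_eq_mul, Submodule.Quotient.mk_eq_zero] at this

theorem mem_addSubgroupClosure_mul_of_mem_classIdeal (hT : IsSubQuotProdClosed Aᵐᵒᵖ T)
    (hext : IsExtensionClosed Aᵐᵒᵖ T) {a : A} (ha : a ∈ classIdeal T) :
    a ∈ AddSubgroup.closure {x | ∃ b ∈ classIdeal T, ∃ c ∈ classIdeal T, x = b * c} := by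
  set I := classIdeal T
  set P : Set A := {x | ∃ b ∈ I, ∃ c ∈ I, x = b * c}
  set J := Submodule.span Aᵐᵒᵖ P
  have hJI : J ≤ I := Submodule.span_le.mpr <| by
    rintro _ ⟨b, hb, c, -, rfl⟩
    exact I.smul_mem (op c) hb
  have hIJ : T (I.map J.mkQ) := hT.of_forall_smul_eq_zero <| by
    rintro ⟨_, b, hb, rfl⟩ c hc
    refine Subtype.ext ((Submodule.Quotient.mk_eq_zero J).mpr ?_)
    exact Submodule.subset_span ⟨b, hb, c, hc, rfl⟩
  have hJ : T (A ⧸ J) := hext.of_submodule_of_quotient _ hIJ <|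
    hT.of_equiv _ _ (Submodule.quotientQuotientEquivQuotient J I hJI).symm hT.quotient_classIdeal
  refine Submodule.mem_addSubgroupClosure_of_mem_span ?_ ((sInf_le hJ : I ≤ J) ha)
  rintro r _ ⟨b, hb, c, hc, rfl⟩
  exact ⟨b, hb, c * r.unop, I.smul_mem r hc, mul_assoc b c r.unop⟩

end IsSubQuotProdClosed

end RightModules

/-- If `T` is a class of right `A`-modules (modules over `Aᵐᵒᵖ`) closed under
isomorphisms, submodules, quotients, extensions and arbitrary direct products, and
`I := ⋂ {K right ideal | A/K ∈ T}`, then `I` is a two-sided ideal, `I` is idempotent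
(every element of `I` is a finite sum of products of two elements of `I`), and
`T = {M | MI = 0}`.  Right ideals of `A` are submodules of the right regular module,
i.e. `Submodule Aᵐᵒᵖ A`. -/
theorem stmt_1 (A : Type) [Ring A]
    (T : ∀ (M : Type) [AddCommGroup M] [Module Aᵐᵒᵖ M], Prop)
    (hiso : ∀ (M N : Type) [AddCommGroup M] [Module Aᵐᵒᵖ M] [AddCommGroup N] [Module Aᵐᵒᵖ N],
      (M ≃ₗ[Aᵐᵒᵖ] N) → T M → T N)
    (hsub : ∀ (M : Type) [AddCommGroup M] [Module Aᵐᵒᵖ M],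
      T M → ∀ N : Submodule Aᵐᵒᵖ M, T N)
    (hquot : ∀ (M : Type) [AddCommGroup M] [Module Aᵐᵒᵖ M],
      T M → ∀ N : Submodule Aᵐᵒᵖ M, T (M ⧸ N))
    (hext : ∀ (M₁ M M₂ : Type) [AddCommGroup M₁] [Module Aᵐᵒᵖ M₁] [AddCommGroup M]
        [Module Aᵐᵒᵖ M] [AddCommGroup M₂] [Module Aᵐᵒᵖ M₂]
        (f : M₁ →ₗ[Aᵐᵒᵖ] M) (g : M →ₗ[Aᵐᵒᵖ] M₂),
      Function.Injective f → Function.Surjective g → LinearMap.range f = LinearMap.ker g →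
      T M₁ → T M₂ → T M)
    (hprod : ∀ (ι : Type) (M : ι → Type) [∀ i, AddCommGroup (M i)] [∀ i, Module Aᵐᵒᵖ (M i)],
      (∀ i, T (M i)) → T (∀ i, M i)) :
    -- `I` is already a right ideal; it is moreover closed under left multiplication,
    (∀ a ∈ sInf {K : Submodule Aᵐᵒᵖ A | T (A ⧸ K)}, ∀ b : A,
      b * a ∈ sInf {K : Submodule Aᵐᵒᵖ A | T (A ⧸ K)}) ∧
    -- `I` is idempotent,
    (∀ a ∈ sInf {K : Submodule Aᵐᵒᵖ A | T (A ⧸ K)},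
      a ∈ AddSubgroup.closure {x : A | ∃ b ∈ sInf {K : Submodule Aᵐᵒᵖ A | T (A ⧸ K)},
        ∃ c ∈ sInf {K : Submodule Aᵐᵒᵖ A | T (A ⧸ K)}, x = b * c}) ∧
    -- and `T` is exactly the class of right `A`-modules annihilated by `I`.
    (∀ (M : Type) [AddCommGroup M] [Module Aᵐᵒᵖ M],
      T M ↔ ∀ (m : M), ∀ a ∈ sInf {K : Submodule Aᵐᵒᵖ A | T (A ⧸ K)}, op a • m = 0) := by
  have hT : IsSubQuotProdClosed Aᵐᵒᵖ T := ⟨hiso, hsub, hquot, hprod⟩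
  exact ⟨fun a ha b => hT.mul_mem_classIdeal ha b,
    fun a ha => hT.mem_addSubgroupClosure_mul_of_mem_classIdeal hext ha,
    fun M _ _ => ⟨fun hM m a ha => hT.smul_eq_zero_of_mem_classIdeal hM m ha,
      hT.of_forall_smul_eq_zero⟩⟩
end

section
/- Let A be a ring and I a two-sided idempotent ideal of A. Then the following are equivalent: (1) for every right A-module M, both MI and ann_M(I) are direct summands of M; (2) there exists a central idempotent e ∈ A with I = eA. -/
open MulOpposite

variable (A : Type) [Ring A]

/-- `MI`: the submodule of the right `A`-module `M` (a module over `Aᵐᵒᵖ`) generated by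
the products `m·a` with `m ∈ M`, `a ∈ I`. -/
def rIdealSMul (I : Ideal A) (M : Type) [AddCommGroup M] [Module Aᵐᵒᵖ M] :
    Submodule Aᵐᵒᵖ M :=
  Submodule.span Aᵐᵒᵖ {x : M | ∃ (m : M) (a : A), a ∈ I ∧ x = op a • m}

/-- `ann_M(I) = {m ∈ M | m·a = 0 for all a ∈ I}` as a submodule of the right `A`-module `M`. -/
def rAnn (I : Ideal A) (M : Type) [AddCommGroup M] [Module Aᵐᵒᵖ M] :
    Submodule Aᵐᵒᵖ M where
  carrier := {m : M | ∀ a ∈ I, op a • m = 0}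
  add_mem' := by
    intro x y hx hy a ha
    rw [smul_add, hx a ha, hy a ha, add_zero]
  zero_mem' := by
    intro a _
    rw [smul_zero]
  smul_mem' := by
    intro c m hm a ha
    rw [smul_smul]
    have h1 : op a * c = op (c.unop * a) := by
      rw [op_mul, op_unop]
    rw [h1]
    exact hm (c.unop * a) (I.mul_mem_left c.unop ha)

/-- A submodule is a direct summand if it has a complement. -/
def IsDirectSummand {R M : Type} [Ring R] [AddCommGroup M] [Module R M]
    (N : Submodule R M) : Prop :=
  ∃ N' : Submodule R M, N ⊓ N' = ⊥ ∧ N ⊔ N' = ⊤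

/-- for a two-sided idempotent ideal `I` of `A`, the following are equivalent:
(1) for every right `A`-module `M` both `MI` and `ann_M(I)` are direct summands of `M`;
(2) `I = eA` for a central idempotent `e ∈ A`. -/
theorem stmt_2 (I : Ideal A)
    (hright : ∀ a ∈ I, ∀ b : A, a * b ∈ I)
    (hidem : ∀ a ∈ I, a ∈ AddSubgroup.closure {x : A | ∃ b ∈ I, ∃ c ∈ I, x = b * c}) :
    (∀ (M : Type) [AddCommGroup M] [Module Aᵐᵒᵖ M],
        IsDirectSummand (rIdealSMul A I M) ∧ IsDirectSummand (rAnn A I M)) ↔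
    (∃ e : A, IsIdempotentElem e ∧ (∀ b : A, e * b = b * e) ∧
        (I : Set A) = {x : A | ∃ a : A, x = e * a}) := by
  constructor
  · intro h
    -- I as a submodule of the right A-module A
    set I' : Submodule Aᵐᵒᵖ A :=
      { carrier := (I : Set A)
        add_mem' := fun ha hb => I.add_mem ha hb
        zero_mem' := I.zero_mem
        smul_mem' := fun c x hx => by
          show x * c.unop ∈ I
          exact hright x hx c.unop } with hI'def
    have hspan : rIdealSMul A I A = I' := by
      apply le_antisymm
      · rw [rIdealSMul, Submodule.span_le]
        rintro _ ⟨m, a, ha, rfl⟩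
        show op a • m ∈ I
        rw [op_smul_eq_mul]
        have := I.smul_mem m ha
        rwa [smul_eq_mul] at this
      · intro x hx
        exact Submodule.subset_span ⟨1, x, hx, by rw [op_smul_eq_mul, one_mul]⟩
    obtain ⟨J, hJ1, hJ2⟩ := (h A).1
    rw [hspan] at hJ1 hJ2
    have h1 : (1 : A) ∈ I' ⊔ J := by rw [hJ2]; trivial
    rw [Submodule.mem_sup] at h1
    obtain ⟨e, he, j, hj, hej⟩ := h1
    -- e acts as a left identity on I
    have heq : ∀ a ∈ I, e * a = a := by
      intro a ha
      have h2 : j * a = a - e * a := by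
        rw [eq_sub_iff_add_eq, ← add_mul, add_comm, hej, one_mul]
      have hmem : j * a ∈ I' ⊓ J := by
        constructor
        · show j * a ∈ I
          rw [h2]
          have hea : e * a ∈ I := by
            have := I.smul_mem e ha; rwa [smul_eq_mul] at this
          exact I.sub_mem ha hea
        · have := J.smul_mem (op a) hj
          rwa [op_smul_eq_mul] at this
      rw [hJ1, Submodule.mem_bot] at hmem
      rw [hmem, eq_comm, sub_eq_zero] at h2
      exact h2.symm
    have hee : e * e = e := heq e he
    have hebe : ∀ b : A, e * (b * e) = b * e := by
      intro b
      apply heq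
      have := I.smul_mem b he; rwa [smul_eq_mul] at this
    -- now use the annihilator condition for the module I'
    obtain ⟨D, hD1, hD2⟩ := (h I').2
    have hE : (⟨e, he⟩ : I') ∈ rAnn A I I' ⊔ D := by rw [hD2]; trivial
    rw [Submodule.mem_sup] at hE
    obtain ⟨x, hx, d, hd, hxd⟩ := hE
    have hstep : ∀ b : A, (d : A) * (b * (1 - e)) = 0 := by
      intro b
      have hmem : op (b * (1 - e)) • d ∈ rAnn A I I' ⊓ D := by
        constructor
        · intro a ha
          apply Subtype.ext
          show ((d : A) * (b * (1 - e))) * a = 0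
          have h3 : (1 - e) * a = 0 := by
            rw [sub_mul, one_mul, heq a ha, sub_self]
          rw [mul_assoc, mul_assoc, h3, mul_zero, mul_zero]
        · exact D.smul_mem _ hd
      rw [hD1, Submodule.mem_bot] at hmem
      have := congrArg (Subtype.val) hmem
      exact this
    have hxe : (x : A) * e = 0 := by
      have := hx e he
      exact congrArg Subtype.val this
    have hsum : (x : A) + (d : A) = e := congrArg Subtype.val hxd
    have hdf : (d : A) * (1 - e) = 0 := by
      have := hstep 1; rwa [one_mul] at this
    have hxf : (x : A) * (1 - e) = 0 := by
      have h4 : ((x : A) + (d : A)) * (1 - e) = e * (1 - e) := by rw [hsum]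
      have h4' : e * (1 - e) = 0 := by rw [mul_sub, mul_one, hee, sub_self]
      rw [add_mul, hdf, add_zero, h4'] at h4
      exact h4
    have hx0 : (x : A) = 0 := by
      have : (x : A) * e + (x : A) * (1 - e) = (x : A) := by
        rw [← mul_add, add_sub_cancel, mul_one]
      rw [hxe, hxf, add_zero] at this
      exact this.symm
    have hde : (d : A) = e := by
      rw [← hsum, hx0, zero_add]
    have hebf : ∀ b : A, e * (b * (1 - e)) = 0 := by
      intro b
      have := hstep b
      rwa [hde] at this
    have hcentral : ∀ b : A, e * b = b * e := by
      intro b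
      have h5 : e * (b * e) + e * (b * (1 - e)) = e * b := by
        rw [← mul_add, ← mul_add, add_sub_cancel, mul_one]
      rw [hebf, add_zero, hebe] at h5
      exact h5.symm
    refine ⟨e, hee, hcentral, ?_⟩
    ext y
    constructor
    · intro hy
      exact ⟨y, (heq y hy).symm⟩
    · rintro ⟨a, rfl⟩
      exact hright e he a
  · rintro ⟨e, he, hcomm, hset⟩ M _ _
    have heI : e ∈ I := by
      show e ∈ (I : Set A)
      rw [hset]
      exact ⟨1, (mul_one e).symm⟩
    have hIe : ∀ a ∈ I, e * a = a := by
      intro a ha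
      have : a ∈ (I : Set A) := ha
      rw [hset] at this
      obtain ⟨b, rfl⟩ := this
      rw [← mul_assoc, he]
    have hopcomm : ∀ c : Aᵐᵒᵖ, op e * c = c * op e := by
      intro c
      rw [← op_unop c, ← op_mul, ← op_mul, hcomm]
    set P : Submodule Aᵐᵒᵖ M :=
      { carrier := {m | op e • m = m}
        add_mem' := fun hx hy => by
          show op e • _ = _
          rw [smul_add, hx, hy]
        zero_mem' := smul_zero _
        smul_mem' := fun c m hm => by
          show op e • c • m = c • m
          rw [smul_smul, hopcomm, ← smul_smul, hm] } with hPdef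
    set Q : Submodule Aᵐᵒᵖ M :=
      { carrier := {m | op e • m = 0}
        add_mem' := fun hx hy => by
          show op e • _ = 0
          rw [smul_add, hx, hy, add_zero]
        zero_mem' := smul_zero _
        smul_mem' := fun c m hm => by
          show op e • c • m = 0
          rw [smul_smul, hopcomm, ← smul_smul, hm, smul_zero] } with hQdef
    have hPe : ∀ m : M, op e • (op e • m) = op e • m := by
      intro m
      rw [smul_smul, ← op_mul, he]
    have hbot : P ⊓ Q = ⊥ := by
      rw [eq_bot_iff]
      rintro m ⟨h1, h2⟩
      rw [Submodule.mem_bot]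
      have h1' : op e • m = m := h1
      have h2' : op e • m = 0 := h2
      rw [← h1', h2']
    have htop : P ⊔ Q = ⊤ := by
      rw [eq_top_iff]
      intro m _
      rw [Submodule.mem_sup]
      refine ⟨op e • m, hPe m, m - op e • m, ?_, by abel⟩
      show op e • (m - op e • m) = 0
      rw [smul_sub, hPe m, sub_self]
    have hPeq : rIdealSMul A I M = P := by
      apply le_antisymm
      · rw [rIdealSMul, Submodule.span_le]
        rintro _ ⟨m, a, ha, rfl⟩
        show op e • (op a • m) = op a • m
        have hae : a * e = a := by
          rw [← hcomm a, hIe a ha]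
        rw [smul_smul, ← op_mul, hae]
      · intro m hm
        have hm' : op e • m = m := hm
        exact Submodule.subset_span ⟨m, e, heI, hm'.symm⟩
    have hQeq : rAnn A I M = Q := by
      apply le_antisymm
      · intro m hm
        exact hm e heI
      · intro m hm a ha
        have hm' : op e • m = 0 := hm
        have : a ∈ (I : Set A) := ha
        rw [hset] at this
        obtain ⟨b, rfl⟩ := this
        rw [show op (e * b) = op b * op e from by rw [← op_mul], ← smul_smul, hm', smul_zero]
    constructor
    · rw [hPeq]; exact ⟨Q, hbot, htop⟩
    · rw [hQeq]
      exact ⟨P, by rw [inf_comm]; exact hbot, by rw [sup_comm]; exact htop⟩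
end

section
/- Let A be a ring and I a two-sided idempotent ideal of A such that MI is a direct summand of M for every right A-module M. Then there exists an idempotent e ∈ A with I = eA; moreover (1−e)Ae = 0, i.e., (1−e)ae = 0 for all a ∈ A. -/
open MulOpposite

variable (A : Type) [Ring A]

/-- if `I` is a two-sided idempotent ideal of `A` such that `MI` is a direct
summand of `M` for every right `A`-module `M`, then `I = eA` for an idempotent `e` with
`(1-e)Ae = 0`. -/
theorem stmt_3 (I : Ideal A)
    (hright : ∀ a ∈ I, ∀ b : A, a * b ∈ I)
    (hidem : ∀ a ∈ I, a ∈ AddSubgroup.closure {x : A | ∃ b ∈ I, ∃ c ∈ I, x = b * c})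
    (hsplit : ∀ (M : Type) [AddCommGroup M] [Module Aᵐᵒᵖ M],
      IsDirectSummand (rIdealSMul A I M)) :
    ∃ e : A, IsIdempotentElem e ∧ (I : Set A) = {x : A | ∃ a : A, x = e * a} ∧
      ∀ a : A, (1 - e) * a * e = 0 := by

  obtain ⟨J, hinf, hsup⟩ := hsplit A
  set P := rIdealSMul A I A with hP
  have hmemP : ∀ x : A, x ∈ P ↔ x ∈ I := by
    intro x
    constructor
    · intro hx
      refine Submodule.span_induction ?_ I.zero_mem (fun a b _ _ ha hb => I.add_mem ha hb)
        ?_ hx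
      · rintro y ⟨m, a, ha, rfl⟩
        rw [op_smul_eq_mul]
        simpa using I.smul_mem m ha
      · intro c y _ hy
        rw [← op_unop c, op_smul_eq_mul]
        exact hright y hy c.unop
    · intro hx
      exact Submodule.subset_span ⟨1, x, hx, by rw [op_smul_eq_mul, one_mul]⟩
  have h1 : (1 : A) ∈ P ⊔ J := hsup ▸ Submodule.mem_top
  obtain ⟨e, he, f, hf, hef⟩ := Submodule.mem_sup.mp h1
  have heI : e ∈ I := (hmemP e).mp he
  have hkey : ∀ x ∈ I, e * x = x := by
    intro x hx
    have hfx : f * x ∈ J := by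
      have := J.smul_mem (op x) hf
      rwa [op_smul_eq_mul] at this
    have hfxP : f * x ∈ P := by
      have hfeq : f * x = x - e * x := by
        have h : (e + f) * x = 1 * x := by rw [hef]
        rw [add_mul, one_mul] at h
        exact eq_sub_of_add_eq' h
      rw [hfeq]
      exact P.sub_mem ((hmemP x).mpr hx) ((hmemP (e * x)).mpr (hright e heI x))
    have : f * x ∈ P ⊓ J := ⟨hfxP, hfx⟩
    rw [hinf, Submodule.mem_bot] at this
    have hfeq : f * x = x - e * x := by
      have h : (e + f) * x = 1 * x := by rw [hef]
      rw [add_mul, one_mul] at h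
      exact eq_sub_of_add_eq' h
    rw [hfeq] at this
    exact ((sub_eq_zero.mp this)).symm
  refine ⟨e, hkey e heI, ?_, ?_⟩
  · ext x
    constructor
    · intro hx
      exact ⟨x, (hkey x hx).symm⟩
    · rintro ⟨a, rfl⟩
      exact hright e heI a
  · intro a
    have hae : a * e ∈ I := by simpa using I.smul_mem a heI
    have h := hkey (a * e) hae
    rw [mul_assoc, sub_mul, one_mul, h, sub_self]
end

section
/- Let A be a ring and e ∈ A an idempotent such that eA is a two-sided ideal of A (equivalently, (1−e)Ae = 0). Then the following are equivalent: (1) for every right A-module M, the submodule M·(eA) is a direct summand of M; (2) eA(1−e) is hereditary Σ-injective as a right module over the corner ring (1−e)A(1−e). -/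
open MulOpposite

section Corner

variable (A : Type) [Ring A]

/-- The corner ring `fAf = {x : A | f·x·f = x}` attached to an idempotent `f` of `A`;
it is a ring with identity `f`. -/
def CornerRing (f : A) (_hf : f * f = f) : Type := {x : A // f * x * f = x}

variable {A}

lemma absorb_left {f x : A} (hf : f * f = f) (h : f * x * f = x) : f * x = x := by
  conv_lhs => rw [← h]
  rw [← mul_assoc, ← mul_assoc, hf, h]

lemma absorb_right {f x : A} (hf : f * f = f) (h : f * x * f = x) : x * f = x := by
  conv_lhs => rw [← h]
  rw [mul_assoc, mul_assoc, hf, ← mul_assoc, h]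

namespace CornerRing

variable {f : A} {hf : f * f = f}

instance : Add (CornerRing A f hf) := ⟨fun x y => ⟨x.1 + y.1, by rw [mul_add, add_mul, x.2, y.2]⟩⟩
instance : Zero (CornerRing A f hf) := ⟨⟨0, by rw [mul_zero, zero_mul]⟩⟩
instance : Neg (CornerRing A f hf) := ⟨fun x => ⟨-x.1, by rw [mul_neg, neg_mul, x.2]⟩⟩
instance : Mul (CornerRing A f hf) :=
  ⟨fun x y => ⟨x.1 * y.1, by rw [← mul_assoc, absorb_left hf x.2, mul_assoc,
    absorb_right hf y.2]⟩⟩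
instance : One (CornerRing A f hf) := ⟨⟨f, by rw [hf, hf]⟩⟩

instance instRing : Ring (CornerRing A f hf) where
  nsmul := nsmulRec
  zsmul := zsmulRec
  add_assoc x y z := Subtype.ext (add_assoc x.1 y.1 z.1)
  zero_add x := Subtype.ext (zero_add x.1)
  add_zero x := Subtype.ext (add_zero x.1)
  add_comm x y := Subtype.ext (add_comm x.1 y.1)
  neg_add_cancel x := Subtype.ext (neg_add_cancel x.1)
  mul_assoc x y z := Subtype.ext (mul_assoc x.1 y.1 z.1)
  one_mul x := Subtype.ext (absorb_left hf x.2)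
  mul_one x := Subtype.ext (absorb_right hf x.2)
  left_distrib x y z := Subtype.ext (mul_add x.1 y.1 z.1)
  right_distrib x y z := Subtype.ext (add_mul x.1 y.1 z.1)
  zero_mul x := Subtype.ext (zero_mul x.1)
  mul_zero x := Subtype.ext (mul_zero x.1)

end CornerRing

lemma one_sub_idem {e : A} (he : e * e = e) : (1 - e) * (1 - e) = 1 - e := by
  have h : (1 - e) * (1 - e) = 1 - e - e + e * e := by noncomm_ring
  rw [h, he]; abel

variable (A)

/-- `eA(1-e) = {x : A | e·x·(1-e) = x}`, which is a right module over the corner ring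
`(1-e)A(1-e)`. -/
def Trap (e : A) (_he : e * e = e) : Type := {x : A // e * x * (1 - e) = x}

variable {A}

namespace Trap

variable {e : A} {he : e * e = e}

lemma trap_left {x : A} (h : e * x * (1 - e) = x) (he : e * e = e) : e * x = x := by
  conv_lhs => rw [← h]
  rw [← mul_assoc, ← mul_assoc, he, h]

lemma trap_right {x : A} (h : e * x * (1 - e) = x) (he : e * e = e) : x * (1 - e) = x := by
  conv_lhs => rw [← h]
  rw [mul_assoc, mul_assoc, one_sub_idem he, ← mul_assoc, h]

instance : Add (Trap A e he) := ⟨fun x y => ⟨x.1 + y.1, by rw [mul_add, add_mul, x.2, y.2]⟩⟩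
instance : Zero (Trap A e he) := ⟨⟨0, by rw [mul_zero, zero_mul]⟩⟩
instance : Neg (Trap A e he) := ⟨fun x => ⟨-x.1, by rw [mul_neg, neg_mul, x.2]⟩⟩

instance instAddCommGroup : AddCommGroup (Trap A e he) where
  nsmul := nsmulRec
  zsmul := zsmulRec
  add_assoc x y z := Subtype.ext (add_assoc x.1 y.1 z.1)
  zero_add x := Subtype.ext (zero_add x.1)
  add_zero x := Subtype.ext (add_zero x.1)
  add_comm x y := Subtype.ext (add_comm x.1 y.1)
  neg_add_cancel x := Subtype.ext (neg_add_cancel x.1)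

instance instSMul : SMul (CornerRing A (1 - e) (one_sub_idem he))ᵐᵒᵖ (Trap A e he) :=
  ⟨fun c x => ⟨x.1 * c.unop.1, by
    rw [← mul_assoc, trap_left x.2 he, mul_assoc, absorb_right (one_sub_idem he) c.unop.2]⟩⟩

instance instMulAction :
    MulAction (CornerRing A (1 - e) (one_sub_idem he))ᵐᵒᵖ (Trap A e he) where
  one_smul x := Subtype.ext (trap_right x.2 he)
  mul_smul c d x := Subtype.ext (mul_assoc x.1 d.unop.1 c.unop.1).symm

instance instDistribMulAction :
    DistribMulAction (CornerRing A (1 - e) (one_sub_idem he))ᵐᵒᵖ (Trap A e he) where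
  smul_zero c := Subtype.ext (zero_mul c.unop.1)
  smul_add c x y := Subtype.ext (add_mul x.1 y.1 c.unop.1)

instance instModule :
    Module (CornerRing A (1 - e) (one_sub_idem he))ᵐᵒᵖ (Trap A e he) where
  add_smul c d x := Subtype.ext (mul_add x.1 c.unop.1 d.unop.1)
  zero_smul x := Subtype.ext (mul_zero x.1)

end Trap

end Corner

/-!
Since `(1 - e) A e = 0`, the map `a ↦ (1 - e) a (1 - e)` is a ring map from `A` onto the corner
ring `R` with kernel `eA`, so right `R`-modules are the right `A`-modules annihilated by `e`, and
`T = eA(1 - e)` is an `R`-module. For a right `A`-module `M` we have `M = Me + M(1 - e)`, and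
`M(eA)` meets `M(1 - e)` in `M(eA)(1 - e) = MT`, an `R`-module quotient of a direct sum of copies
of `T`. If all such quotients are injective, `MT` splits off `M(1 - e)` and hence `M(eA)` splits
off `M`. Conversely, embed `Q = T^(ι)/N` in an injective `R`-module `E` and form the pushout `M`
of `A^(ι) ⊇ T^(ι) → E`. Then `E ⊆ M(1 - e)` and `M(eA)(1 - e)` is the image of `Q`, so a
complement of `M(eA)` in `M` cuts out a complement of `Q` in `E`, making `Q` a direct summand of
an injective module.
-/

open Submodule LinearMap

section Injective

universe u v

variable {R : Type u} [Ring R]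

theorem isDirectSummand_iff_exists_isCompl {R M : Type} [Ring R] [AddCommGroup M] [Module R M]
    {N : Submodule R M} : IsDirectSummand N ↔ ∃ K, IsCompl N K := by
  simp only [IsDirectSummand, isCompl_iff, disjoint_iff, codisjoint_iff]

variable {Q P : Type v} [AddCommGroup Q] [Module R Q] [AddCommGroup P] [Module R P]

theorem LinearMap.exists_isCompl_range_of_injective [Module.Injective R Q]
    (j : Q →ₗ[R] P) (hj : Function.Injective j) : ∃ K, IsCompl (range j) K := by
  obtain ⟨r, hr⟩ := Module.Injective.out j hj LinearMap.id
  refine ⟨ker (LinearEquiv.ofInjective j hj ∘ₗ r), isCompl_of_proj ?_⟩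
  rintro ⟨_, q, rfl⟩
  ext
  simp [hr]

theorem Module.Injective.of_isCompl_range [Module.Injective R P] (j : Q →ₗ[R] P)
    (hj : Function.Injective j) {K : Submodule R P} (h : IsCompl (range j) K) :
    Module.Injective R Q where
  out X Y _ _ _ _ f hf g := by
    obtain ⟨g', hg'⟩ := Module.Injective.out f hf (j ∘ₗ g)
    refine ⟨(LinearEquiv.ofInjective j hj).symm ∘ₗ (range j).projectionOnto K h ∘ₗ g', fun x => ?_⟩
    simp only [coe_comp, LinearEquiv.coe_coe, Function.comp_apply, hg',
      projectionOnto_apply_left h ⟨j (g x), mem_range_self j _⟩]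
    exact (LinearEquiv.ofInjective j hj).symm_apply_apply (g x)

theorem Module.exists_injective_embedding [Small.{v} R] (Q : Type v) [AddCommGroup Q] [Module R Q] :
    ∃ (E : Type v) (_ : AddCommGroup E) (_ : Module R E) (_ : Module.Injective R E)
      (j : Q →ₗ[R] E), Function.Injective j := by
  let ι := CategoryTheory.Injective.ι (ModuleCat.of R Q)
  exact ⟨_, _, _, Module.injective_module_of_injective_object R _
    (inj := CategoryTheory.Injective.injective_under _),
    ι.hom, (ModuleCat.mono_iff_injective ι).mp inferInstance⟩

end Injective

section Idempotent

variable {A : Type*} [Ring A]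

theorem mul_mul_mul_of_idempotent {p q : A} (hp : p * p = p) (hq : q * q = q) (x : A) :
    p * (p * x * q) * q = p * x * q := by
  rw [← mul_assoc, ← mul_assoc, hp, mul_assoc _ q q, hq]

variable {e : A} (htwo : ∀ a : A, (1 - e) * a * e = 0)

include htwo in
theorem mul_mul_self_of_one_sub (x : A) : e * x * e = x * e := by
  have := htwo x
  rwa [sub_mul, one_mul, sub_mul, sub_eq_zero, eq_comm] at this

include htwo in
theorem one_sub_mul_mul_one_sub (x : A) : (1 - e) * x * (1 - e) = (1 - e) * x := by
  rw [mul_sub, mul_one, htwo, sub_zero]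

include htwo in
theorem one_sub_mul_mul_mul_one_sub (x y : A) :
    (1 - e) * (x * y) * (1 - e) = (1 - e) * x * (1 - e) * ((1 - e) * y * (1 - e)) := by
  rw [one_sub_mul_mul_one_sub htwo x, one_sub_mul_mul_one_sub htwo y, ← mul_assoc ((1 - e) * x),
    one_sub_mul_mul_one_sub htwo x, one_sub_mul_mul_one_sub htwo, mul_assoc]

end Idempotent

section Pushout

variable {R X Y E : Type*} [Ring R] [AddCommGroup X] [Module R X] [AddCommGroup Y] [Module R Y]
  [AddCommGroup E] [Module R E] (χ : Y →ₗ[R] X) (μ : Y →ₗ[R] E)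

abbrev Pushout := (X × E) ⧸ range (χ.prod (-μ))

namespace Pushout

def inl : X →ₗ[R] Pushout χ μ := (range (χ.prod (-μ))).mkQ ∘ₗ LinearMap.inl R X E

def inr : E →ₗ[R] Pushout χ μ := (range (χ.prod (-μ))).mkQ ∘ₗ LinearMap.inr R X E

theorem inl_apply_eq_inr_apply (y : Y) : inl χ μ (χ y) = inr χ μ (μ y) :=
  (Submodule.Quotient.eq _).2 ⟨y, by simp⟩

theorem inr_injective (hχ : Function.Injective χ) : Function.Injective (inr χ μ) := by
  refine (injective_iff_map_eq_zero _).2 fun u hu => ?_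
  obtain ⟨y, hy⟩ := (Submodule.Quotient.mk_eq_zero _).1 hu
  obtain rfl : y = 0 := hχ (by simpa using congrArg Prod.fst hy)
  simpa using (congrArg Prod.snd hy).symm

end Pushout

end Pushout

section SpanMulIdeal

variable {A : Type*} [Ring A] (e : A)

def spanMulIdeal (M : Type*) [AddCommGroup M] [Module Aᵐᵒᵖ M] : Submodule Aᵐᵒᵖ M :=
  span Aᵐᵒᵖ {x : M | ∃ (m : M) (a : A), x = op (e * a) • m}

variable {e} {M N : Type*} [AddCommGroup M] [Module Aᵐᵒᵖ M] [AddCommGroup N] [Module Aᵐᵒᵖ N]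

theorem op_mul_smul_mem_spanMulIdeal (m : M) (a : A) : op (e * a) • m ∈ spanMulIdeal e M :=
  subset_span ⟨m, a, rfl⟩

theorem map_spanMulIdeal_le (φ : M →ₗ[Aᵐᵒᵖ] N) :
    (spanMulIdeal e M).map φ ≤ spanMulIdeal e N := by
  refine (Submodule.map_span_le _ _ _).2 ?_
  rintro _ ⟨m, a, rfl⟩
  rw [map_smul]
  exact op_mul_smul_mem_spanMulIdeal _ _

theorem Pushout.spanMulIdeal_le {X Y : Type*} [AddCommGroup X] [Module Aᵐᵒᵖ X] [AddCommGroup Y]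
    [Module Aᵐᵒᵖ Y] (χ : Y →ₗ[Aᵐᵒᵖ] X) (μ : Y →ₗ[Aᵐᵒᵖ] N) (hN : ∀ u : N, op e • u = 0) :
    spanMulIdeal e (Pushout χ μ) ≤ (spanMulIdeal e X).map (Pushout.inl χ μ) := by
  refine span_le.2 ?_
  rintro _ ⟨z, a, rfl⟩
  obtain ⟨⟨x, u⟩, rfl⟩ := mkQ_surjective _ z
  have hu : op (e * a) • u = 0 := by rw [← op_smul_op_smul, hN, smul_zero]
  refine ⟨op (e * a) • x, op_mul_smul_mem_spanMulIdeal x a, ?_⟩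
  change _ = op (e * a) • (range _).mkQ (x, u)
  rw [← LinearMap.map_smul, Prod.smul_mk, hu]
  rfl

theorem mul_apply_of_mem_spanMulIdeal (htwo : ∀ a : A, (1 - e) * a * e = 0) {ι : Type*}
    {y : ι →₀ A} (hy : y ∈ spanMulIdeal e (ι →₀ A)) (i : ι) : e * y i = y i := by
  induction hy using span_induction with
  | mem _ h =>
    obtain ⟨m, a, rfl⟩ := h
    simp only [Finsupp.smul_apply, op_smul_eq_mul, ← mul_assoc, mul_mul_self_of_one_sub htwo]
  | zero => simp
  | add y z _ _ hy hz => simp [mul_add, hy, hz]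
  | smul a y _ hy => simp [← mul_assoc, hy]

end SpanMulIdeal

section Corner

variable {A : Type} [Ring A]

def CornerRing.compress {f : A} (hf : f * f = f) (x : A) : CornerRing A f hf :=
  ⟨f * x * f, mul_mul_mul_of_idempotent hf hf x⟩

def Trap.compress {e : A} (he : e * e = e) (x : A) : Trap A e he :=
  ⟨e * x * (1 - e), mul_mul_mul_of_idempotent he (one_sub_idem he) x⟩

variable {e : A} (he : e * e = e) (htwo : ∀ a : A, (1 - e) * a * e = 0)

local notation "𝓒" => (CornerRing A (1 - e) (one_sub_idem he))ᵐᵒᵖ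
local notation "𝓣" => Trap A e he

def cornerHom : Aᵐᵒᵖ →+* 𝓒 where
  toFun a := op (CornerRing.compress (one_sub_idem he) a.unop)
  map_one' := congrArg op <| Subtype.ext <| by
    change (1 - e) * 1 * (1 - e) = 1 - e
    rw [mul_one, one_sub_idem he]
  map_mul' a b := congrArg op <| Subtype.ext <| one_sub_mul_mul_mul_one_sub htwo b.unop a.unop
  map_zero' := congrArg op <| Subtype.ext <| by
    change (1 - e) * 0 * (1 - e) = 0
    rw [mul_zero, zero_mul]
  map_add' a b := congrArg op <| Subtype.ext <| by
    change (1 - e) * (a.unop + b.unop) * (1 - e) =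
      (1 - e) * a.unop * (1 - e) + (1 - e) * b.unop * (1 - e)
    rw [mul_add, add_mul]

theorem cornerHom_op_val (c : 𝓒) : cornerHom he htwo (op c.unop.1) = c :=
  unop_injective <| Subtype.ext c.unop.2

theorem cornerHom_op_self : cornerHom he htwo (op e) = 0 :=
  unop_injective <| Subtype.ext <| by
    change (1 - e) * e * (1 - e) = 0
    rw [IsIdempotentElem.one_sub_mul_self (a := e) he, zero_mul]

section OneSubPart

variable {M : Type} [AddCommGroup M] [Module Aᵐᵒᵖ M]

variable (M) in
include htwo in
def oneSubPart : Submodule Aᵐᵒᵖ M where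
  carrier := {m | op (1 - e) • m = m}
  add_mem' {m n} hm hn := (smul_add _ m n).trans (congrArg₂ (· + ·) hm hn)
  zero_mem' := smul_zero _
  smul_mem' a m hm := by
    change op (1 - e) • m = m at hm
    change op (1 - e) • a • m = a • m
    rw [← op_unop a, ← hm, op_smul_op_smul, op_smul_op_smul, op_smul_op_smul, ← mul_assoc,
      one_sub_mul_mul_one_sub htwo]

theorem op_one_sub_smul_coe (p : oneSubPart htwo M) : op (1 - e) • (p : M) = p := p.2

instance {hf : (1 - e) * (1 - e) = 1 - e} : SMul (CornerRing A (1 - e) hf)ᵐᵒᵖ (oneSubPart htwo M) :=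
  ⟨fun c p => ⟨op c.unop.1 • (p : M), by
    change op (1 - e) • op c.unop.1 • (p : M) = _
    rw [op_smul_op_smul, absorb_right hf c.unop.2]⟩⟩

theorem coe_cornerRing_smul {hf : (1 - e) * (1 - e) = 1 - e} (c : (CornerRing A (1 - e) hf)ᵐᵒᵖ)
    (p : oneSubPart htwo M) : ((c • p : oneSubPart htwo M) : M) = op c.unop.1 • (p : M) := rfl

instance {hf : (1 - e) * (1 - e) = 1 - e} :
    Module (CornerRing A (1 - e) hf)ᵐᵒᵖ (oneSubPart htwo M) where
  one_smul p := Subtype.ext (op_one_sub_smul_coe htwo p)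
  mul_smul c d p := Subtype.ext (op_smul_op_smul (p : M) d.unop.1 c.unop.1).symm
  smul_zero _ := Subtype.ext (smul_zero _)
  smul_add _ p q := Subtype.ext (smul_add _ (p : M) q)
  add_smul c d p := Subtype.ext (add_smul (op c.unop.1) (op d.unop.1) (p : M))
  zero_smul p := Subtype.ext (zero_smul _ (p : M))

theorem coe_cornerHom_smul (a : Aᵐᵒᵖ) (p : oneSubPart htwo M) :
    ((cornerHom he htwo a • p : oneSubPart htwo M) : M) = a • (p : M) := by
  rw [coe_cornerRing_smul, ← op_one_sub_smul_coe htwo p, op_smul_op_smul, ← op_unop a,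
    op_smul_op_smul]
  change op ((1 - e) * ((1 - e) * a.unop * (1 - e))) • (p : M) = _
  rw [← mul_assoc, ← mul_assoc, one_sub_idem he, one_sub_mul_mul_one_sub htwo]

def toOneSubPart : M →+ oneSubPart htwo M where
  toFun m := ⟨op (1 - e) • m, by
    change op (1 - e) • op (1 - e) • m = _
    rw [op_smul_op_smul, one_sub_idem he]⟩
  map_zero' := Subtype.ext (smul_zero _)
  map_add' m n := Subtype.ext (smul_add _ m n)

theorem coe_toOneSubPart (m : M) : (toOneSubPart he htwo m : M) = op (1 - e) • m := rfl

def liftOneSubPart (K : Submodule 𝓒 (oneSubPart htwo M)) : Submodule Aᵐᵒᵖ M where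
  carrier := (↑) '' (K : Set (oneSubPart htwo M))
  add_mem' := by
    rintro _ _ ⟨p, hp, rfl⟩ ⟨q, hq, rfl⟩
    exact ⟨p + q, K.add_mem hp hq, rfl⟩
  zero_mem' := ⟨0, K.zero_mem, rfl⟩
  smul_mem' := by
    rintro a _ ⟨p, hp, rfl⟩
    exact ⟨_, K.smul_mem (cornerHom he htwo a) hp, coe_cornerHom_smul he htwo a p⟩

theorem isDirectSummand_spanMulIdeal_of_isCompl {X K : Submodule 𝓒 (oneSubPart htwo M)}
    (hXS : ∀ x ∈ X, (x : M) ∈ spanMulIdeal e M)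
    (hSX : ∀ s ∈ spanMulIdeal e M, toOneSubPart he htwo s ∈ X) (hXK : IsCompl X K) :
    IsDirectSummand (spanMulIdeal e M) := by
  refine isDirectSummand_iff_exists_isCompl.2 ⟨liftOneSubPart he htwo K, ?_, ?_⟩
  · rw [disjoint_def]
    rintro _ hs ⟨p, hp, rfl⟩
    have hpX : p ∈ X := by
      simpa only [show toOneSubPart he htwo (p : M) = p from Subtype.ext p.2] using hSX _ hs
    simp [disjoint_def.1 hXK.disjoint p hpX hp]
  · rw [codisjoint_iff, eq_top_iff]
    intro m _
    obtain ⟨x, hx, k, hk, hxk⟩ :=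
      mem_sup.1 (hXK.sup_eq_top ▸ mem_top : toOneSubPart he htwo m ∈ X ⊔ K)
    have hm : m = (op (e * 1) • m + x) + k := by
      rw [add_assoc, ← coe_add, hxk, coe_toOneSubPart, ← add_smul, ← op_add, mul_one,
        add_sub_cancel, op_one, one_smul]
    rw [hm]
    exact add_mem_sup (add_mem (op_mul_smul_mem_spanMulIdeal m 1) (hXS x hx)) ⟨k, hk, rfl⟩

end OneSubPart

section InjectiveToSummand

variable {M : Type} [AddCommGroup M] [Module Aᵐᵒᵖ M]

def mulTrap (m : M) : 𝓣 →ₗ[𝓒] oneSubPart htwo M where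
  toFun t := ⟨op t.1 • m, by
    change op (1 - e) • op t.1 • m = _
    rw [op_smul_op_smul, Trap.trap_right t.2 he]⟩
  map_add' t s := Subtype.ext (add_smul (op t.1) (op s.1) m)
  map_smul' c t := Subtype.ext (op_smul_op_smul m t.1 c.unop.1).symm

noncomputable def mulTrapSum : (M →₀ 𝓣) →ₗ[𝓒] oneSubPart htwo M :=
  Finsupp.lsum ℕ (mulTrap he htwo)

theorem coe_mulTrapSum_single (m : M) (t : 𝓣) :
    (mulTrapSum he htwo (Finsupp.single m t) : M) = op t.1 • m := by
  rw [mulTrapSum, Finsupp.lsum_single]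
  rfl

theorem coe_mulTrapSum_mem_spanMulIdeal (g : M →₀ 𝓣) :
    (mulTrapSum he htwo g : M) ∈ spanMulIdeal e M := by
  induction g using Finsupp.induction_linear with
  | zero => simp
  | add g g' hg hg' => simpa using add_mem hg hg'
  | single m t =>
    rw [coe_mulTrapSum_single, ← Trap.trap_left t.2 he]
    exact op_mul_smul_mem_spanMulIdeal m t.1

theorem toOneSubPart_mem_range_mulTrapSum {s : M} (hs : s ∈ spanMulIdeal e M) :
    toOneSubPart he htwo s ∈ range (mulTrapSum he htwo) := by
  induction hs using span_induction with
  | mem _ h =>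
    obtain ⟨m, a, rfl⟩ := h
    refine ⟨Finsupp.single m (Trap.compress he a), Subtype.ext ?_⟩
    rw [coe_mulTrapSum_single, coe_toOneSubPart, op_smul_op_smul]
    rfl
  | zero => simp
  | add x y _ _ hx hy => simpa using add_mem hx hy
  | smul a x _ hx =>
    -- `x a (1 - e) = x (e a (1 - e)) + x (1 - e) · (1 - e) a (1 - e)`
    have hsplit : toOneSubPart he htwo (a • x) =
        mulTrapSum he htwo (Finsupp.single x (Trap.compress he a.unop)) +
          cornerHom he htwo a • toOneSubPart he htwo x := by
      refine Subtype.ext ?_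
      rw [coe_add, coe_mulTrapSum_single, coe_cornerHom_smul, coe_toOneSubPart,
        coe_toOneSubPart, ← op_unop a, op_smul_op_smul, op_smul_op_smul, ← add_smul,
        ← op_add]
      congr 2
      change a.unop * (1 - e) = e * a.unop * (1 - e) + (1 - e) * a.unop
      rw [mul_sub, mul_sub, ← mul_mul_self_of_one_sub htwo a.unop]
      noncomm_ring
    rw [hsplit]
    exact add_mem (mem_range_self _ _) (smul_mem _ _ hx)

include htwo in
theorem isDirectSummand_spanMulIdeal_of_injective
    (hT : ∀ N : Submodule 𝓒 (M →₀ 𝓣), Module.Injective 𝓒 ((M →₀ 𝓣) ⧸ N)) :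
    IsDirectSummand (spanMulIdeal e M) := by
  let ψ := mulTrapSum he htwo (M := M)
  have := hT (ker ψ)
  obtain ⟨K, hK⟩ := ((ker ψ).liftQ ψ le_rfl).exists_isCompl_range_of_injective
    (ker_eq_bot.1 (ker_liftQ_eq_bot _ _ _ le_rfl))
  rw [range_liftQ] at hK
  exact isDirectSummand_spanMulIdeal_of_isCompl he htwo
    (by rintro _ ⟨g, rfl⟩; exact coe_mulTrapSum_mem_spanMulIdeal he htwo g)
    (fun _ => toOneSubPart_mem_range_mulTrapSum he htwo) hK

end InjectiveToSummand

section SummandToInjective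

theorem exists_isCompl_of_isDirectSummand_spanMulIdeal {M E : Type} [AddCommGroup M]
    [Module Aᵐᵒᵖ M] [AddCommGroup E] [Module 𝓒 E] [Module Aᵐᵒᵖ E]
    (hE : ∀ (a : Aᵐᵒᵖ) (u : E), a • u = cornerHom he htwo a • u)
    (hS : IsDirectSummand (spanMulIdeal e M)) {ε : E →ₗ[Aᵐᵒᵖ] M} (hε : Function.Injective ε)
    {X : Submodule 𝓒 E} (hXS : ∀ x ∈ X, ε x ∈ spanMulIdeal e M)
    (hSX : ∀ s ∈ spanMulIdeal e M, ∃ x ∈ X, ε x = op (1 - e) • s) :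
    ∃ K : Submodule 𝓒 E, IsCompl X K := by
  obtain ⟨K, hK⟩ := isDirectSummand_iff_exists_isCompl.1 hS
  have hε_smul (c : 𝓒) (u : E) : ε (c • u) = op c.unop.1 • ε u := by
    rw [← map_smul, hE, cornerHom_op_val]
  let K' : Submodule 𝓒 E :=
    { carrier := {u | ε u ∈ K}
      add_mem' {u v} hu hv := by simpa using K.add_mem hu hv
      zero_mem' := by simp
      smul_mem' c u hu := by simpa [hε_smul] using K.smul_mem _ hu }
  refine ⟨K', disjoint_def.2 fun u hu hu' => hε ?_, codisjoint_iff.2 (eq_top_iff.2 fun u _ => ?_)⟩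
  · simpa using disjoint_def.1 hK.disjoint _ (hXS u hu) hu'
  obtain ⟨s, hs, k, hk, hsk⟩ := mem_sup.1 (hK.sup_eq_top ▸ mem_top : ε u ∈ spanMulIdeal e M ⊔ K)
  obtain ⟨x, hx, hxs⟩ := hSX s hs
  have hεu : op (1 - e) • ε u = ε u := (hε_smul 1 u).symm.trans (congrArg ε (one_smul _ u))
  have hu : ε (u - x) = op (1 - e) • k := by
    rw [map_sub, hxs, ← hεu, ← hsk, smul_add, add_sub_cancel_left]
  have hk' : u - x ∈ K' := by
    change ε (u - x) ∈ K
    rw [hu]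
    exact K.smul_mem _ hk
  simpa using add_mem_sup hx hk'

variable {ι : Type}

noncomputable def trapVal : (ι →₀ 𝓣) →+ (ι →₀ A) :=
  Finsupp.mapRange.addMonoidHom
    { toFun := Subtype.val, map_zero' := rfl, map_add' := fun _ _ => rfl }

theorem trapVal_injective : Function.Injective (trapVal he (ι := ι)) :=
  fun _ _ h => Finsupp.ext fun i => Subtype.ext (DFunLike.congr_fun h i)

theorem trapVal_cornerHom_smul (a : Aᵐᵒᵖ) (g : ι →₀ 𝓣) :
    trapVal he (cornerHom he htwo a • g) = a • trapVal he g := by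
  ext i
  change (g i).1 * ((1 - e) * a.unop * (1 - e)) = (g i).1 * a.unop
  rw [one_sub_mul_mul_one_sub htwo, ← mul_assoc, Trap.trap_right (g i).2 he]

theorem trapVal_mem_spanMulIdeal (g : ι →₀ 𝓣) : trapVal he g ∈ spanMulIdeal e (ι →₀ A) := by
  induction g using Finsupp.induction_linear with
  | zero => simp
  | add g g' hg hg' => simpa using add_mem hg hg'
  | single i t =>
    have : trapVal he (Finsupp.single i t) = op (e * t.1) • Finsupp.single i 1 := by
      rw [Finsupp.smul_single, op_smul_eq_mul, one_mul, Trap.trap_left t.2 he]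
      exact Finsupp.mapRange_single (hf := rfl)
    rw [this]
    exact op_mul_smul_mem_spanMulIdeal _ _

noncomputable def trapPart (y : ι →₀ A) : ι →₀ 𝓣 :=
  Finsupp.mapRange (Trap.compress he) (Subtype.ext (by simp [Trap.compress]; rfl)) y

include htwo in
theorem trapVal_trapPart {y : ι →₀ A} (hy : y ∈ spanMulIdeal e (ι →₀ A)) :
    trapVal he (trapPart he y) = op (1 - e) • y := by
  ext i
  change e * y i * (1 - e) = y i * (1 - e)
  rw [mul_apply_of_mem_spanMulIdeal htwo hy]

include htwo in
theorem exists_isCompl_range_of_forall_isDirectSummand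
    (hS : ∀ (M : Type) [AddCommGroup M] [Module Aᵐᵒᵖ M], IsDirectSummand (spanMulIdeal e M))
    {E : Type} [AddCommGroup E] [Module 𝓒 E] (φ : (ι →₀ 𝓣) →ₗ[𝓒] E) :
    ∃ K : Submodule 𝓒 E, IsCompl (range φ) K := by
  let _ : Module Aᵐᵒᵖ E := Module.compHom E (cornerHom he htwo)
  let _ : Module Aᵐᵒᵖ (ι →₀ 𝓣) := Module.compHom _ (cornerHom he htwo)
  let χ : (ι →₀ 𝓣) →ₗ[Aᵐᵒᵖ] (ι →₀ A) :=
    { trapVal he with map_smul' := trapVal_cornerHom_smul he htwo }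
  let μ : (ι →₀ 𝓣) →ₗ[Aᵐᵒᵖ] E :=
    { φ with map_smul' := fun a => φ.map_smul (cornerHom he htwo a) }
  have hE (u : E) : op e • u = 0 := by
    change cornerHom he htwo (op e) • u = 0
    rw [cornerHom_op_self, zero_smul]
  refine exists_isCompl_of_isDirectSummand_spanMulIdeal he htwo (fun _ _ => rfl)
    (hS (Pushout χ μ)) (Pushout.inr_injective χ μ (trapVal_injective he)) ?_ ?_
  · rintro _ ⟨g, rfl⟩
    change Pushout.inr χ μ (μ g) ∈ _
    rw [← Pushout.inl_apply_eq_inr_apply]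
    exact map_spanMulIdeal_le _ ⟨χ g, trapVal_mem_spanMulIdeal he g, rfl⟩
  · intro s hs
    obtain ⟨y, hy, rfl⟩ := Pushout.spanMulIdeal_le χ μ hE hs
    refine ⟨φ (trapPart he y), mem_range_self _ _, ?_⟩
    change Pushout.inr χ μ (μ (trapPart he y)) = _
    rw [← Pushout.inl_apply_eq_inr_apply, ← map_smul]
    exact congrArg _ (trapVal_trapPart he htwo hy)

include htwo in
theorem injective_quotient_of_forall_isDirectSummand
    (hS : ∀ (M : Type) [AddCommGroup M] [Module Aᵐᵒᵖ M], IsDirectSummand (spanMulIdeal e M))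
    (N : Submodule 𝓒 (ι →₀ 𝓣)) : Module.Injective 𝓒 ((ι →₀ 𝓣) ⧸ N) := by
  obtain ⟨E, _, _, _, j, hj⟩ := Module.exists_injective_embedding (R := 𝓒) ((ι →₀ 𝓣) ⧸ N)
  obtain ⟨K, hK⟩ := exists_isCompl_range_of_forall_isDirectSummand he htwo hS (j ∘ₗ N.mkQ)
  rw [range_comp, range_mkQ, Submodule.map_top] at hK
  exact Module.Injective.of_isCompl_range j hj hK

end SummandToInjective

end Corner

/-- let `e` be an idempotent of `A` such that `eA` is a two-sided ideal
(equivalently `(1-e)Ae = 0`).  Then `M·(eA)` is a direct summand of every right `A`-module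
`M` if and only if `eA(1-e)` is hereditary `Σ`-injective as a right module over the corner
ring `(1-e)A(1-e)`, i.e. every quotient of every direct sum of copies of `eA(1-e)` is an
injective `(1-e)A(1-e)`-module. -/
theorem stmt_4 (A : Type) [Ring A] (e : A) (he : e * e = e)
    (htwo : ∀ a : A, (1 - e) * a * e = 0) :
    (∀ (M : Type) [AddCommGroup M] [Module Aᵐᵒᵖ M],
        IsDirectSummand (Submodule.span Aᵐᵒᵖ {x : M | ∃ (m : M) (a : A), x = op (e * a) • m}))
    ↔
    (∀ (ι : Type) (N : Submodule (CornerRing A (1 - e) (one_sub_idem he))ᵐᵒᵖ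
        (ι →₀ Trap A e he)),
      Module.Injective (CornerRing A (1 - e) (one_sub_idem he))ᵐᵒᵖ
        ((ι →₀ Trap A e he) ⧸ N)) :=
  ⟨fun h _ => injective_quotient_of_forall_isDirectSummand he htwo h,
    fun h M _ _ => isDirectSummand_spanMulIdeal_of_injective he htwo (h M)⟩
end

section
/- Let A be a ring and I a two-sided idempotent ideal of A. Then the class C = {M : M is a right A-module with MI = M} is closed under submodules if and only if A/I is flat as a left A-module (equivalently, I is pure as a left ideal of A). -/
open MulOpposite TensorProduct

section PureTensor

variable (A : Type) [Ring A]

/-- The subgroup of relations of `M ⊗[ℤ] N` whose quotient is the balanced tensor product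
`M ⊗[A] N` of a right `A`-module `M` and a left `A`-module `N`. -/
noncomputable def balancedRel (M N : Type) [AddCommGroup M] [Module Aᵐᵒᵖ M]
    [AddCommGroup N] [Module A N] : AddSubgroup (M ⊗[ℤ] N) :=
  AddSubgroup.closure
    {x : M ⊗[ℤ] N | ∃ (m : M) (a : A) (n : N), x = (op a • m) ⊗ₜ[ℤ] n - m ⊗ₜ[ℤ] (a • n)}

/-- The balanced tensor product `M ⊗[A] N` over the (possibly noncommutative) ring `A`. -/
noncomputable def RTensor (M N : Type) [AddCommGroup M] [Module Aᵐᵒᵖ M]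
    [AddCommGroup N] [Module A N] : Type :=
  (M ⊗[ℤ] N) ⧸ balancedRel A M N

noncomputable instance (M N : Type) [AddCommGroup M] [Module Aᵐᵒᵖ M] [AddCommGroup N] [Module A N] :
    AddCommGroup (RTensor A M N) :=
  inferInstanceAs (AddCommGroup ((M ⊗[ℤ] N) ⧸ balancedRel A M N))

/-- The canonical morphism `M ⊗[A] I ⟶ M ⊗[A] A` induced by the inclusion `I → A`
of a left ideal `I`, for a right `A`-module `M`. -/
noncomputable def pureMap (I : Ideal A) (M : Type) [AddCommGroup M] [Module Aᵐᵒᵖ M] :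
    RTensor A M I →+ RTensor A M A :=
  QuotientAddGroup.map (balancedRel A M I) (balancedRel A M A)
    (LinearMap.lTensor M (I.subtype.toAddMonoidHom.toIntLinearMap)).toAddMonoidHom
    (by
      rw [balancedRel, AddSubgroup.closure_le]
      rintro x ⟨m, a, n, rfl⟩
      simp only [AddSubgroup.coe_comap, Set.mem_preimage, LinearMap.toAddMonoidHom_coe,
        map_sub, LinearMap.lTensor_tmul, AddMonoidHom.coe_toIntLinearMap,
        LinearMap.toAddMonoidHom_coe, Submodule.coe_subtype, SetLike.mem_coe]
      exact AddSubgroup.subset_closure ⟨m, a, (n : A), by rw [Submodule.coe_smul]⟩)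

end PureTensor

section Aux

variable (A : Type) [Ring A]
variable (M : Type) [AddCommGroup M] [Module Aᵐᵒᵖ M]
variable (N : Type) [AddCommGroup N] [Module A N]

noncomputable def rmk : M ⊗[ℤ] N →+ RTensor A M N := QuotientAddGroup.mk' (balancedRel A M N)

lemma rmk_surj : Function.Surjective (rmk A M N) :=
  fun x => QuotientAddGroup.induction_on x fun t => ⟨t, rfl⟩

lemma rmk_eq_of_sub_mem {x y : M ⊗[ℤ] N} (h : x - y ∈ balancedRel A M N) :
    rmk A M N x = rmk A M N y := by
  refine (QuotientAddGroup.eq (s := balancedRel A M N)).mpr ?_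
  simpa [neg_sub, sub_eq_neg_add] using neg_mem h

lemma rmk_rel (m : M) (a : A) (n : N) :
    rmk A M N ((op a • m) ⊗ₜ[ℤ] n) = rmk A M N (m ⊗ₜ[ℤ] (a • n)) :=
  rmk_eq_of_sub_mem A M N (AddSubgroup.subset_closure ⟨m, a, n, rfl⟩)

lemma rmk_eq_zero_iff (x : M ⊗[ℤ] N) : rmk A M N x = 0 ↔ x ∈ balancedRel A M N :=
  QuotientAddGroup.eq_zero_iff x

/-- pointwise extensionality for additive maps out of `RTensor`. -/
lemma rt_ext {β : Type*} [AddCommGroup β] (f g : RTensor A M N →+ β)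
    (h : ∀ (m : M) (n : N), f (rmk A M N (m ⊗ₜ n)) = g (rmk A M N (m ⊗ₜ n))) :
    ∀ x, f x = g x := by
  have key : ∀ t, f (rmk A M N t) = g (rmk A M N t) := by
    intro t
    induction t using TensorProduct.induction_on with
    | zero => simp
    | tmul m n => exact h m n
    | add x y hx hy => simp only [map_add, hx, hy]
  intro x; obtain ⟨t, rfl⟩ := rmk_surj A M N x; exact key t

/-- the map `m ⊗ n ↦ m ·(f n)` for an `A`-linear `f : N → A`. -/
noncomputable def phi (f : N →ₗ[A] A) : M ⊗[ℤ] N →ₗ[ℤ] M :=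
  TensorProduct.lift
    { toFun := fun m =>
        { toFun := fun n => op (f n) • m
          map_add' := fun n n' => by
            show op (f (n + n')) • m = op (f n) • m + op (f n') • m
            rw [map_add, op_add, add_smul]
          map_smul' := fun z n => by
            show op (f (z • n)) • m = z • op (f n) • m
            rw [map_zsmul f z n, op_smul, smul_assoc] }
      map_add' := fun m m' => LinearMap.ext fun n => smul_add _ _ _
      map_smul' := fun z m => LinearMap.ext fun n => by
        simp only [RingHom.id_apply, LinearMap.coe_mk, AddHom.coe_mk]
        exact map_zsmul (DistribMulAction.toAddMonoidHom M (op (f n))) z m }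

lemma phi_tmul (f : N →ₗ[A] A) (m : M) (n : N) : phi A M N f (m ⊗ₜ n) = op (f n) • m := rfl

end Aux
section Aux2

variable (A : Type) [Ring A]
variable (M : Type) [AddCommGroup M] [Module Aᵐᵒᵖ M]

/-- The multiplication map `RTensor A M A →+ M`. -/
noncomputable def mulQ : RTensor A M A →+ M :=
  QuotientAddGroup.lift (balancedRel A M A) (phi A M A (LinearMap.id)).toAddMonoidHom
    (by
      rw [balancedRel, AddSubgroup.closure_le]
      rintro x ⟨m, a, n, rfl⟩
      simp only [SetLike.mem_coe, AddMonoidHom.mem_ker, LinearMap.toAddMonoidHom_coe, map_sub]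
      rw [phi_tmul, phi_tmul]
      simp only [LinearMap.id_coe, id_eq, smul_eq_mul]
      rw [← mul_smul, ← op_mul]
      exact sub_self _)

lemma mulQ_rmk (t : M ⊗[ℤ] A) : mulQ A M (rmk A M A t) = phi A M A LinearMap.id t := rfl

/-- Section of `mulQ`. -/
noncomputable def secQ : M →+ RTensor A M A :=
  (rmk A M A).comp (((TensorProduct.mk ℤ M A).flip 1).toAddMonoidHom)

lemma secQ_mulQ : ∀ x : RTensor A M A, secQ A M (mulQ A M x) = x := by
  refine rt_ext A M A ((secQ A M).comp (mulQ A M)) (AddMonoidHom.id _) ?_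
  intro m a
  show secQ A M (op a • m) = rmk A M A (m ⊗ₜ a)
  show rmk A M A ((op a • m) ⊗ₜ (1 : A)) = rmk A M A (m ⊗ₜ a)
  rw [rmk_rel A M A m a 1, smul_eq_mul, mul_one]

lemma mulQ_injective : Function.Injective (mulQ A M) :=
  Function.LeftInverse.injective (secQ_mulQ A M)

lemma pureMap_rmk (I : Ideal A) (t : M ⊗[ℤ] ↥I) :
    pureMap A I M (rmk A M ↥I t) =
      rmk A M A (LinearMap.lTensor M (I.subtype.toAddMonoidHom.toIntLinearMap) t) := rfl

end Aux2
section Aux3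

variable (A : Type) [Ring A]
variable (M : Type) [AddCommGroup M] [Module Aᵐᵒᵖ M]
variable (I : Ideal A) (hright : ∀ a ∈ I, ∀ b : A, a * b ∈ I)

/-- Right multiplication by `b` on `I`, as a `ℤ`-linear map. -/
noncomputable def rho (b : A) : ↥I →ₗ[ℤ] ↥I where
  toFun n := ⟨(n : A) * b, hright (n : A) n.2 b⟩
  map_add' n n' := by ext; simp [add_mul]
  map_smul' z n := by ext; simp [smul_mul_assoc, mul_assoc]

lemma rho_coe (b : A) (n : ↥I) : (rho A I hright b n : A) = (n : A) * b := rfl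

/-- Right action of `b : A` on `RTensor A M I`. -/
noncomputable def rAct (b : A) : RTensor A M ↥I →+ RTensor A M ↥I :=
  QuotientAddGroup.map (balancedRel A M ↥I) (balancedRel A M ↥I)
    (LinearMap.lTensor M (rho A I hright b)).toAddMonoidHom
    (by
      rw [balancedRel, AddSubgroup.closure_le]
      rintro x ⟨m, a, n, rfl⟩
      simp only [AddSubgroup.coe_comap, Set.mem_preimage, LinearMap.toAddMonoidHom_coe,
        map_sub, LinearMap.lTensor_tmul, SetLike.mem_coe]
      have : rho A I hright b (a • n) = a • rho A I hright b n := by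
        ext; simp only [rho_coe, SetLike.val_smul, smul_eq_mul, mul_assoc]
      rw [this]
      exact AddSubgroup.subset_closure ⟨m, a, rho A I hright b n, rfl⟩)

lemma rAct_rmk (b : A) (m : M) (n : ↥I) :
    rAct A M I hright b (rmk A M ↥I (m ⊗ₜ n)) = rmk A M ↥I (m ⊗ₜ rho A I hright b n) := rfl

/-- The right `A`-module (i.e. `Aᵐᵒᵖ`-module) structure on `RTensor A M I`. -/
noncomputable def rMod : Module Aᵐᵒᵖ (RTensor A M ↥I) :=
  letI : SMul Aᵐᵒᵖ (RTensor A M ↥I) := ⟨fun x t => rAct A M I hright x.unop t⟩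
  Module.ofMinimalAxioms
    (fun r x y => map_add (rAct A M I hright r.unop) x y)
    (fun r s x => by
      show rAct A M I hright (r.unop + s.unop) x
        = rAct A M I hright r.unop x + rAct A M I hright s.unop x
      refine rt_ext A M ↥I (rAct A M I hright (r.unop + s.unop))
        (rAct A M I hright r.unop + rAct A M I hright s.unop) ?_ x
      intro m n
      show rmk A M ↥I (m ⊗ₜ rho A I hright _ n)
        = rmk A M ↥I (m ⊗ₜ rho A I hright _ n) + rmk A M ↥I (m ⊗ₜ rho A I hright _ n)
      rw [← map_add, ← TensorProduct.tmul_add]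
      have hr : rho A I hright (r.unop + s.unop) n
          = rho A I hright r.unop n + rho A I hright s.unop n := by
        ext; simp [rho_coe, mul_add]
      rw [hr])
    (fun r s x => by
      show rAct A M I hright (r * s).unop x
        = rAct A M I hright r.unop (rAct A M I hright s.unop x)
      refine rt_ext A M ↥I (rAct A M I hright (r * s).unop)
        ((rAct A M I hright r.unop).comp (rAct A M I hright s.unop)) ?_ x
      intro m n
      show rmk A M ↥I (m ⊗ₜ rho A I hright _ n)
        = rAct A M I hright r.unop (rmk A M ↥I (m ⊗ₜ rho A I hright s.unop n))
      rw [rAct_rmk]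
      have hr : rho A I hright (r * s).unop n
          = rho A I hright r.unop (rho A I hright s.unop n) := by
        ext; simp [rho_coe, unop_mul, mul_assoc]
      rw [hr])
    (fun x => by
      show rAct A M I hright (1 : Aᵐᵒᵖ).unop x = x
      refine rt_ext A M ↥I (rAct A M I hright (1 : Aᵐᵒᵖ).unop) (AddMonoidHom.id _) ?_ x
      intro m n
      show rmk A M ↥I (m ⊗ₜ rho A I hright _ n) = rmk A M ↥I (m ⊗ₜ n)
      have hr : rho A I hright (1 : Aᵐᵒᵖ).unop n = n := by
        ext; simp [rho_coe]
      rw [hr])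

end Aux3
section Aux4

variable (A : Type) [Ring A]
variable (M : Type) [AddCommGroup M] [Module Aᵐᵒᵖ M]
variable (I : Ideal A) (hright : ∀ a ∈ I, ∀ b : A, a * b ∈ I)

/-- Right multiplication by `b` on `A` as a `ℤ`-linear map. -/
noncomputable def rhoA (b : A) : A →ₗ[ℤ] A where
  toFun a := a * b
  map_add' a a' := add_mul a a' b
  map_smul' z a := smul_mul_assoc z a b

/-- Right action of `b : A` on `RTensor A M A`. -/
noncomputable def rActA (b : A) : RTensor A M A →+ RTensor A M A :=
  QuotientAddGroup.map (balancedRel A M A) (balancedRel A M A)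
    (LinearMap.lTensor M (rhoA A b)).toAddMonoidHom
    (by
      rw [balancedRel, AddSubgroup.closure_le]
      rintro x ⟨m, a, n, rfl⟩
      simp only [AddSubgroup.coe_comap, Set.mem_preimage, LinearMap.toAddMonoidHom_coe,
        map_sub, LinearMap.lTensor_tmul, SetLike.mem_coe]
      have : rhoA A b (a • n) = a • rhoA A b n := by
        show a * n * b = a * (n * b); rw [mul_assoc]
      rw [this]
      exact AddSubgroup.subset_closure ⟨m, a, rhoA A b n, rfl⟩)

lemma pureMap_rAct (b : A) :
    ∀ t, pureMap A I M (rAct A M I hright b t) = rActA A M b (pureMap A I M t) :=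
  rt_ext A M ↥I ((pureMap A I M).comp (rAct A M I hright b))
    ((rActA A M b).comp (pureMap A I M))
    (fun m n => rfl)

lemma rAct_eq_mul (a : A) (ha : a ∈ I) :
    ∀ t, rAct A M I hright a t
      = rmk A M ↥I ((mulQ A M (pureMap A I M t)) ⊗ₜ (⟨a, ha⟩ : ↥I)) := by
  refine rt_ext A M ↥I ((rAct A M I hright a))
    (((rmk A M ↥I).comp (((TensorProduct.mk ℤ M ↥I).flip ⟨a, ha⟩).toAddMonoidHom)).comp
      ((mulQ A M).comp (pureMap A I M))) ?_
  intro m n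
  show rmk A M ↥I (m ⊗ₜ rho A I hright a n)
    = rmk A M ↥I ((op (n : A) • m) ⊗ₜ (⟨a, ha⟩ : ↥I))
  rw [rmk_rel A M ↥I m (n : A) ⟨a, ha⟩]
  have hr : rho A I hright a n = (n : A) • (⟨a, ha⟩ : ↥I) := by
    ext; simp [rho_coe]
  rw [hr]

end Aux4
section Aux5

variable (A : Type) [Ring A]
variable (M : Type) [AddCommGroup M] [Module Aᵐᵒᵖ M]
variable (I : Ideal A) (hright : ∀ a ∈ I, ∀ b : A, a * b ∈ I)

lemma phi_lTensor_rho (b : A) :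
    ∀ t, phi A M ↥I I.subtype (LinearMap.lTensor M (rho A I hright b) t)
      = op b • phi A M ↥I I.subtype t := by
  intro t
  induction t using TensorProduct.induction_on with
  | zero => simp
  | tmul m n =>
    rw [LinearMap.lTensor_tmul, phi_tmul, phi_tmul]
    show op ((n : A) * b) • m = op b • op (n : A) • m
    rw [op_mul, mul_smul]
  | add x y hx hy => rw [map_add, map_add, hx, hy, map_add, smul_add]

lemma phi_balanced :
    ∀ s ∈ balancedRel A M ↥I, phi A M ↥I I.subtype s = 0 := by
  intro s hs
  have : balancedRel A M ↥I ≤ (phi A M ↥I I.subtype).toAddMonoidHom.ker := by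
    rw [balancedRel, AddSubgroup.closure_le]
    rintro x ⟨m, a, n, rfl⟩
    simp only [SetLike.mem_coe, AddMonoidHom.mem_ker, LinearMap.toAddMonoidHom_coe, map_sub]
    rw [phi_tmul, phi_tmul]
    show op (n : A) • op a • m - op ((a • n : ↥I) : A) • m = 0
    rw [← mul_smul, ← op_mul]
    have : ((a • n : ↥I) : A) = a * (n : A) := rfl
    rw [this]
    exact sub_self _
  exact this hs

end Aux5

/-- for a two-sided idempotent ideal `I` of `A`, the class
`C = {M right A-module | MI = M}` is closed under submodules if and only if `A/I` is flat
as a left `A`-module, equivalently `I` is pure as a left ideal: the inclusion `I → A`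
stays injective after tensoring over `A` with any right `A`-module.  `MI = M` is expressed
by saying that the `Aᵐᵒᵖ`-span of `{m·a | m ∈ M, a ∈ I}` is all of `M`. -/
theorem stmt_5 (A : Type) [Ring A] (I : Ideal A)
    (hright : ∀ a ∈ I, ∀ b : A, a * b ∈ I)
    (hidem : ∀ a ∈ I, a ∈ AddSubgroup.closure {x : A | ∃ b ∈ I, ∃ c ∈ I, x = b * c}) :
    (∀ (M : Type) [AddCommGroup M] [Module Aᵐᵒᵖ M],
        Submodule.span Aᵐᵒᵖ {x : M | ∃ (m : M) (a : A), a ∈ I ∧ x = op a • m} = ⊤ →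
        ∀ N : Submodule Aᵐᵒᵖ M,
          Submodule.span Aᵐᵒᵖ {x : N | ∃ (n : N) (a : A), a ∈ I ∧ x = op a • n} = ⊤)
    ↔ (∀ (M : Type) [AddCommGroup M] [Module Aᵐᵒᵖ M],
        Function.Injective (pureMap A I M)) := by
  constructor
  · -- closed under submodules → pure
    intro hC M _ _
    letI : Module Aᵐᵒᵖ (RTensor A M ↥I) := rMod A M I hright
    have hsmul : ∀ (b : A) (t : RTensor A M ↥I), (op b) • t = rAct A M I hright b t :=
      fun _ _ => rfl
    -- `(RTensor A M I) · I = RTensor A M I`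
    have hT : Submodule.span Aᵐᵒᵖ
        {x : RTensor A M ↥I | ∃ (t : RTensor A M ↥I) (a : A), a ∈ I ∧ x = op a • t} = ⊤ := by
      rw [Submodule.eq_top_iff']
      intro x
      obtain ⟨t, rfl⟩ := rmk_surj A M ↥I x
      induction t using TensorProduct.induction_on with
      | zero => rw [map_zero]; exact Submodule.zero_mem _
      | add x y hx hy => rw [map_add]; exact Submodule.add_mem _ hx hy
      | tmul m n =>
        obtain ⟨hv, hmem⟩ := AddSubgroup.closure_induction
          (k := {x : A | ∃ b ∈ I, ∃ c ∈ I, x = b * c})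
          (p := fun v _ => ∃ h : v ∈ I, rmk A M ↥I (m ⊗ₜ (⟨v, h⟩ : ↥I)) ∈
            Submodule.span Aᵐᵒᵖ
              {x : RTensor A M ↥I | ∃ (t : RTensor A M ↥I) (a : A), a ∈ I ∧ x = op a • t})
          (by
            rintro x ⟨b, hb, c, hc, rfl⟩
            refine ⟨hright b hb c,
              Submodule.subset_span ⟨rmk A M ↥I (m ⊗ₜ ⟨b, hb⟩), c, hc, ?_⟩⟩
            rw [hsmul, rAct_rmk]
            have : (⟨b * c, hright b hb c⟩ : ↥I) = rho A I hright c ⟨b, hb⟩ :=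
              Subtype.ext rfl
            rw [this])
          (⟨I.zero_mem, by
            have h0 : (⟨(0 : A), I.zero_mem⟩ : ↥I) = 0 := rfl
            rw [h0, TensorProduct.tmul_zero, map_zero]
            exact Submodule.zero_mem _⟩)
          (by
            rintro v w _ _ ⟨hv, hv2⟩ ⟨hw, hw2⟩
            refine ⟨I.add_mem hv hw, ?_⟩
            have hvw : (⟨v + w, I.add_mem hv hw⟩ : ↥I) = ⟨v, hv⟩ + ⟨w, hw⟩ := rfl
            rw [hvw, TensorProduct.tmul_add, map_add]
            exact Submodule.add_mem _ hv2 hw2)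
          (by
            rintro v _ ⟨hv, hv2⟩
            refine ⟨I.neg_mem hv, ?_⟩
            have hnv : (⟨-v, I.neg_mem hv⟩ : ↥I) = -(⟨v, hv⟩ : ↥I) := rfl
            rw [hnv, TensorProduct.tmul_neg, map_neg]
            exact Submodule.neg_mem _ hv2)
          (hidem (n : A) n.2)
        have hn : (⟨((n : A)), hv⟩ : ↥I) = n := Subtype.ext rfl
        rwa [hn] at hmem
    rw [injective_iff_map_eq_zero]
    intro t ht
    let K : Submodule Aᵐᵒᵖ (RTensor A M ↥I) :=
      { carrier := {t | pureMap A I M t = 0}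
        add_mem' := fun {x y} hx hy => by
          show pureMap A I M (x + y) = 0
          rw [map_add, hx, hy, add_zero]
        zero_mem' := map_zero _
        smul_mem' := fun c t htt => by
          show pureMap A I M (c • t) = 0
          have : c • t = rAct A M I hright c.unop t := rfl
          rw [this, pureMap_rAct A M I hright, htt, map_zero] }
    have hK := hC (RTensor A M ↥I) hT K
    have htK : (⟨t, ht⟩ : K) ∈ Submodule.span Aᵐᵒᵖ
        {x : ↥K | ∃ (n : ↥K) (a : A), a ∈ I ∧ x = op a • n} := by
      rw [hK]; trivial
    have hsub : {x : ↥K | ∃ (n : ↥K) (a : A), a ∈ I ∧ x = op a • n} ⊆ {(0 : ↥K)} := by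
      rintro x ⟨k, a, ha, rfl⟩
      have h0 : ((op a • k : ↥K) : RTensor A M ↥I) = rAct A M I hright a (k : RTensor A M ↥I) :=
        rfl
      have h1 : rAct A M I hright a (k : RTensor A M ↥I) = 0 := by
        rw [rAct_eq_mul A M I hright a ha]
        have hk0 : pureMap A I M (k : RTensor A M ↥I) = 0 := k.2
        rw [hk0, map_zero, TensorProduct.zero_tmul, map_zero]
      exact Set.mem_singleton_iff.mpr (Subtype.ext (h0.trans h1))
    have hle : Submodule.span Aᵐᵒᵖ {x : ↥K | ∃ (n : ↥K) (a : A), a ∈ I ∧ x = op a • n}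
        ≤ ⊥ := by
      rw [← Submodule.span_zero_singleton Aᵐᵒᵖ]
      exact Submodule.span_mono hsub
    have : (⟨t, ht⟩ : K) = 0 := by simpa using hle htK
    exact congrArg Subtype.val this
  · -- pure → closed under submodules
    intro hpure M _ _ hM N
    set NI : Submodule Aᵐᵒᵖ M :=
      Submodule.span Aᵐᵒᵖ {y : M | ∃ m ∈ N, ∃ a ∈ I, y = op a • m} with hNIdef
    have main : ∀ v : M, v ∈ N → v ∈ NI := by
      intro v hv
      set Φ := phi A M ↥I I.subtype with hΦ
      -- v is in the range of Φ since MI = M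
      have hrange : ∃ t, Φ t = v := by
        let R' : Submodule Aᵐᵒᵖ M :=
          { carrier := Set.range Φ
            add_mem' := fun {x y} hx hy => by
              obtain ⟨s, rfl⟩ := hx; obtain ⟨u, rfl⟩ := hy
              exact ⟨s + u, map_add _ _ _⟩
            zero_mem' := ⟨0, map_zero _⟩
            smul_mem' := fun c x hx => by
              obtain ⟨s, rfl⟩ := hx
              refine ⟨LinearMap.lTensor M (rho A I hright c.unop) s, ?_⟩
              rw [hΦ, phi_lTensor_rho A M I hright, op_unop] }
        have hspan : Submodule.span Aᵐᵒᵖ {x : M | ∃ (m : M) (a : A), a ∈ I ∧ x = op a • m}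
            ≤ R' := by
          rw [Submodule.span_le]
          rintro x ⟨m, a, ha, rfl⟩
          exact ⟨m ⊗ₜ ⟨a, ha⟩, rfl⟩
        have hv' : v ∈ (⊤ : Submodule Aᵐᵒᵖ M) := trivial
        rw [← hM] at hv'
        exact hspan hv'
      obtain ⟨t, htv⟩ := hrange
      set πz := N.mkQ.toAddMonoidHom.toIntLinearMap with hπz
      set F := LinearMap.rTensor ↥I πz with hF
      -- the image of t in (M/N) ⊗ I dies in (M/N) ⊗ A
      have hcomm : ∀ s : M ⊗[ℤ] ↥I,
          mulQ A (M ⧸ N) (pureMap A I (M ⧸ N) (rmk A (M ⧸ N) ↥I (F s))) = N.mkQ (Φ s) := by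
        intro s
        induction s using TensorProduct.induction_on with
        | zero => simp
        | tmul m n =>
          have h1 : F (m ⊗ₜ n) = (N.mkQ m) ⊗ₜ n := rfl
          rw [h1, pureMap_rmk, LinearMap.lTensor_tmul, mulQ_rmk]
          have h2 : phi A (M ⧸ N) A LinearMap.id
              ((N.mkQ m) ⊗ₜ (I.subtype.toAddMonoidHom.toIntLinearMap n))
                = op ((n : A)) • N.mkQ m := rfl
          rw [h2, hΦ, phi_tmul]
          exact (map_smul N.mkQ (op ((n : A))) m).symm
        | add x y hx hy => simp only [map_add, hx, hy]
      have hPt : rmk A (M ⧸ N) ↥I (F t) = 0 := by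
        apply hpure (M ⧸ N)
        rw [map_zero]
        apply mulQ_injective A (M ⧸ N)
        rw [map_zero, hcomm t, htv]
        simpa using (Submodule.Quotient.mk_eq_zero N).mpr hv
      have hFt : F t ∈ balancedRel A (M ⧸ N) ↥I :=
        (rmk_eq_zero_iff A (M ⧸ N) ↥I (F t)).mp hPt
      -- balancedRel over M/N is image of balancedRel over M
      have hbal : balancedRel A (M ⧸ N) ↥I
          = AddSubgroup.map F.toAddMonoidHom (balancedRel A M ↥I) := by
        have heq : ∀ (m : M) (a : A) (n : ↥I),
            F ((op a • m) ⊗ₜ[ℤ] n - m ⊗ₜ[ℤ] (a • n))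
              = (op a • N.mkQ m) ⊗ₜ[ℤ] n - (N.mkQ m) ⊗ₜ[ℤ] (a • n) := by
          intro m a n
          rw [map_sub, hF, LinearMap.rTensor_tmul, LinearMap.rTensor_tmul]
          rw [show πz (op a • m) = op a • N.mkQ m from map_smul N.mkQ (op a) m]
          rfl
        rw [balancedRel, balancedRel, AddMonoidHom.map_closure]
        congr 1
        ext x
        constructor
        · rintro ⟨q, a, n, rfl⟩
          obtain ⟨m, rfl⟩ := N.mkQ_surjective q
          exact ⟨(op a • m) ⊗ₜ n - m ⊗ₜ (a • n), ⟨m, a, n, rfl⟩, heq m a n⟩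
        · rintro ⟨y, ⟨m, a, n, rfl⟩, rfl⟩
          exact ⟨N.mkQ m, a, n, (heq m a n).symm⟩
      rw [hbal] at hFt
      obtain ⟨s, hs, hFs⟩ := hFt
      have hker : F (t - s) = 0 := by
        rw [map_sub]
        rw [show F.toAddMonoidHom s = F s from rfl] at hFs
        rw [hFs, sub_self]
      -- exactness of  N ⊗ I → M ⊗ I → (M/N) ⊗ I
      have hexact :
          Function.Exact (LinearMap.rTensor ↥I (N.subtype.toAddMonoidHom.toIntLinearMap)) F := by
        rw [hF, hπz]
        apply rTensor_exact ↥I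
        · intro m
          constructor
          · intro hm
            have : m ∈ N := (Submodule.Quotient.mk_eq_zero N).mp (by simpa using hm)
            exact ⟨⟨m, this⟩, rfl⟩
          · rintro ⟨⟨m', hm'⟩, rfl⟩
            simpa using (Submodule.Quotient.mk_eq_zero N).mpr hm'
        · intro q
          obtain ⟨m, rfl⟩ := N.mkQ_surjective q
          exact ⟨m, rfl⟩
      obtain ⟨u, hu⟩ := (hexact (t - s)).mp hker
      have hts : Φ t = Φ s + Φ (t - s) := by rw [← map_add, add_sub_cancel]
      have h1 : Φ s = 0 := phi_balanced A M I s hs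
      have h2 : Φ (t - s) ∈ NI := by
        rw [← hu]
        clear hu hker hFs
        induction u using TensorProduct.induction_on with
        | zero => rw [map_zero, map_zero]; exact Submodule.zero_mem _
        | tmul ν n =>
          have h3 : LinearMap.rTensor ↥I (N.subtype.toAddMonoidHom.toIntLinearMap) (ν ⊗ₜ n)
              = ((ν : M)) ⊗ₜ n := rfl
          rw [h3, hΦ, phi_tmul]
          exact Submodule.subset_span ⟨(ν : M), ν.2, (n : A), n.2, rfl⟩
        | add x y hx hy => rw [map_add, map_add]; exact Submodule.add_mem _ hx hy
      rw [← htv, hts, h1, zero_add]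
      exact h2
    -- convert the external statement to the internal one
    rw [Submodule.eq_top_iff']
    intro x
    have h1 : (x : M) ∈ NI := main (x : M) x.2
    have h2 : NI ≤ Submodule.map N.subtype
        (Submodule.span Aᵐᵒᵖ {y : ↥N | ∃ (n : ↥N) (a : A), a ∈ I ∧ y = op a • n}) := by
      rw [hNIdef, Submodule.span_le]
      rintro y ⟨m, hm, a, ha, rfl⟩
      exact ⟨op a • ⟨m, hm⟩, Submodule.subset_span ⟨⟨m, hm⟩, a, ha, rfl⟩, rfl⟩
    obtain ⟨y, hy, hyx⟩ := h2 h1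
    have hxy : y = x := Subtype.ext hyx
    exact hxy ▸ hy
end

section
/- Let A be a ring and I a two-sided idempotent ideal of A such that ann_M(I) is a direct summand of M for every right A-module M. Then: (a) the class {M : M is a right A-module with MI = M} is closed under submodules (equivalently, A/I is flat as a left A-module); and (b) every right A-module M with MI = M satisfies ann_M(I) = 0. -/
open MulOpposite

variable (A : Type) [Ring A]

/-- let `I` be a two-sided idempotent ideal of `A` such that `ann_M(I)` is a
direct summand of every right `A`-module `M`.  Then (a) the class `{M | MI = M}` is
closed under submodules, and (b) every right `A`-module with `MI = M` has `ann_M(I) = 0`. -/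
theorem stmt_6 (I : Ideal A)
    (hright : ∀ a ∈ I, ∀ b : A, a * b ∈ I)
    (hidem : ∀ a ∈ I, a ∈ AddSubgroup.closure {x : A | ∃ b ∈ I, ∃ c ∈ I, x = b * c})
    (hsplit : ∀ (M : Type) [AddCommGroup M] [Module Aᵐᵒᵖ M],
      ∃ N' : Submodule Aᵐᵒᵖ M, rAnn A I M ⊓ N' = ⊥ ∧ rAnn A I M ⊔ N' = ⊤) :
    (∀ (M : Type) [AddCommGroup M] [Module Aᵐᵒᵖ M],
        Submodule.span Aᵐᵒᵖ {x : M | ∃ (m : M) (a : A), a ∈ I ∧ x = op a • m} = ⊤ →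
        ∀ N : Submodule Aᵐᵒᵖ M,
          Submodule.span Aᵐᵒᵖ {x : N | ∃ (n : N) (a : A), a ∈ I ∧ x = op a • n} = ⊤) ∧
    (∀ (M : Type) [AddCommGroup M] [Module Aᵐᵒᵖ M],
        Submodule.span Aᵐᵒᵖ {x : M | ∃ (m : M) (a : A), a ∈ I ∧ x = op a • m} = ⊤ →
        rAnn A I M = ⊥) :=
by
  have partb : ∀ (M : Type) [AddCommGroup M] [Module Aᵐᵒᵖ M],
      Submodule.span Aᵐᵒᵖ {x : M | ∃ (m : M) (a : A), a ∈ I ∧ x = op a • m} = ⊤ →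
      rAnn A I M = ⊥ := by
    intro M _ _ hspan
    obtain ⟨N', hinf, hsup⟩ := hsplit M
    have hN' : N' = ⊤ := by
      rw [eq_top_iff, ← hspan, Submodule.span_le]
      rintro x ⟨m, a, ha, rfl⟩
      have hm : m ∈ rAnn A I M ⊔ N' := by rw [hsup]; exact Submodule.mem_top
      obtain ⟨y, hy, z, hz, rfl⟩ := Submodule.mem_sup.mp hm
      have h0 : op a • y = 0 := hy a ha
      rw [smul_add, h0, zero_add]
      exact N'.smul_mem _ hz
    rw [hN', inf_top_eq] at hinf
    exact hinf
  refine ⟨?_, partb⟩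
  intro M _ _ hspan N
  set NI : Submodule Aᵐᵒᵖ M :=
    Submodule.span Aᵐᵒᵖ {x : M | ∃ n : N, ∃ a, a ∈ I ∧ x = op a • (n : M)} with hNI
  have hPspan : Submodule.span Aᵐᵒᵖ
      {x : M ⧸ NI | ∃ (m : M ⧸ NI) (a : A), a ∈ I ∧ x = op a • m} = ⊤ := by
    rw [eq_top_iff]
    intro p _
    obtain ⟨m, rfl⟩ := Submodule.mkQ_surjective NI p
    have hm : m ∈ Submodule.span Aᵐᵒᵖ {x : M | ∃ (m : M) (a : A), a ∈ I ∧ x = op a • m} := by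
      rw [hspan]; exact Submodule.mem_top
    have hmem := Submodule.mem_map_of_mem (f := NI.mkQ) hm
    rw [Submodule.map_span] at hmem
    refine Submodule.span_mono ?_ hmem
    rintro x ⟨y, ⟨m', a, ha, rfl⟩, rfl⟩
    exact ⟨NI.mkQ m', a, ha, (NI.mkQ.map_smul (op a) m').symm⟩
  have hann := partb (M ⧸ NI) hPspan
  have key : ∀ n : M, n ∈ N → n ∈ NI := by
    intro n hn
    have hmem : NI.mkQ n ∈ rAnn A I (M ⧸ NI) := by
      intro a ha
      rw [← map_smul, Submodule.mkQ_apply, Submodule.Quotient.mk_eq_zero]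
      exact Submodule.subset_span ⟨⟨n, hn⟩, a, ha, rfl⟩
    rw [hann, Submodule.mem_bot, Submodule.mkQ_apply,
      Submodule.Quotient.mk_eq_zero] at hmem
    exact hmem
  rw [eq_top_iff]
  intro n _
  have hmap : NI ≤ Submodule.map N.subtype
      (Submodule.span Aᵐᵒᵖ {x : N | ∃ (n : N) (a : A), a ∈ I ∧ x = op a • n}) := by
    rw [Submodule.span_le]
    rintro x ⟨n', a, ha, rfl⟩
    exact ⟨op a • n', Submodule.subset_span ⟨n', a, ha, rfl⟩, rfl⟩
  obtain ⟨y, hy, hyx⟩ := hmap (key n n.2)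
  have hyn : y = n := Subtype.ext hyx
  rwa [← hyn]
end

section
/- Let A be a ring and I a two-sided idempotent ideal of A such that ann_M(I) is a direct summand of M for every right A-module M. Then the following are equivalent: (1) the class {M : M is a right A-module with MI = M} is closed under arbitrary direct products; (2) I = Ae for some idempotent e ∈ A; (3) the right A-module A/I admits a projective cover; (4) I is finitely generated as a left ideal of A. -/
/-!
The splitting hypothesis gives right units: if `m ∈ YI` then `m = m·z` for some `z ∈ I`. Indeed,
in `Y/mI` the class of `m` lies in `ann(I)` and in `(Y/mI)·I`, and the latter lies in any
complement of `ann(I)`, so the class vanishes. Applied to the diagonal of `∏_{x ∈ I} I` (under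
(1)) or to a finite generating tuple (under (4)), this gives one `e ∈ I` with `x·e = x` on all of
`I`, i.e. `I = Ae` with `e` idempotent. Conversely such an `e` acts as the identity on every `M`
with `MI = M`, and `(1 - e)A → A/I` is a projective cover. For (3) ⇒ (2), lift `A → A/I` to the
cover `P`; the lift is a split surjection, so its kernel is `βA` with `β ∈ I` idempotent, and
superfluity of the kernel together with a common right unit of `x` and `β` gives `x·β = x`.
-/

open MulOpposite

variable (A : Type) [Ring A]

section

variable {R M : Type*} [Ring R] [AddCommGroup M] [Module R M]

theorem Submodule.eq_top_of_sup_eq_top_of_smul {K N : Submodule R M} {g : M} (hg : R ∙ g = ⊤)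
    {r : R} (hrg : r • g = 0) (hK : ∀ k ∈ K, r • k = k) (h : K ⊔ N = ⊤) : N = ⊤ := by
  obtain ⟨k, hk, n, hn, hkn⟩ := Submodule.mem_sup.mp (h ▸ Submodule.mem_top : g ∈ K ⊔ N)
  have hkN : k ∈ N := by
    have : k = -(r • n) := by
      rw [← hK k hk, eq_neg_iff_add_eq_zero, ← smul_add, hkn, hrg]
    exact this ▸ N.neg_mem (N.smul_mem r hn)
  rw [eq_top_iff, ← hg, Submodule.span_singleton_le_iff_mem, ← hkn]
  exact N.add_mem hkN hn

theorem Submodule.eq_top_of_map_eq_top {M' : Type*} [AddCommGroup M'] [Module R M']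
    {p : M →ₗ[R] M'} (hp : Function.Surjective p)
    (hsmall : ∀ N : Submodule R M, LinearMap.ker p ⊔ N = ⊤ → N = ⊤)
    {N : Submodule R M} (h : N.map p = ⊤) : N = ⊤ :=
  hsmall N (sup_comm N _ ▸ (LinearMap.map_eq_top_iff (LinearMap.range_eq_top.mpr hp)).mp h)

end

section

universe u

variable {A}

/-- `rMul I M` is the submodule `MI`. -/
def rMul (I : Ideal A) (M : Type) [AddCommGroup M] [Module Aᵐᵒᵖ M] : Submodule Aᵐᵒᵖ M :=
  Submodule.span Aᵐᵒᵖ {x | ∃ (m : M) (a : A), a ∈ I ∧ x = op a • m}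

def HasComplementedAnnihilators (I : Ideal A) : Prop :=
  ∀ (M : Type) [AddCommGroup M] [Module Aᵐᵒᵖ M],
    ∃ N' : Submodule Aᵐᵒᵖ M, rAnn A I M ⊓ N' = ⊥ ∧ rAnn A I M ⊔ N' = ⊤

variable {I : Ideal A} {M N : Type} [AddCommGroup M] [Module Aᵐᵒᵖ M] [AddCommGroup N]
  [Module Aᵐᵒᵖ N]

theorem rMul_le_of_rAnn_sup_eq_top {N' : Submodule Aᵐᵒᵖ M} (h : rAnn A I M ⊔ N' = ⊤) :
    rMul I M ≤ N' := by
  refine Submodule.span_le.mpr ?_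
  rintro _ ⟨m, a, ha, rfl⟩
  obtain ⟨s, hs, n, hn, rfl⟩ := Submodule.mem_sup.mp (h ▸ Submodule.mem_top : m ∈ rAnn A I M ⊔ N')
  rw [smul_add, hs a ha, zero_add]
  exact N'.smul_mem _ hn

theorem map_rMul_le (f : M →ₗ[Aᵐᵒᵖ] N) : (rMul I M).map f ≤ rMul I N := by
  rw [rMul, Submodule.map_span_le]
  rintro _ ⟨m, a, ha, rfl⟩
  exact Submodule.subset_span ⟨f m, a, ha, map_smul f _ _⟩

theorem fg_of_mul_eq_self {e : A} (he : e ∈ I) (hIe : ∀ x ∈ I, x * e = x) : I.FG :=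
  ⟨{e}, by
    rw [Finset.coe_singleton]
    exact le_antisymm (Ideal.span_le.mpr (Set.singleton_subset_iff.mpr he))
      fun x hx => Ideal.mem_span_singleton'.mpr ⟨x, hIe x hx⟩⟩

theorem exists_mul_eq_self_iff :
    (∃ e ∈ I, ∀ x ∈ I, x * e = x) ↔
      ∃ e : A, IsIdempotentElem e ∧ (I : Set A) = {x : A | ∃ a : A, x = a * e} := by
  constructor
  · rintro ⟨e, he, hIe⟩
    refine ⟨e, hIe e he, Set.ext fun x => ⟨fun hx => ⟨x, (hIe x hx).symm⟩, ?_⟩⟩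
    rintro ⟨a, rfl⟩
    exact I.mul_mem_left a he
  · rintro ⟨e, hee, hI⟩
    have hmem : ∀ x, x ∈ I ↔ ∃ a : A, x = a * e := fun x => Set.ext_iff.mp hI x
    refine ⟨e, (hmem e).mpr ⟨1, (one_mul e).symm⟩, fun x hx => ?_⟩
    obtain ⟨a, rfl⟩ := (hmem x).mp hx
    rw [mul_assoc, hee.eq]

variable [I.IsTwoSided]

theorem mem_span_coe_iff {x : A} : x ∈ Submodule.span Aᵐᵒᵖ (I : Set A) ↔ x ∈ I := by
  refine ⟨fun hx => ?_, fun hx => Submodule.subset_span hx⟩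
  induction hx using Submodule.span_induction with
  | mem y hy => exact hy
  | zero => exact I.zero_mem
  | add y z _ _ hy hz => exact I.add_mem hy hz
  | smul c y _ hy => exact I.mul_mem_right c.unop hy

theorem exists_smul_eq_self_of_mem_rMul (hI : HasComplementedAnnihilators I) {m : M}
    (hm : m ∈ rMul I M) : ∃ z ∈ I, op z • m = m := by
  -- `Nm = m·I`
  let Nm := (Submodule.span Aᵐᵒᵖ (I : Set A)).map
    ((LinearMap.toSpanSingleton Aᵐᵒᵖ M m).comp (opLinearEquiv Aᵐᵒᵖ).toLinearMap)
  obtain ⟨N', h_inf, h_sup⟩ := hI (M ⧸ Nm)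
  have h_ann : Nm.mkQ m ∈ rAnn A I (M ⧸ Nm) := fun a ha => by
    rw [← map_smul, Submodule.mkQ_apply, Submodule.Quotient.mk_eq_zero]
    exact ⟨a, Submodule.subset_span ha, rfl⟩
  have h_mul : Nm.mkQ m ∈ N' :=
    rMul_le_of_rAnn_sup_eq_top h_sup (map_rMul_le Nm.mkQ ⟨m, hm, rfl⟩)
  have h_zero : Nm.mkQ m = 0 := by
    rw [← Submodule.mem_bot Aᵐᵒᵖ, ← h_inf]
    exact ⟨h_ann, h_mul⟩
  rw [Submodule.mkQ_apply, Submodule.Quotient.mk_eq_zero] at h_zero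
  obtain ⟨z, hz, hzm⟩ := h_zero
  exact ⟨z, mem_span_coe_iff.mp hz, hzm⟩

theorem exists_mul_eq_self_of_finset (hI : HasComplementedAnnihilators I) (s : Finset A)
    (hs : ↑s ⊆ (I : Set A)) : ∃ e ∈ I, ∀ x ∈ s, x * e = x := by
  classical
  have hm : ((↑) : s → A) ∈ rMul I (s → A) := by
    rw [← Finset.univ_sum_single ((↑) : s → A)]
    refine Submodule.sum_mem _ fun i _ => Submodule.subset_span ⟨Pi.single i 1, i, hs i.2, ?_⟩
    rw [← Pi.single_smul, op_smul_eq_mul, one_mul]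
  obtain ⟨e, he, hme⟩ := exists_smul_eq_self_of_mem_rMul hI hm
  exact ⟨e, he, fun x hx => congrFun hme ⟨x, hx⟩⟩

theorem exists_mul_eq_self_of_fg (hI : HasComplementedAnnihilators I) (hfg : I.FG) :
    ∃ e ∈ I, ∀ x ∈ I, x * e = x := by
  obtain ⟨s, rfl⟩ := hfg
  obtain ⟨e, he, hse⟩ := exists_mul_eq_self_of_finset hI s Ideal.subset_span
  refine ⟨e, he, fun x hx => ?_⟩
  have : Ideal.span (s : Set A) ≤ LinearMap.ker (LinearMap.mulRight A e - LinearMap.id) :=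
    Ideal.span_le.mpr fun y hy => by simp [hse y hy]
  simpa [sub_eq_zero] using this hx

theorem exists_mul_eq_self_of_mem (hI : HasComplementedAnnihilators I) {x : A} (hx : x ∈ I) :
    ∃ z ∈ I, x * z = x := by
  obtain ⟨z, hz, hxz⟩ := exists_mul_eq_self_of_finset hI {x} (by simpa using hx)
  exact ⟨z, hz, hxz x (Finset.mem_singleton_self x)⟩

theorem smul_eq_self_of_mem_rMul {e : A} (he : e ∈ I) (hIe : ∀ x ∈ I, x * e = x) {m : M}
    (hm : m ∈ rMul I M) : op e • m = m := by
  induction hm using Submodule.span_induction with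
  | mem _ h =>
    obtain ⟨m, a, ha, rfl⟩ := h
    rw [smul_smul, ← op_mul, hIe a ha]
  | zero => exact smul_zero _
  | add y z _ _ hy hz => rw [smul_add, hy, hz]
  | smul c z _ hz =>
    have hece : e * c.unop * e = e * c.unop := hIe _ (I.mul_mem_right _ he)
    calc op e • c • z = (op e * c * op e) • z := by rw [mul_smul, mul_smul, hz]
      _ = (c * op e) • z := by
        congr 1
        apply unop_injective
        simpa only [unop_mul, unop_op, mul_assoc] using hece
      _ = c • z := by rw [mul_smul, hz]

theorem rMul_pi_eq_top {e : A} (he : e ∈ I) (hIe : ∀ x ∈ I, x * e = x) {ι : Type}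
    {M : ι → Type} [∀ i, AddCommGroup (M i)] [∀ i, Module Aᵐᵒᵖ (M i)]
    (hM : ∀ i, rMul I (M i) = ⊤) : rMul I (∀ i, M i) = ⊤ :=
  Submodule.eq_top_iff'.mpr fun m => Submodule.subset_span ⟨m, e, he, funext fun i =>
    (smul_eq_self_of_mem_rMul he hIe (hM i ▸ Submodule.mem_top : m i ∈ rMul I (M i))).symm⟩

theorem exists_mul_eq_self_of_rMul_pi (hI : HasComplementedAnnihilators I)
    (hpi : ∀ (ι : Type) (M : ι → Type) [∀ i, AddCommGroup (M i)] [∀ i, Module Aᵐᵒᵖ (M i)],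
      (∀ i, rMul I (M i) = ⊤) → rMul I (∀ i, M i) = ⊤) :
    ∃ e ∈ I, ∀ x ∈ I, x * e = x := by
  let J := Submodule.span Aᵐᵒᵖ (I : Set A)
  have hJ : rMul I J = ⊤ := Submodule.eq_top_iff'.mpr fun v => by
    obtain ⟨z, hz, hvz⟩ := exists_mul_eq_self_of_mem hI (mem_span_coe_iff.mp v.2)
    exact Submodule.subset_span ⟨v, z, hz, Subtype.ext hvz.symm⟩
  let diag : I → J := fun x => ⟨x, Submodule.subset_span x.2⟩
  have hdiag : diag ∈ rMul I (I → J) := hpi I (fun _ => J) (fun _ => hJ) ▸ Submodule.mem_top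
  obtain ⟨e, he, hediag⟩ := exists_smul_eq_self_of_mem_rMul hI hdiag
  exact ⟨e, he, fun x hx => congrArg Subtype.val (congrFun hediag ⟨x, hx⟩)⟩

instance : Module.Projective Aᵐᵒᵖ A :=
  .of_equiv' (opLinearEquiv Aᵐᵒᵖ).symm

theorem map_mkQ_range_mulLeft_one_sub {e : A} (he : e ∈ I) :
    (LinearMap.range (LinearMap.mulLeft Aᵐᵒᵖ (1 - e))).map
      (Submodule.span Aᵐᵒᵖ (I : Set A)).mkQ = ⊤ := by
  refine Submodule.eq_top_iff'.mpr fun y => ?_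
  obtain ⟨x, rfl⟩ := Submodule.mkQ_surjective _ y
  refine ⟨(1 - e) * x, ⟨x, rfl⟩, ?_⟩
  rw [Submodule.mkQ_apply, Submodule.mkQ_apply, Submodule.Quotient.eq, mem_span_coe_iff]
  simpa [sub_mul] using I.neg_mem (I.mul_mem_right x he)

theorem exists_projectiveCover {e : A} (he : e ∈ I) (hIe : ∀ x ∈ I, x * e = x) :
    ∃ (P : ModuleCat.{u} Aᵐᵒᵖ) (p : P →ₗ[Aᵐᵒᵖ] (A ⧸ Submodule.span Aᵐᵒᵖ (I : Set A))),
      Module.Projective Aᵐᵒᵖ P ∧ Function.Surjective p ∧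
      ∀ N : Submodule Aᵐᵒᵖ P, LinearMap.ker p ⊔ N = ⊤ → N = ⊤ := by
  have hee : IsIdempotentElem (1 - e) := IsIdempotentElem.one_sub (hIe e he)
  let π := LinearMap.mulLeft Aᵐᵒᵖ (1 - e)
  have : Module.Projective Aᵐᵒᵖ (LinearMap.range π) := by
    refine .of_split (LinearMap.range π).subtype π.rangeRestrict
      (LinearMap.ext fun ⟨_, x, rfl⟩ => Subtype.ext ?_)
    simp [π, ← mul_assoc, hee.eq]
  -- the universe of `ModuleCat` in the statement is arbitrary
  let μ : ULift.{u} (LinearMap.range π) ≃ₗ[Aᵐᵒᵖ] LinearMap.range π := ULift.moduleEquiv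
  let p := ((Submodule.span Aᵐᵒᵖ (I : Set A)).mkQ ∘ₗ (LinearMap.range π).subtype) ∘ₗ μ.toLinearMap
  refine ⟨ModuleCat.of Aᵐᵒᵖ (ULift.{u} (LinearMap.range π)), p, inferInstance, ?_, fun N => ?_⟩
  · have hq : Function.Surjective ((Submodule.span Aᵐᵒᵖ (I : Set A)).mkQ ∘ₗ
        (LinearMap.range π).subtype) := by
      rw [← LinearMap.range_eq_top, LinearMap.range_comp, Submodule.range_subtype]
      exact map_mkQ_range_mulLeft_one_sub he
    exact hq.comp μ.surjective
  · refine Submodule.eq_top_of_sup_eq_top_of_smul (g := μ.symm ⟨1 - e, 1, mul_one _⟩) (r := op e)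
      ?_ ?_ ?_
    · refine Submodule.eq_top_iff'.mpr fun y => Submodule.mem_span_singleton.mpr ?_
      obtain ⟨x, hx⟩ := (μ y).2
      refine ⟨op x, μ.injective ?_⟩
      rw [map_smul, μ.apply_symm_apply]
      exact Subtype.ext hx
    · rw [← map_smul, LinearEquiv.map_eq_zero_iff]
      exact Subtype.ext (by simp [sub_mul, (hIe e he)])
    · intro k hk
      refine μ.injective (Subtype.ext ?_)
      exact hIe _ (mem_span_coe_iff.mp ((Submodule.Quotient.mk_eq_zero _).mp hk))

theorem exists_mul_eq_self_on_ker {P : Type*} [AddCommGroup P] [Module Aᵐᵒᵖ P]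
    [Module.Projective Aᵐᵒᵖ P] {f : A →ₗ[Aᵐᵒᵖ] P} (hf : Function.Surjective f) :
    ∃ β, f β = 0 ∧ ∀ k, f k = 0 → β * k = k := by
  obtain ⟨σ, hσ⟩ := f.exists_rightInverse_of_surjective (LinearMap.range_eq_top.mpr hf)
  have hfσ : ∀ y, f (σ y) = y := LinearMap.congr_fun hσ
  have hσf : ∀ x, σ (f x) = σ (f 1) * x := fun x => by
    rw [← op_smul_eq_mul, ← map_smul, ← map_smul, op_smul_eq_mul, one_mul]
  refine ⟨1 - σ (f 1), by rw [map_sub, hfσ, sub_self], fun k hk => ?_⟩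
  rw [sub_mul, one_mul, ← hσf, hk, map_zero, sub_zero]

theorem mul_eq_self_of_map_range_eq_top {P : Type*} [AddCommGroup P] [Module Aᵐᵒᵖ P]
    {f : A →ₗ[Aᵐᵒᵖ] P} {β e x : A} (hβ : ∀ k, f k = 0 → β * k = k) (hβe : β * e = β)
    (hxe : x * e = x) (htop : (LinearMap.range (LinearMap.mulLeft Aᵐᵒᵖ (1 - e))).map f = ⊤) :
    x * β = x := by
  obtain ⟨_, ⟨d, rfl⟩, hd⟩ := htop ▸ Submodule.mem_top (x := f 1)
  have hρ : f (1 - (1 - e) * d) = 0 := by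
    rw [map_sub, ← hd, LinearMap.mulLeft_apply, sub_self]
  have hρβ : 1 - (1 - e) * d = β :=
    calc _ = β * (1 - (1 - e) * d) := (hβ _ hρ).symm
      _ = β := by rw [mul_sub, ← mul_assoc, mul_sub, hβe, mul_one, sub_self, zero_mul, sub_zero]
  rw [← hρβ, mul_sub, ← mul_assoc, mul_sub, hxe, mul_one, sub_self, zero_mul, sub_zero]

theorem exists_mul_eq_self_of_projectiveCover (hI : HasComplementedAnnihilators I)
    (hcover : ∃ (P : ModuleCat Aᵐᵒᵖ)
      (p : P →ₗ[Aᵐᵒᵖ] (A ⧸ Submodule.span Aᵐᵒᵖ (I : Set A))),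
      Module.Projective Aᵐᵒᵖ P ∧ Function.Surjective p ∧
      ∀ N : Submodule Aᵐᵒᵖ P, LinearMap.ker p ⊔ N = ⊤ → N = ⊤) :
    ∃ e ∈ I, ∀ x ∈ I, x * e = x := by
  classical
  obtain ⟨P, p, hP, hp, hsmall⟩ := hcover
  let q := (Submodule.span Aᵐᵒᵖ (I : Set A)).mkQ
  obtain ⟨f, hf⟩ := Module.projective_lifting_property p q hp
  have hf_surj : Function.Surjective f := by
    refine LinearMap.range_eq_top.mp (Submodule.eq_top_of_map_eq_top hp hsmall ?_)
    rw [LinearMap.range_eq_map, ← Submodule.map_comp, hf, ← LinearMap.range_eq_map,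
      Submodule.range_mkQ]
  obtain ⟨β, hβ0, hβ⟩ := exists_mul_eq_self_on_ker hf_surj
  have hβI : β ∈ I := by
    refine mem_span_coe_iff.mp ((Submodule.Quotient.mk_eq_zero _).mp ?_)
    change q β = 0
    rw [← hf, LinearMap.comp_apply, hβ0, map_zero]
  refine ⟨β, hβI, fun x hx => ?_⟩
  obtain ⟨e, he, hxe⟩ := exists_mul_eq_self_of_finset hI {x, β}
    (by simp [Set.insert_subset_iff, hx, hβI])
  refine mul_eq_self_of_map_range_eq_top hβ (hxe β (by simp)) (hxe x (by simp))
    (Submodule.eq_top_of_map_eq_top hp hsmall ?_)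
  rw [← Submodule.map_comp, hf]
  exact map_mkQ_range_mulLeft_one_sub he

end

theorem stmt_7 (I : Ideal A)
    (hright : ∀ a ∈ I, ∀ b : A, a * b ∈ I)
    (hsplit : ∀ (M : Type) [AddCommGroup M] [Module Aᵐᵒᵖ M],
      ∃ N' : Submodule Aᵐᵒᵖ M, rAnn A I M ⊓ N' = ⊥ ∧ rAnn A I M ⊔ N' = ⊤) :
    List.TFAE
      [ -- (1) closure of `{M | MI = M}` under products
        ∀ (ι : Type) (M : ι → Type) [∀ i, AddCommGroup (M i)] [∀ i, Module Aᵐᵒᵖ (M i)],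
          (∀ i, Submodule.span Aᵐᵒᵖ
              {x : M i | ∃ (m : M i) (a : A), a ∈ I ∧ x = op a • m} = ⊤) →
          Submodule.span Aᵐᵒᵖ
              {x : (∀ i, M i) | ∃ (m : ∀ i, M i) (a : A), a ∈ I ∧ x = op a • m} = ⊤,
        -- (2) `I = Ae` for an idempotent `e`
        ∃ e : A, IsIdempotentElem e ∧ (I : Set A) = {x : A | ∃ a : A, x = a * e},
        -- (3) the right `A`-module `A/I` has a projective cover
        ∃ (P : ModuleCat Aᵐᵒᵖ)
          (p : P →ₗ[Aᵐᵒᵖ] (A ⧸ Submodule.span Aᵐᵒᵖ (I : Set A))),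
          Module.Projective Aᵐᵒᵖ P ∧ Function.Surjective p ∧
          ∀ N : Submodule Aᵐᵒᵖ P, LinearMap.ker p ⊔ N = ⊤ → N = ⊤,
        -- (4) `I` is finitely generated as a left ideal
        I.FG ] := by
  have : I.IsTwoSided := ⟨fun b ha => hright _ ha b⟩
  rw [← exists_mul_eq_self_iff]
  tfae_have 1 → 2 := exists_mul_eq_self_of_rMul_pi hsplit
  tfae_have 2 → 1 := fun ⟨e, he, hIe⟩ _ _ _ _ => rMul_pi_eq_top he hIe
  tfae_have 2 → 3 := fun ⟨e, he, hIe⟩ => exists_projectiveCover he hIe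
  tfae_have 3 → 2 := exists_mul_eq_self_of_projectiveCover hsplit
  tfae_have 2 → 4 := fun ⟨e, he, hIe⟩ => fg_of_mul_eq_self he hIe
  tfae_have 4 → 2 := exists_mul_eq_self_of_fg hsplit
  tfae_finish
end

section
/- Let B be a ring and M a left B-module. Then the following are equivalent: (1) for every ring C, every right C-module structure on M satisfying (b·m)·c = b·(m·c) for all b ∈ B, m ∈ M, c ∈ C, and every right C-module X, the right B-module Hom_C(M, X) (with action (f·b)(m) = f(b·m)) is hereditary projective; (2) the character module M⁺ := Hom_ℤ(M, ℚ/ℤ), with right B-action (f·b)(m) = f(b·m), is hereditary Π-projective as a right B-module. -/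
/-!
Both directions embed one module into the other. For (2) ⇒ (1), `f ↦ (χ ↦ χ ∘ f)` embeds
`Hom_C(M, X)` into the power `(X⁺ → M⁺)`, injectively because characters separate the points of
`X`. For (1) ⇒ (2), take `C = ℤ` and `X = ι → ℚ/ℤ`: then `Hom_ℤ(M, ι → ℚ/ℤ)` is `ι → M⁺`.
-/

open MulOpposite

section HomModule

variable (B : Type) [Ring B] (C : Type) [Ring C]
variable (M : Type) [AddCommGroup M] [Module B M] [Module Cᵐᵒᵖ M] [SMulCommClass B Cᵐᵒᵖ M]
variable (X : Type) [AddCommGroup X] [Module Cᵐᵒᵖ X]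

/-- The right `B`-module structure `(f·b)(m) = f(b·m)` on `Hom_C(M, X)`, for a
`(B,C)`-bimodule `M` and a right `C`-module `X`. -/
instance homSMul : SMul Bᵐᵒᵖ (M →ₗ[Cᵐᵒᵖ] X) :=
  ⟨fun b f =>
    { toFun := fun m => f (b.unop • m)
      map_add' := fun m n => by
        show f (b.unop • (m + n)) = f (b.unop • m) + f (b.unop • n)
        rw [smul_add, map_add]
      map_smul' := fun c m => by
        show f (b.unop • (c • m)) = c • f (b.unop • m)
        rw [smul_comm b.unop c m, map_smul] }⟩

instance homMulAction : MulAction Bᵐᵒᵖ (M →ₗ[Cᵐᵒᵖ] X) where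
  one_smul f := LinearMap.ext fun m => by
    show f ((1 : Bᵐᵒᵖ).unop • m) = f m
    rw [unop_one, one_smul]
  mul_smul b b' f := LinearMap.ext fun m => by
    show f ((b * b').unop • m) = f (b'.unop • b.unop • m)
    rw [unop_mul, mul_smul]

instance homDistribMulAction : DistribMulAction Bᵐᵒᵖ (M →ₗ[Cᵐᵒᵖ] X) where
  smul_zero b := LinearMap.ext fun _ => rfl
  smul_add b f g := LinearMap.ext fun _ => rfl

instance homModule : Module Bᵐᵒᵖ (M →ₗ[Cᵐᵒᵖ] X) where
  add_smul b b' f := LinearMap.ext fun m => by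
    show f ((b + b').unop • m) = f (b.unop • m) + f (b'.unop • m)
    rw [unop_add, add_smul, map_add]
  zero_smul f := LinearMap.ext fun m => by
    show f ((0 : Bᵐᵒᵖ).unop • m) = 0
    rw [unop_zero, zero_smul, map_zero]

end HomModule

section CharMod

variable (B : Type) [Ring B] (M : Type) [AddCommGroup M] [Module B M]

/-- The right `B`-module structure `(f·b)(m) = f(b·m)` on the character module
`M⁺ = Hom_ℤ(M, ℚ/ℤ)` of a left `B`-module `M`. -/
instance charSMul : SMul Bᵐᵒᵖ (CharacterModule M) :=
  ⟨fun b f => f.comp (DistribMulAction.toAddMonoidHom M b.unop)⟩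

instance charMulAction : MulAction Bᵐᵒᵖ (CharacterModule M) where
  one_smul f := DFunLike.ext _ _ fun m => by
    show f ((1 : Bᵐᵒᵖ).unop • m) = f m
    rw [unop_one, one_smul]
  mul_smul b b' f := DFunLike.ext _ _ fun m => by
    show f ((b * b').unop • m) = f (b'.unop • b.unop • m)
    rw [unop_mul, mul_smul]

instance charDistribMulAction : DistribMulAction Bᵐᵒᵖ (CharacterModule M) where
  smul_zero b := DFunLike.ext _ _ fun _ => rfl
  smul_add b f g := DFunLike.ext _ _ fun _ => rfl

instance charModule : Module Bᵐᵒᵖ (CharacterModule M) where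
  add_smul b b' f := DFunLike.ext _ _ fun m => by
    show f ((b + b').unop • m) = f (b.unop • m) + f (b'.unop • m)
    rw [unop_add, add_smul, map_add]
  zero_smul f := DFunLike.ext _ _ fun m => by
    show f ((0 : Bᵐᵒᵖ).unop • m) = 0
    rw [unop_zero, zero_smul, map_zero]

end CharMod

def Module.HereditaryProjective (R M : Type*) [Semiring R] [AddCommMonoid M] [Module R M] :
    Prop :=
  ∀ N : Submodule R M, Module.Projective R N

theorem Module.HereditaryProjective.of_injective {R M N : Type*} [Semiring R]
    [AddCommMonoid M] [Module R M] [AddCommMonoid N] [Module R N]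
    (h : Module.HereditaryProjective R N) (f : M →ₗ[R] N) (hf : Function.Injective f) :
    Module.HereditaryProjective R M := fun P =>
  have := h (P.map f)
  .of_equiv (P.equivMapOfInjective f hf).symm

namespace CharacterModule

section Dual

variable (B : Type) [Ring B] (C : Type) [Ring C]
variable (M : Type) [AddCommGroup M] [Module B M] [Module Cᵐᵒᵖ M] [SMulCommClass B Cᵐᵒᵖ M]
variable (X : Type) [AddCommGroup X] [Module Cᵐᵒᵖ X]

def homToPi : (M →ₗ[Cᵐᵒᵖ] X) →ₗ[Bᵐᵒᵖ] (CharacterModule X → CharacterModule M) where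
  toFun f χ := χ.comp f.toAddMonoidHom
  map_add' f g := funext fun χ => AddMonoidHom.ext fun m => map_add χ (f m) (g m)
  map_smul' _ _ := rfl

theorem homToPi_injective : Function.Injective (homToPi B C M X) := fun f g hfg =>
  LinearMap.ext fun m => sub_eq_zero.mp <| eq_zero_of_character_apply fun χ => by
    rw [map_sub, sub_eq_zero]
    exact DFunLike.congr_fun (congrFun hfg χ) m

end Dual

section IntOp

abbrev intOpModule (A : Type) [AddCommGroup A] : Module ℤᵐᵒᵖ A :=
  Module.compHom A (RingEquiv.toOpposite ℤ).symm.toRingHom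

attribute [local instance] intOpModule

instance (B M : Type) [Ring B] [AddCommGroup M] [Module B M] : SMulCommClass B ℤᵐᵒᵖ M :=
  ⟨fun b z m => smul_comm b z.unop m⟩

variable (B : Type) [Ring B] (M : Type) [AddCommGroup M] [Module B M] (ι : Type)

def piToHom : (ι → CharacterModule M) →ₗ[Bᵐᵒᵖ] (M →ₗ[ℤᵐᵒᵖ] (ι → AddCircle (1 : ℚ))) where
  toFun g :=
    { toFun m i := g i m
      map_add' m n := funext fun i => map_add (g i) m n
      map_smul' z m := funext fun i => map_zsmul (g i) z.unop m }
  map_add' _ _ := rfl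
  map_smul' _ _ := rfl

theorem piToHom_injective : Function.Injective (piToHom B M ι) := fun _ _ hgh =>
  funext fun i => AddMonoidHom.ext fun m => congrFun (LinearMap.congr_fun hgh m) i

end IntOp

end CharacterModule

open CharacterModule in
/-- for a ring `B` and a left `B`-module `M`, the following are equivalent:
(1) for every ring `C`, every right `C`-module structure on `M` making it a
`(B,C)`-bimodule and every right `C`-module `X`, the right `B`-module `Hom_C(M,X)` is
hereditary projective (all of its submodules are projective);
(2) the character module `M⁺ = Hom_ℤ(M, ℚ/ℤ)` is hereditary `Π`-projective as a right
`B`-module (all submodules of all direct powers of `M⁺` are projective). -/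
theorem stmt_8 (B : Type) [Ring B] (M : Type) [AddCommGroup M] [Module B M] :
    (∀ (C : Type) [Ring C] [Module Cᵐᵒᵖ M] [SMulCommClass B Cᵐᵒᵖ M]
        (X : Type) [AddCommGroup X] [Module Cᵐᵒᵖ X]
        (N : Submodule Bᵐᵒᵖ (M →ₗ[Cᵐᵒᵖ] X)),
      Module.Projective Bᵐᵒᵖ N)
    ↔
    (∀ (ι : Type) (N : Submodule Bᵐᵒᵖ (ι → CharacterModule M)),
      Module.Projective Bᵐᵒᵖ N) := by
  constructor
  · intro h ι
    let := intOpModule M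
    let := intOpModule (ι → AddCircle (1 : ℚ))
    exact Module.HereditaryProjective.of_injective (h ℤ (ι → AddCircle (1 : ℚ)))
      (piToHom B M ι) (piToHom_injective B M ι)
  · intro h C _ _ _ X _ _
    exact Module.HereditaryProjective.of_injective (h (CharacterModule X))
      (homToPi B C M X) (homToPi_injective B C M X)
end

section
/- Let A be a left Noetherian ring and I a two-sided idempotent ideal of A such that ann_M(I) is a direct summand of M for every right A-module M. Then I = Ae for some idempotent e ∈ A. -/
/-!
If `M = M·I` and `ann_M(I)` has a complement `N'`, then `M·I ⊆ N'` because `I` kills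
`ann_M(I)`, so `ann_M(I) = 0`. When `I` is idempotent every module of the form `M·I` is its own
`I`-multiple, hence no nonzero element of `M·I` is killed by `I`.

Let `x = (a₁, …, aₙ)` list generators of the left ideal `I` and take `M = Aⁿ / x·I`. The class
of `x` lies in `M·I` and is killed by `I`, so it vanishes: `x = x·e` for some `e ∈ I`. Then
`a·e = a` for every `a ∈ I`, which makes `e` idempotent with `I = A·e`.
-/

open MulOpposite

variable (A : Type) [Ring A]

namespace Submodule

variable {R M : Type*} [Semiring R] [AddCommMonoid M] [Module R M]

theorem smul_top_le_of_codisjoint {J : Ideal R} {P N : Submodule R M} (hP : J • P = ⊥)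
    (hPN : Codisjoint P N) : J • (⊤ : Submodule R M) ≤ N :=
  calc J • ⊤ = J • (P ⊔ N) := by rw [hPN.eq_top]
    _ = J • N := by rw [smul_sup, hP, bot_sup_eq]
    _ ≤ N := smul_le_right

theorem eq_bot_of_isCompl_of_smul_top_eq_top {J : Ideal R} {P N : Submodule R M}
    (hP : J • P = ⊥) (hPN : IsCompl P N) (hJ : J • (⊤ : Submodule R M) = ⊤) : P = ⊥ := by
  have hN : N = ⊤ := top_le_iff.1 (hJ ▸ smul_top_le_of_codisjoint hP hPN.codisjoint)
  exact disjoint_top.1 (hN ▸ hPN.disjoint)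

theorem smul_top_eq_top_of_le_mul_self {J : Ideal R} (hJ : J ≤ J * J) :
    J • (⊤ : Submodule R (J • ⊤ : Submodule R M)) = ⊤ := by
  refine eq_top_iff.2 fun x _ => (mem_smul_top_iff J _ x).2 ?_
  have : J • (⊤ : Submodule R M) ≤ J • J • ⊤ := by
    rw [← Submodule.mul_smul]
    exact smul_mono_left hJ
  exact this x.2

end Submodule

theorem Ideal.mul_eq_self_of_mem_span {R : Type*} [Semiring R] {s : Set R} {c : R}
    (hs : ∀ a ∈ s, a * c = a) {a : R} (ha : a ∈ Ideal.span s) : a * c = a := by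
  induction ha using Submodule.span_induction with
  | mem b hb => exact hs b hb
  | zero => exact zero_mul c
  | add _ _ _ _ hu hv => rw [add_mul, hu, hv]
  | smul r _ _ hu => rw [smul_eq_mul, mul_assoc, hu]

section RightModule

variable {A}

/-- A two-sided ideal `I` as a right ideal of `A`, i.e. a left ideal of `Aᵐᵒᵖ`: for a right
`A`-module `M` the submodule `M·I` is then `I.opIdeal • ⊤`. -/
def Ideal.opIdeal (I : Ideal A) [I.IsTwoSided] : Ideal Aᵐᵒᵖ where
  carrier := {x | x.unop ∈ I}
  add_mem' := I.add_mem
  zero_mem' := I.zero_mem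
  smul_mem' c _ hx := I.mul_mem_right c.unop hx

variable (I : Ideal A) [I.IsTwoSided]

instance : I.opIdeal.IsTwoSided := ⟨fun b hx => I.mul_mem_left b.unop hx⟩

theorem Ideal.opIdeal_le_mul_self
    (hidem : ∀ a ∈ I, a ∈ AddSubgroup.closure {x : A | ∃ b ∈ I, ∃ c ∈ I, x = b * c}) :
    I.opIdeal ≤ I.opIdeal * I.opIdeal := by
  intro x hx
  obtain ⟨a, rfl⟩ : ∃ a, x = op a := ⟨x.unop, (op_unop x).symm⟩
  have ha := hidem a hx
  clear hx
  induction ha using AddSubgroup.closure_induction with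
  | mem _ h =>
    obtain ⟨b, hb, c, hc, rfl⟩ := h
    exact op_mul b c ▸ Submodule.mul_mem_mul hc hb
  | zero => exact zero_mem _
  | add u v _ _ hu hv => exact (op_add u v).symm ▸ add_mem hu hv
  | neg u _ hu => exact (op_neg u).symm ▸ neg_mem hu

variable {M : Type} [AddCommGroup M] [Module Aᵐᵒᵖ M]

theorem mem_rAnn_iff {m : M} : m ∈ rAnn A I M ↔ ∀ r ∈ I.opIdeal, r • m = 0 :=
  ⟨fun h r hr => op_unop r ▸ h r.unop hr, fun h a ha => h (op a) ha⟩

theorem opIdeal_smul_rAnn_eq_bot : I.opIdeal • rAnn A I M = ⊥ :=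
  eq_bot_iff.2 <| Submodule.smul_le.2 fun r hr _ hm =>
    (Submodule.mem_bot _).2 ((mem_rAnn_iff I).1 hm r hr)

theorem eq_zero_of_mem_smul_top_of_mem_rAnn (hI : I.opIdeal ≤ I.opIdeal * I.opIdeal)
    (hsplit : ∃ N', IsCompl (rAnn A I (I.opIdeal • ⊤ : Submodule Aᵐᵒᵖ M)) N')
    {m : M} (hm : m ∈ I.opIdeal • (⊤ : Submodule Aᵐᵒᵖ M)) (hann : m ∈ rAnn A I M) : m = 0 := by
  obtain ⟨N', hN'⟩ := hsplit
  have hbot := Submodule.eq_bot_of_isCompl_of_smul_top_eq_top (opIdeal_smul_rAnn_eq_bot I) hN'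
    (Submodule.smul_top_eq_top_of_le_mul_self hI)
  have : (⟨m, hm⟩ : (I.opIdeal • ⊤ : Submodule Aᵐᵒᵖ M)) ∈ rAnn A I _ :=
    fun a ha => Subtype.ext (hann a ha)
  simpa [hbot] using this

theorem pi_mem_opIdeal_smul_top {ι : Type*} [Fintype ι] {x : ι → A} (hx : ∀ i, x i ∈ I) :
    x ∈ I.opIdeal • (⊤ : Submodule Aᵐᵒᵖ (ι → A)) := by
  classical
  rw [← Finset.univ_sum_single x]
  refine Submodule.sum_mem _ fun i _ => ?_
  have : Pi.single i (x i) = op (x i) • (Pi.single i 1 : ι → A) := by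
    rw [← Pi.single_smul' i (op (x i)) (1 : A), op_smul_eq_mul, one_mul]
  exact this ▸ Submodule.smul_mem_smul (hx i) Submodule.mem_top

theorem Ideal.exists_mem_forall_mul_eq_self {ι : Type} [Fintype ι]
    (hI : I.opIdeal ≤ I.opIdeal * I.opIdeal)
    (hsplit : ∀ (M : Type) [AddCommGroup M] [Module Aᵐᵒᵖ M], ∃ N', IsCompl (rAnn A I M) N')
    {x : ι → A} (hx : ∀ i, x i ∈ I) : ∃ c ∈ I, ∀ i, x i * c = x i := by
  set S := I.opIdeal • Submodule.span Aᵐᵒᵖ {x}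
  have hm : S.mkQ x ∈ I.opIdeal • (⊤ : Submodule Aᵐᵒᵖ ((ι → A) ⧸ S)) := by
    have := Submodule.mem_map_of_mem (f := S.mkQ) (pi_mem_opIdeal_smul_top I hx)
    rwa [Submodule.map_smul'', Submodule.map_top, Submodule.range_mkQ] at this
  have hann : S.mkQ x ∈ rAnn A I _ := fun a ha => by
    rw [← map_smul, Submodule.mkQ_apply, Submodule.Quotient.mk_eq_zero]
    exact Submodule.smul_mem_smul ha (Submodule.mem_span_singleton_self x)
  have hx0 := eq_zero_of_mem_smul_top_of_mem_rAnn I hI (hsplit _) hm hann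
  rw [Submodule.mkQ_apply, Submodule.Quotient.mk_eq_zero, Submodule.mem_smul_span_singleton] at hx0
  obtain ⟨r, hr, hrx⟩ := hx0
  exact ⟨r.unop, hr, fun i => congr_fun hrx i⟩

theorem Ideal.exists_mem_forall_mul_eq_self_of_fg (hfg : I.FG)
    (hI : I.opIdeal ≤ I.opIdeal * I.opIdeal)
    (hsplit : ∀ (M : Type) [AddCommGroup M] [Module Aᵐᵒᵖ M], ∃ N', IsCompl (rAnn A I M) N') :
    ∃ c ∈ I, ∀ a ∈ I, a * c = a := by
  obtain ⟨s, hs⟩ := hfg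
  obtain ⟨c, hc, hsc⟩ := I.exists_mem_forall_mul_eq_self hI hsplit (x := ((↑) : s → A))
    fun i => hs ▸ Submodule.subset_span i.2
  exact ⟨c, hc, fun a ha => mul_eq_self_of_mem_span (fun b hb => hsc ⟨b, hb⟩) (hs ▸ ha)⟩

end RightModule

/-- if `A` is left Noetherian and `I` is a two-sided idempotent ideal of `A`
such that `ann_M(I)` is a direct summand of every right `A`-module `M`, then `I = Ae` for
some idempotent `e ∈ A`. -/
theorem stmt_11 [IsNoetherianRing A] (I : Ideal A)
    (hright : ∀ a ∈ I, ∀ b : A, a * b ∈ I)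
    (hidem : ∀ a ∈ I, a ∈ AddSubgroup.closure {x : A | ∃ b ∈ I, ∃ c ∈ I, x = b * c})
    (hsplit : ∀ (M : Type) [AddCommGroup M] [Module Aᵐᵒᵖ M],
      ∃ N' : Submodule Aᵐᵒᵖ M, rAnn A I M ⊓ N' = ⊥ ∧ rAnn A I M ⊔ N' = ⊤) :
    ∃ e : A, IsIdempotentElem e ∧ (I : Set A) = {x : A | ∃ a : A, x = a * e} := by
  have : I.IsTwoSided := ⟨fun b ha => hright _ ha b⟩
  obtain ⟨e, he, hae⟩ := I.exists_mem_forall_mul_eq_self_of_fg (IsNoetherian.noetherian I)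
    (I.opIdeal_le_mul_self hidem) fun M _ _ => (hsplit M).imp fun _ h => IsCompl.of_eq h.1 h.2
  refine ⟨e, hae e he, Set.ext fun a => ⟨fun ha => ⟨a, (hae a ha).symm⟩, ?_⟩⟩
  rintro ⟨b, rfl⟩
  exact I.mul_mem_left b he
end

section
/- Let A be a ring, I a two-sided idempotent ideal of A, and ε ∈ A an idempotent such that the left annihilator {a ∈ A : aI = 0} equals (1−ε)A. Then I ⊆ εAε, I is a two-sided idempotent ideal of the corner ring εAε, and the following are equivalent: (1) ann_M(I) is a direct summand of M for every right A-module M; (2) ann_X(I) is a direct summand of X for every right εAε-module X. -/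
open MulOpposite

variable (A : Type) [Ring A]

/-- `ann_X(I ∩ εAε)` for a right module `X` over the corner ring `εAε`. -/
def cornerAnn (I : Ideal A) (ε : A) (hε : ε * ε = ε) (X : Type) [AddCommGroup X]
    [Module (CornerRing A ε hε)ᵐᵒᵖ X] : Submodule (CornerRing A ε hε)ᵐᵒᵖ X where
  carrier := {x : X | ∀ j : CornerRing A ε hε, j.1 ∈ I → op j • x = 0}
  add_mem' := by
    intro x y hx hy j hj
    rw [smul_add, hx j hj, hy j hj, add_zero]
  zero_mem' := by
    intro j _
    rw [smul_zero]
  smul_mem' := by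
    intro c x hx j hj
    rw [smul_smul]
    have h1 : op j * c = op (c.unop * j) := by
      rw [op_mul, op_unop]
    rw [h1]
    exact hx (c.unop * j) (I.mul_mem_left c.unop.1 hj)

/-- let `I` be a two-sided idempotent ideal of `A` and `ε` an idempotent
with left annihilator `{a | aI = 0} = (1-ε)A`.  Then `I ⊆ εAε`, `I` is a two-sided
idempotent ideal of the corner ring `εAε`, and `ann_M(I)` is a direct summand of every
right `A`-module `M` if and only if `ann_X(I)` is a direct summand of every right
`εAε`-module `X`. -/
theorem stmt_12 (I : Ideal A)
    (hright : ∀ a ∈ I, ∀ b : A, a * b ∈ I)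
    (hidem : ∀ a ∈ I, a ∈ AddSubgroup.closure {x : A | ∃ b ∈ I, ∃ c ∈ I, x = b * c})
    (ε : A) (hε : ε * ε = ε)
    (hlann : {a : A | ∀ x ∈ I, a * x = 0} = {x : A | ∃ a : A, x = (1 - ε) * a}) :
    -- `I ⊆ εAε`
    ((I : Set A) ⊆ {x : A | ε * x * ε = x}) ∧
    -- `I` is a two-sided ideal of the corner ring `εAε`
    (∀ (c j : CornerRing A ε hε), j.1 ∈ I → (c * j).1 ∈ I ∧ (j * c).1 ∈ I) ∧
    -- which is idempotent
    (∀ j : CornerRing A ε hε, j.1 ∈ I →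
      j ∈ AddSubgroup.closure {y : CornerRing A ε hε |
        ∃ b : CornerRing A ε hε, b.1 ∈ I ∧ ∃ c : CornerRing A ε hε, c.1 ∈ I ∧ y = b * c}) ∧
    -- and the splitting conditions over `A` and over `εAε` are equivalent
    ((∀ (M : Type) [AddCommGroup M] [Module Aᵐᵒᵖ M],
        ∃ N' : Submodule Aᵐᵒᵖ M, rAnn A I M ⊓ N' = ⊥ ∧ rAnn A I M ⊔ N' = ⊤) ↔
     (∀ (X : Type) [AddCommGroup X] [Module (CornerRing A ε hε)ᵐᵒᵖ X],
        ∃ X' : Submodule (CornerRing A ε hε)ᵐᵒᵖ X,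
          cornerAnn A I ε hε X ⊓ X' = ⊥ ∧ cornerAnn A I ε hε X ⊔ X' = ⊤)) := by
  -- Step 0: basic consequences of hlann
  have hl1 : (1 - ε) ∈ {a : A | ∀ x ∈ I, a * x = 0} := by
    rw [hlann]; exact ⟨1, (mul_one _).symm⟩
  have key1 : ∀ a ∈ I, ε * a = a := by
    intro a ha
    have h := hl1 a ha
    rw [sub_mul, one_mul, sub_eq_zero] at h
    exact h.symm
  have key2 : ∀ a : A, ε * a * ε = ε * a := by
    intro a
    have hmem : ε * a * (1 - ε) ∈ {x : A | ∀ y ∈ I, x * y = 0} := by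
      intro y hy
      rw [mul_assoc, sub_mul, one_mul, key1 y hy, sub_self, mul_zero]
    rw [hlann] at hmem
    obtain ⟨b, hb⟩ := hmem
    have hz : ε * a * (1 - ε) = 0 := by
      calc ε * a * (1 - ε) = ε * (ε * a * (1 - ε)) := by
            rw [← mul_assoc, ← mul_assoc, hε]
        _ = ε * ((1 - ε) * b) := by rw [hb]
        _ = 0 := by rw [← mul_assoc, mul_sub, mul_one, hε, sub_self, zero_mul]
    rw [mul_sub, mul_one, sub_eq_zero] at hz
    exact hz.symm
  -- Part 1 : I ⊆ εAε
  have part1 : (I : Set A) ⊆ {x : A | ε * x * ε = x} := by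
    intro x hx
    show ε * x * ε = x
    rw [key2, key1 x hx]
  refine ⟨part1, ?_, ?_, ?_⟩
  -- Part 2 : I is a two-sided ideal of the corner ring
  · intro c j hj
    exact ⟨I.mul_mem_left c.1 hj, hright j.1 hj c.1⟩
  -- Part 3 : idempotency in the corner ring
  · intro j hj
    set SC := {y : CornerRing A ε hε |
          ∃ b : CornerRing A ε hε, b.1 ∈ I ∧ ∃ c : CornerRing A ε hε, c.1 ∈ I ∧ y = b * c}
      with hSC
    let ι : CornerRing A ε hε →+ A := AddMonoidHom.mk' (fun x => x.1) (fun x y => rfl)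
    have himg : ι '' SC = {x : A | ∃ b ∈ I, ∃ c ∈ I, x = b * c} := by
      ext x
      constructor
      · rintro ⟨y, ⟨b, hb, c, hc, rfl⟩, rfl⟩
        exact ⟨b.1, hb, c.1, hc, rfl⟩
      · rintro ⟨b, hb, c, hc, rfl⟩
        have hb' : ε * b * ε = b := part1 hb
        have hc' : ε * c * ε = c := part1 hc
        refine ⟨HMul.hMul (α := CornerRing A ε hε) ⟨b, hb'⟩ ⟨c, hc'⟩,
          ⟨⟨b, hb'⟩, hb, ⟨c, hc'⟩, hc, rfl⟩, rfl⟩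
    have hmap : (AddSubgroup.closure SC).map ι = AddSubgroup.closure (ι '' SC) :=
      AddMonoidHom.map_closure ι SC
    have hjmem : j.1 ∈ (AddSubgroup.closure SC).map ι := by
      rw [hmap, himg]; exact hidem j.1 hj
    obtain ⟨k, hk, hkj⟩ := hjmem
    have : k = j := Subtype.ext hkj
    rwa [← this]
  -- Part 4 : the equivalence of the splitting conditions
  · -- the ring hom `e : A →+* εAε`, `a ↦ εaε = εa`
    have hcmem : ∀ a : A, ε * (ε * a) * ε = ε * a := by
      intro a
      rw [← mul_assoc, hε, key2]
    let e : A →+* CornerRing A ε hε :=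
      { toFun := fun a => ⟨ε * a, hcmem a⟩
        map_one' := Subtype.ext (by show ε * 1 = ε; rw [mul_one])
        map_mul' := fun a b => Subtype.ext
          (by show ε * (a * b) = ε * a * (ε * b)
              rw [← mul_assoc, ← mul_assoc, key2])
        map_zero' := Subtype.ext (by show ε * 0 = 0; rw [mul_zero])
        map_add' := fun a b => Subtype.ext (by show ε * (a + b) = ε * a + ε * b; rw [mul_add]) }
    have he : ∀ j : CornerRing A ε hε, e j.1 = j :=
      fun j => Subtype.ext (absorb_left hε j.2)
    have heI : ∀ a ∈ I, (e a).1 = a := fun a ha => key1 a ha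
    constructor
    · -- (1) → (2)
      intro h X _ _
      letI : Module Aᵐᵒᵖ X := Module.compHom X (RingHom.op e)
      have hsmul : ∀ (a : A) (x : X), (op a : Aᵐᵒᵖ) • x = (op (e a)) • x := fun _ _ => rfl
      obtain ⟨N', hN1, hN2⟩ := h X
      have hmemEq : ∀ x : X, x ∈ rAnn A I X ↔ x ∈ cornerAnn A I ε hε X := by
        intro x
        constructor
        · intro hx j hj
          have := hx j.1 hj
          rwa [hsmul, he] at this
        · intro hx a ha
          rw [hsmul]
          have h1 : e a = ⟨a, part1 ha⟩ := Subtype.ext (heI a ha)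
          rw [h1]
          exact hx ⟨a, part1 ha⟩ ha
      refine ⟨{ carrier := (N' : Set X)
                add_mem' := fun hx hy => N'.add_mem hx hy
                zero_mem' := N'.zero_mem
                smul_mem' := ?_ }, ?_, ?_⟩
      · intro c x hx
        have h1 : c • x = (op (c.unop.1) : Aᵐᵒᵖ) • x := by
          rw [hsmul, he, op_unop]
        show c • x ∈ (N' : Set X)
        rw [h1]
        exact N'.smul_mem _ hx
      · rw [Submodule.eq_bot_iff]
        intro x hx
        rw [Submodule.mem_inf] at hx
        have : x ∈ rAnn A I X ⊓ N' :=
          Submodule.mem_inf.2 ⟨(hmemEq x).2 hx.1, hx.2⟩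
        rw [hN1] at this
        exact this
      · rw [eq_top_iff]
        intro x _
        have hx : x ∈ rAnn A I X ⊔ N' := by rw [hN2]; trivial
        obtain ⟨y, hy, z, hz, hyz⟩ := Submodule.mem_sup.1 hx
        exact Submodule.mem_sup.2 ⟨y, (hmemEq y).1 hy, z, hz, hyz⟩
    · -- (2) → (1)
      intro h M _ _
      -- `Mε` as a submodule of `M`
      have hMe_smul : ∀ (a : Aᵐᵒᵖ) (m : M), (op ε : Aᵐᵒᵖ) • m = m →
          (op ε : Aᵐᵒᵖ) • (a • m) = a • m := by
        intro a m hm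
        have ha : (op ε : Aᵐᵒᵖ) * (a * op ε) = a * op ε := by
          rw [← op_unop a, ← op_mul, ← op_mul]
          exact congrArg op (key2 a.unop)
        calc (op ε : Aᵐᵒᵖ) • a • m = (op ε : Aᵐᵒᵖ) • a • (op ε : Aᵐᵒᵖ) • m := by rw [hm]
          _ = ((op ε : Aᵐᵒᵖ) * (a * op ε)) • m := by rw [smul_smul, smul_smul, mul_assoc]
          _ = (a * op ε) • m := by rw [ha]
          _ = a • m := by rw [mul_smul, hm]
      let Me : Submodule Aᵐᵒᵖ M :=
        { carrier := {m : M | (op ε : Aᵐᵒᵖ) • m = m}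
          add_mem' := by
            intro x y hx hy
            show (op ε : Aᵐᵒᵖ) • (x + y) = x + y
            rw [smul_add, hx, hy]
          zero_mem' := smul_zero _
          smul_mem' := fun a m hm => hMe_smul a m hm }
      -- corner-module structure on `Mε`
      letI : SMul (CornerRing A ε hε)ᵐᵒᵖ ↥Me :=
        ⟨fun c x => ⟨(op c.unop.1 : Aᵐᵒᵖ) • x.1, by
          show (op ε : Aᵐᵒᵖ) • (op c.unop.1 : Aᵐᵒᵖ) • x.1 = _
          rw [smul_smul, ← op_mul, absorb_right hε c.unop.2]⟩⟩
      have hcs : ∀ (c : (CornerRing A ε hε)ᵐᵒᵖ) (x : ↥Me),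
          (c • x).1 = (op c.unop.1 : Aᵐᵒᵖ) • x.1 := fun _ _ => rfl
      letI : Module (CornerRing A ε hε)ᵐᵒᵖ ↥Me :=
        { one_smul := fun x => Subtype.ext (x.2)
          mul_smul := fun c d x => Subtype.ext (by
            show (op ((c * d).unop.1) : Aᵐᵒᵖ) • x.1
                = (op c.unop.1 : Aᵐᵒᵖ) • (op d.unop.1 : Aᵐᵒᵖ) • x.1
            rw [smul_smul, ← op_mul]
            rfl)
          smul_zero := fun c => Subtype.ext (by
            show (op c.unop.1 : Aᵐᵒᵖ) • (0 : M) = 0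
            rw [smul_zero])
          smul_add := fun c x y => Subtype.ext (by
            show (op c.unop.1 : Aᵐᵒᵖ) • (x.1 + y.1) = _
            rw [smul_add]
            rfl)
          add_smul := fun c d x => Subtype.ext (by
            show (op ((c + d).unop.1) : Aᵐᵒᵖ) • x.1 = _
            rw [show ((c + d).unop.1 : A) = c.unop.1 + d.unop.1 from rfl, op_add, add_smul]
            rfl)
          zero_smul := fun x => Subtype.ext (by
            show (op ((0 : (CornerRing A ε hε)ᵐᵒᵖ).unop.1) : Aᵐᵒᵖ) • x.1 = 0
            rw [show ((0 : (CornerRing A ε hε)ᵐᵒᵖ).unop.1 : A) = 0 from rfl, op_zero,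
              zero_smul]) }
      obtain ⟨X', hX1, hX2⟩ := h ↥Me
      -- the image of `X'` in `M`
      let N' : Submodule Aᵐᵒᵖ M :=
        { carrier := {m : M | ∃ x : ↥Me, x ∈ X' ∧ x.1 = m}
          add_mem' := by
            rintro m n ⟨x, hx, rfl⟩ ⟨y, hy, rfl⟩
            exact ⟨x + y, X'.add_mem hx hy, rfl⟩
          zero_mem' := ⟨0, X'.zero_mem, rfl⟩
          smul_mem' := by
            rintro a m ⟨x, hx, rfl⟩
            let j0 : CornerRing A ε hε := ⟨ε * a.unop, hcmem a.unop⟩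
            refine ⟨(op j0) • x, X'.smul_mem _ hx, ?_⟩
            rw [hcs]
            show (op (ε * a.unop) : Aᵐᵒᵖ) • x.1 = a • x.1
            have hx2 : (op ε : Aᵐᵒᵖ) • x.1 = x.1 := x.2
            calc (op (ε * a.unop) : Aᵐᵒᵖ) • x.1 = (op a.unop * op ε) • x.1 := by
                  rw [op_mul]
              _ = (a * op ε) • x.1 := by rw [op_unop]
              _ = a • (op ε : Aᵐᵒᵖ) • x.1 := by rw [mul_smul]
              _ = a • x.1 := by rw [hx2] }
      refine ⟨N', ?_, ?_⟩
      · rw [Submodule.eq_bot_iff]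
        intro m hm
        rw [Submodule.mem_inf] at hm
        obtain ⟨hm1, x, hx, rfl⟩ := hm
        have hxann : x ∈ cornerAnn A I ε hε (↥Me) := by
          intro j hj
          apply Subtype.ext
          rw [hcs]
          show (op (j.1) : Aᵐᵒᵖ) • x.1 = (0 : ↥Me).1
          rw [hm1 j.1 hj]
          rfl
        have : x ∈ cornerAnn A I ε hε (↥Me) ⊓ X' := Submodule.mem_inf.2 ⟨hxann, hx⟩
        rw [hX1] at this
        rw [Submodule.mem_bot] at this
        rw [this]
        rfl
      · rw [eq_top_iff]
        intro m _
        have hm1 : m - (op ε : Aᵐᵒᵖ) • m ∈ rAnn A I M := by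
          intro a ha
          rw [smul_sub, smul_smul, ← op_mul, key1 a ha, sub_self]
        have hm2mem : (op ε : Aᵐᵒᵖ) • m ∈ Me := by
          show (op ε : Aᵐᵒᵖ) • (op ε : Aᵐᵒᵖ) • m = _
          rw [smul_smul, ← op_mul, hε]
        have hm2top : (⟨(op ε : Aᵐᵒᵖ) • m, hm2mem⟩ : ↥Me) ∈ cornerAnn A I ε hε (↥Me) ⊔ X' := by
          rw [hX2]; trivial
        obtain ⟨y, hy, z, hz, hyz⟩ := Submodule.mem_sup.1 hm2top
        have hval : y.1 + z.1 = (op ε : Aᵐᵒᵖ) • m := congrArg Subtype.val hyz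
        have hy1 : y.1 ∈ rAnn A I M := by
          intro a ha
          have := hy (⟨a, part1 ha⟩ : CornerRing A ε hε) ha
          have hv := congrArg Subtype.val this
          rw [hcs] at hv
          exact hv
        refine Submodule.mem_sup.2 ⟨(m - (op ε : Aᵐᵒᵖ) • m) + y.1,
          (rAnn A I M).add_mem hm1 hy1, z.1, ⟨z, hz, rfl⟩, ?_⟩
        rw [add_assoc, hval, sub_add_cancel]
end

section
/- Let A be a ring and I a two-sided idempotent ideal of A. Then the following are equivalent: (1) for every integer n > 0 and every right ideal 𝔞 of the matrix ring Mₙ(A) that is Mₙ(I)-saturated (i.e., for x ∈ Mₙ(A), x·Mₙ(I) ⊆ 𝔞 implies x ∈ 𝔞), there exists x ∈ 𝔞 with (1ₙ − x)·𝔞 ⊆ Mₙ(I); (2) for every integer n > 0 and every I-saturated submodule K of the free right A-module Aⁿ (i.e., for x ∈ Aⁿ, x·I ⊆ K implies x ∈ K), the quotient Aⁿ/(K + Iⁿ) is projective as a right A/I-module, where Iⁿ denotes the submodule of n-tuples with all entries in I. -/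
/-!
Right ideals `𝔞` of `Mₙ(A)` correspond to submodules `K` of `Aⁿ`: `𝔞` consists of the matrices
whose columns lie in `K`, and `K` of the vectors whose constant-column matrix lies in `𝔞`. This
correspondence matches `Mₙ(I)`-saturation with `I`-saturation.

Over `Q = A/I` the module `Qⁿ` is free, so for the image `K̄` of `K` the quotient `Qⁿ/K̄` is
projective iff `K̄` is a retract of `Qⁿ`, i.e. iff some matrix `E` over `Q` has its columns in `K̄` and fixes `K̄`. Lifting the columns of
`E` to `K` gives `x ∈ 𝔞` with `v - x v ∈ Iⁿ` for all `v ∈ K`, which is `(1 - x)·𝔞 ⊆ Mₙ(I)`.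
-/

open MulOpposite

variable (A : Type) [Ring A]

/-- The ring congruence attached to a two-sided ideal `I` of `A`; its quotient is the
quotient ring `A/I`. -/
def idealCon (I : Ideal A) (hright : ∀ a ∈ I, ∀ b : A, a * b ∈ I) : RingCon A where
  r a b := a - b ∈ I
  iseqv := by
    refine ⟨fun a => by simpa using I.zero_mem, fun {a b} h => ?_, fun {a b c} h h' => ?_⟩
    · have := I.neg_mem h
      rwa [neg_sub] at this
    · have := I.add_mem h h'
      rwa [sub_add_sub_cancel] at this
  mul' := by
    intro w x y z h h'
    show w * y - x * z ∈ I
    have h1 : (w - x) * y ∈ I := hright _ h y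
    have h2 : x * (y - z) ∈ I := by simpa [smul_eq_mul] using I.smul_mem x h'
    have h3 := I.add_mem h1 h2
    have heq : (w - x) * y + x * (y - z) = w * y - x * z := by noncomm_ring
    rwa [heq] at h3
  add' := by
    intro w x y z h h'
    show w + y - (x + z) ∈ I
    have h3 := I.add_mem h h'
    have heq : w - x + (y - z) = w + y - (x + z) := by abel
    rwa [heq] at h3

open Matrix

section RightModules

variable {R : Type*} [Ring R]

theorem Submodule.projective_quotient_iff_exists_isProj {M : Type*} [AddCommGroup M] [Module R M]
    [Module.Projective R M] (p : Submodule R M) :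
    Module.Projective R (M ⧸ p) ↔ ∃ f : M →ₗ[R] M, LinearMap.IsProj p f := by
  constructor
  · intro _
    obtain ⟨σ, hσ⟩ := Module.projective_lifting_property p.mkQ LinearMap.id p.mkQ_surjective
    refine ⟨LinearMap.id - σ ∘ₗ p.mkQ, fun m => ?_, fun m hm => ?_⟩
    · have hσm : p.mkQ (σ (p.mkQ m)) = p.mkQ m := LinearMap.congr_fun hσ _
      refine (Submodule.Quotient.mk_eq_zero p).1 ?_
      simpa [sub_eq_zero] using hσm.symm
    · simp [(Submodule.Quotient.mk_eq_zero p).2 hm]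
  · rintro ⟨f, hf⟩
    refine .of_split (p.liftQ (LinearMap.id - f) fun m hm => ?_) p.mkQ ?_
    · simp [hf.map_id m hm]
    · refine p.linearMap_qext (LinearMap.ext fun m => ?_)
      simp [(Submodule.Quotient.mk_eq_zero p).2 (hf.map_mem m)]

variable (R) in
def MulOpposite.opLinearEquivSelf : R ≃ₗ[Rᵐᵒᵖ] Rᵐᵒᵖ :=
  { opAddEquiv with map_smul' := fun _ _ => rfl }

instance : Module.Free Rᵐᵒᵖ R := .of_equiv (opLinearEquivSelf R).symm

variable {ι : Type*} [Fintype ι]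

def Matrix.mulVecOpLin (E : Matrix ι ι R) : (ι → R) →ₗ[Rᵐᵒᵖ] (ι → R) where
  toFun := E.mulVec
  map_add' := E.mulVec_add
  map_smul' r v := by
    ext i
    simp [mulVec, dotProduct, smul_eq_mul_unop, Finset.sum_mul, mul_assoc]

theorem LinearMap.apply_eq_mulVec [DecidableEq ι] (f : (ι → R) →ₗ[Rᵐᵒᵖ] (ι → R)) (w : ι → R) :
    f w = (of fun i k => f (Pi.single k 1) i) *ᵥ w := by
  rw [mulVec_eq_sum]
  conv_lhs => rw [← Finset.univ_sum_single w]
  rw [map_sum]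
  refine Finset.sum_congr rfl fun k _ => ?_
  change _ = op (w k) • f (Pi.single k 1)
  rw [← map_smul]
  congr
  ext j
  simp [Pi.single_apply]

theorem exists_isProj_iff_exists_matrix [DecidableEq ι] (p : Submodule Rᵐᵒᵖ (ι → R)) :
    (∃ f : (ι → R) →ₗ[Rᵐᵒᵖ] (ι → R), LinearMap.IsProj p f) ↔
      ∃ E : Matrix ι ι R, (∀ k, E.col k ∈ p) ∧ ∀ y ∈ p, E *ᵥ y = y := by
  constructor
  · rintro ⟨f, hf⟩
    refine ⟨of fun i k => f (Pi.single k 1) i, fun k => hf.map_mem _, fun y hy => ?_⟩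
    rw [← f.apply_eq_mulVec, hf.map_id y hy]
  · rintro ⟨E, hcol, hfix⟩
    refine ⟨E.mulVecOpLin, fun w => ?_, hfix⟩
    rw [show E.mulVecOpLin w = _ from mulVec_eq_sum w E]
    exact p.sum_mem fun k _ => p.smul_mem _ (hcol k)

end RightModules

def Submodule.IsSaturated {R M : Type*} [Ring R] [AddCommGroup M] [Module Rᵐᵒᵖ M] (J : Set R)
    (N : Submodule Rᵐᵒᵖ M) : Prop :=
  ∀ x : M, (∀ a ∈ J, op a • x ∈ N) → x ∈ N

section ColumnIdeals

variable {R : Type*} [Ring R] {ι : Type*} [Fintype ι] [DecidableEq ι]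

theorem Matrix.col_mul_diagonal (x : Matrix ι ι R) (a : R) (k : ι) :
    (x * diagonal fun _ => a).col k = op a • x.col k := by
  ext i
  simp [mul_diagonal]

def Matrix.colIdeal (K : Submodule Rᵐᵒᵖ (ι → R)) : Submodule (Matrix ι ι R)ᵐᵒᵖ (Matrix ι ι R) where
  carrier := {x | ∀ k, x.col k ∈ K}
  zero_mem' _ := K.zero_mem
  add_mem' hx hy k := K.add_mem (hx k) (hy k)
  smul_mem' c x hx k := by
    rw [← op_unop c, op_smul_eq_mul, show (x * unop c).col k = x *ᵥ (unop c).col k from rfl,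
      mulVec_eq_sum]
    exact K.sum_mem fun j _ => K.smul_mem _ (hx j)

theorem Matrix.replicateCol_mem_colIdeal {K : Submodule Rᵐᵒᵖ (ι → R)} {v : ι → R} (hv : v ∈ K) :
    replicateCol ι v ∈ colIdeal K :=
  fun _ => hv

def Matrix.colSubmodule (𝔞 : Submodule (Matrix ι ι R)ᵐᵒᵖ (Matrix ι ι R)) :
    Submodule Rᵐᵒᵖ (ι → R) where
  carrier := {v | replicateCol ι v ∈ 𝔞}
  zero_mem' := by
    change replicateCol ι 0 ∈ 𝔞
    simp
  add_mem' {v w} hv hw := by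
    simpa only [Set.mem_ofPred_eq, replicateCol_add] using 𝔞.add_mem hv hw
  smul_mem' a v hv := by
    have : replicateCol ι (a • v) = op (diagonal fun _ : ι => unop a) • replicateCol ι v := by
      ext i j
      simp [mul_diagonal, smul_eq_mul_unop]
    simpa only [Set.mem_ofPred_eq, this] using 𝔞.smul_mem _ hv

theorem Matrix.colIdeal_colSubmodule (𝔞 : Submodule (Matrix ι ι R)ᵐᵒᵖ (Matrix ι ι R)) :
    colIdeal (colSubmodule 𝔞) = 𝔞 := by
  ext x
  refine ⟨fun hx => ?_, fun hx k => ?_⟩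
  · have hsum : x = ∑ k, op (diagonal (Pi.single k (1 : R))) • replicateCol ι (x.col k) := by
      ext i j
      simp [Matrix.sum_apply, mul_diagonal, Pi.single_apply]
    rw [hsum]
    exact 𝔞.sum_mem fun k _ => 𝔞.smul_mem _ (hx k)
  · show replicateCol ι (x.col k) ∈ 𝔞
    rw [← mulVec_single_one, replicateCol_mulVec, ← op_smul_eq_mul]
    exact 𝔞.smul_mem _ hx

theorem Submodule.IsSaturated.colIdeal {I : Ideal R} {K : Submodule Rᵐᵒᵖ (ι → R)}
    (hK : K.IsSaturated I) : (colIdeal K).IsSaturated (I.matrix ι) := by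
  intro x hx k
  refine hK _ fun a ha => ?_
  rw [← col_mul_diagonal]
  refine hx _ ?_ k
  intro i j
  by_cases h : i = j <;> simp [h, ha]

theorem Submodule.IsSaturated.colSubmodule {I : Ideal R}
    {𝔞 : Submodule (Matrix ι ι R)ᵐᵒᵖ (Matrix ι ι R)} (h𝔞 : 𝔞.IsSaturated (I.matrix ι)) :
    (colSubmodule 𝔞).IsSaturated I := by
  intro v hv
  refine h𝔞 _ fun y hy => ?_
  rw [← colIdeal_colSubmodule 𝔞]
  intro k
  have hcol : (op y • replicateCol ι v).col k = op (∑ l, y l k) • v := by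
    ext i
    simp [Matrix.mul_apply, Finset.mul_sum]
  rw [hcol]
  exact hv _ (I.sum_mem fun l _ => (I.mem_matrix _ _).1 hy l k)

theorem Matrix.forall_mem_colIdeal_one_sub_mul_mem_iff (I : Set R) (K : Submodule Rᵐᵒᵖ (ι → R))
    (x : Matrix ι ι R) :
    (∀ z ∈ colIdeal K, ∀ i j, ((1 - x) * z) i j ∈ I) ↔ ∀ v ∈ K, ∀ i, v i - (x *ᵥ v) i ∈ I := by
  have hmul (z : Matrix ι ι R) (i j : ι) : ((1 - x) * z) i j = z i j - (x *ᵥ z.col j) i := by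
    rw [Matrix.sub_mul, Matrix.one_mul]
    rfl
  refine ⟨fun h v hv i => ?_, fun h z hz i j => hmul z i j ▸ h _ (hz j) i⟩
  have := h _ (replicateCol_mem_colIdeal hv) i i
  rwa [hmul] at this

end ColumnIdeals

section Reduction

variable {R S : Type*} [Ring R] [Ring S] (φ : R →+* S) {ι : Type*}

theorem mem_span_setOf_map_iff (hφ : Function.Surjective φ) (K : Submodule Rᵐᵒᵖ (ι → R))
    (y : ι → S) :
    y ∈ Submodule.span Sᵐᵒᵖ {y | ∃ x ∈ K, y = fun i => φ (x i)} ↔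
      ∃ x ∈ K, y = fun i => φ (x i) := by
  refine ⟨fun hy => ?_, fun hy => Submodule.subset_span hy⟩
  induction hy using Submodule.span_induction with
  | mem y hy => exact hy
  | zero => exact ⟨0, K.zero_mem, by ext; simp⟩
  | add y z _ _ hy hz =>
    obtain ⟨v, hv, rfl⟩ := hy
    obtain ⟨w, hw, rfl⟩ := hz
    exact ⟨v + w, K.add_mem hv hw, by ext; simp⟩
  | smul r y _ hy =>
    obtain ⟨v, hv, rfl⟩ := hy
    obtain ⟨a, ha⟩ := hφ (unop r)
    exact ⟨op a • v, K.smul_mem _ hv, by ext; simp [smul_eq_mul_unop, ha]⟩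

theorem projective_quotient_span_setOf_map_iff [Fintype ι] [DecidableEq ι]
    (hφ : Function.Surjective φ) (K : Submodule Rᵐᵒᵖ (ι → R)) :
    Module.Projective Sᵐᵒᵖ
        ((ι → S) ⧸ Submodule.span Sᵐᵒᵖ {y | ∃ x ∈ K, y = fun i => φ (x i)}) ↔
      ∃ x ∈ colIdeal K, ∀ v ∈ K, ∀ i, φ (v i) = φ ((x *ᵥ v) i) := by
  simp only [Submodule.projective_quotient_iff_exists_isProj, exists_isProj_iff_exists_matrix,
    mem_span_setOf_map_iff φ hφ]
  constructor
  · rintro ⟨E, hcol, hfix⟩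
    choose c hcK hc using hcol
    have hE : E = (of c)ᵀ.map φ := by
      ext i k
      exact congr_fun (hc k) i
    refine ⟨(of c)ᵀ, hcK, fun v hv i => ?_⟩
    rw [RingHom.map_mulVec, ← hE]
    exact (congr_fun (hfix _ ⟨v, hv, rfl⟩) i).symm
  · rintro ⟨x, hx, hfix⟩
    refine ⟨x.map φ, fun k => ⟨x.col k, hx k, rfl⟩, ?_⟩
    rintro _ ⟨v, hv, rfl⟩
    ext i
    exact (RingHom.map_mulVec φ x v i).symm.trans (hfix v hv i).symm

end Reduction

variable {A} in
theorem projective_quotient_idealCon_iff {ι : Type*} [Fintype ι] [DecidableEq ι] (I : Ideal A)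
    (hright : ∀ a ∈ I, ∀ b : A, a * b ∈ I) (K : Submodule Aᵐᵒᵖ (ι → A)) :
    Module.Projective (idealCon A I hright).Quotientᵐᵒᵖ
        ((ι → (idealCon A I hright).Quotient) ⧸
          Submodule.span (idealCon A I hright).Quotientᵐᵒᵖ
            {y : ι → (idealCon A I hright).Quotient |
              ∃ x ∈ K, y = fun i => RingCon.mk' (idealCon A I hright) (x i)}) ↔
      ∃ x ∈ colIdeal K, ∀ z ∈ colIdeal K, ∀ i j, ((1 - x) * z) i j ∈ I := by
  have hmk (a b : A) :
      RingCon.mk' (idealCon A I hright) a = RingCon.mk' (idealCon A I hright) b ↔ a - b ∈ I :=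
    RingCon.eq _
  rw [projective_quotient_span_setOf_map_iff _ (RingCon.mk'_surjective _)]
  simp only [hmk]
  exact exists_congr fun x => and_congr_right fun _ =>
    (forall_mem_colIdeal_one_sub_mul_mem_iff (I : Set A) K x).symm

theorem stmt_13 (I : Ideal A)
    (hright : ∀ a ∈ I, ∀ b : A, a * b ∈ I) :
    (∀ n : ℕ, 0 < n →
      ∀ 𝔞 : Submodule (Matrix (Fin n) (Fin n) A)ᵐᵒᵖ (Matrix (Fin n) (Fin n) A),
        (∀ x : Matrix (Fin n) (Fin n) A,
          (∀ y : Matrix (Fin n) (Fin n) A, (∀ i j, y i j ∈ I) → op y • x ∈ 𝔞) → x ∈ 𝔞) →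
        ∃ x ∈ 𝔞, ∀ z ∈ 𝔞, ∀ i j, ((1 - x) * z) i j ∈ I)
    ↔
    (∀ n : ℕ, 0 < n →
      ∀ K : Submodule Aᵐᵒᵖ (Fin n → A),
        (∀ x : Fin n → A, (∀ a ∈ I, op a • x ∈ K) → x ∈ K) →
        Module.Projective (idealCon A I hright).Quotientᵐᵒᵖ
          ((Fin n → (idealCon A I hright).Quotient) ⧸
            Submodule.span (idealCon A I hright).Quotientᵐᵒᵖ
              {y : Fin n → (idealCon A I hright).Quotient |
                ∃ x ∈ K, y = fun i => RingCon.mk' (idealCon A I hright) (x i)})) := by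
  constructor
  · intro h n hn K hK
    exact (projective_quotient_idealCon_iff I hright K).2
      (h n hn _ (Submodule.IsSaturated.colIdeal hK))
  · intro h n hn 𝔞 h𝔞
    rw [← colIdeal_colSubmodule 𝔞]
    exact (projective_quotient_idealCon_iff I hright _).1
      (h n hn _ (Submodule.IsSaturated.colSubmodule h𝔞))
end

section
/- Let A be a ring and I a two-sided idempotent ideal of A such that {a ∈ A : aI = 0} = 0. Then the following are equivalent: (1) ann_M(I) is a direct summand of M for every right A-module M; (2) A/I is flat as a left A-module, and for every right A-module F with ann_F(I) = 0, the quotient F/FI is projective as a right A/I-module. -/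
open MulOpposite TensorProduct

variable (A : Type) [Ring A]

section QuotientRing

variable (I : Ideal A) (hright : ∀ a ∈ I, ∀ b : A, a * b ∈ I)
variable (F : Type) [AddCommGroup F] [Module Aᵐᵒᵖ F]

/-- `F/FI` is a right module over the quotient ring `A/I`. -/
instance quotSMul : SMul (idealCon A I hright).Quotientᵐᵒᵖ (F ⧸ rIdealSMul A I F) :=
  ⟨fun q z => Quotient.liftOn' q.unop (fun a => op a • z) (by
    intro a b h
    obtain ⟨m, rfl⟩ := Submodule.Quotient.mk_surjective _ z
    show op a • Submodule.Quotient.mk m = op b • Submodule.Quotient.mk m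
    rw [← Submodule.Quotient.mk_smul, ← Submodule.Quotient.mk_smul, Submodule.Quotient.eq]
    have : op a • m - op b • m = op (a - b) • m := by
      rw [← sub_smul]
      congr 1
    rw [this]
    exact Submodule.subset_span ⟨m, a - b, h, rfl⟩)⟩

instance quotMulAction :
    MulAction (idealCon A I hright).Quotientᵐᵒᵖ (F ⧸ rIdealSMul A I F) where
  one_smul z := one_smul Aᵐᵒᵖ z
  mul_smul q q' z := by
    induction q using MulOpposite.rec' with
    | h a =>
      induction q' using MulOpposite.rec' with
      | h b =>
        induction a using Quotient.inductionOn' with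
        | h a =>
          induction b using Quotient.inductionOn' with
          | h b => exact mul_smul (op a) (op b) z

instance quotDistribMulAction :
    DistribMulAction (idealCon A I hright).Quotientᵐᵒᵖ (F ⧸ rIdealSMul A I F) where
  smul_zero q := by
    induction q using MulOpposite.rec' with
    | h a =>
      induction a using Quotient.inductionOn' with
      | h a => exact smul_zero (op a)
  smul_add q z z' := by
    induction q using MulOpposite.rec' with
    | h a =>
      induction a using Quotient.inductionOn' with
      | h a => exact smul_add (op a) z z'

instance quotModule :
    Module (idealCon A I hright).Quotientᵐᵒᵖ (F ⧸ rIdealSMul A I F) where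
  add_smul q q' z := by
    induction q using MulOpposite.rec' with
    | h a =>
      induction q' using MulOpposite.rec' with
      | h b =>
        induction a using Quotient.inductionOn' with
        | h a =>
          induction b using Quotient.inductionOn' with
          | h b => exact add_smul (op a) (op b) z
  zero_smul z := zero_smul Aᵐᵒᵖ z

end QuotientRing

/-!
Write `t = ann_M(I)`, `F = M/t` and `Q = A/I`. Idempotency of `I` gives `ann_F(I) = 0`,
`(M ⊗ I)I = M ⊗ I`, and `t ⊗ I = 0` in `M ⊗ I`, so that `M ⊗ I ↪ F ⊗ I`. Since the kernel of the
multiplication `μ : M ⊗ I → M` is annihilated by `I`, purity of `I` (flatness of `A/I`) is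
equivalent to `ann_M(I) ∩ MI = 0` for every `M`.

If the annihilators split, `MI` lies in every complement of `ann_M(I)`; and for `ann_F(I) = 0`
the `I`-torsion of the pullback of a free `Q`-module `W ↠ F/FI` along `F → F/FI` is the kernel of
its projection onto `F`, so splitting it off makes `F/FI` a direct summand of `W`. Conversely, if
`F/FI` is projective the surjection `M/MI ↠ F/FI` splits, and when `t ∩ MI = 0` the preimage of
its image is a complement of `t`.
-/

section ModuleTheory

variable {R M P : Type*} [Ring R] [AddCommGroup M] [Module R M] [AddCommGroup P] [Module R P]

theorem LinearMap.exists_rightInverse_of_isCompl_ker (p : M →ₗ[R] P) (hp : Function.Surjective p)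
    {N : Submodule R M} (hN : IsCompl (LinearMap.ker p) N) :
    ∃ s : P →ₗ[R] M, p ∘ₗ s = LinearMap.id := by
  refine ⟨N.subtype ∘ₗ (Submodule.quotientEquivOfIsCompl _ N hN).toLinearMap ∘ₗ
    (p.quotKerEquivOfSurjective hp).symm.toLinearMap, LinearMap.ext fun y => ?_⟩
  set x := (p.quotKerEquivOfSurjective hp).symm y
  calc p (Submodule.quotientEquivOfIsCompl _ N hN x)
      = p.quotKerEquivOfSurjective hp (Submodule.Quotient.mk
          (Submodule.quotientEquivOfIsCompl _ N hN x : M)) := rfl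
    _ = y := by rw [Submodule.mk_quotientEquivOfIsCompl_apply, LinearEquiv.apply_symm_apply]

/-- `g` is, up to isomorphism, the projection `M/K → M/(t + K)`. -/
theorem Submodule.exists_isCompl_of_rightInverse {t K : Submodule R M} (hdisj : Disjoint t K)
    (g : M ⧸ K →ₗ[R] P) (hg : LinearMap.ker (g ∘ₗ K.mkQ) = t ⊔ K)
    (s : P →ₗ[R] M ⧸ K) (hs : g ∘ₗ s = LinearMap.id) : ∃ N, IsCompl t N := by
  have hgs : ∀ y, g (s y) = y := LinearMap.congr_fun hs
  refine ⟨(LinearMap.range s).comap K.mkQ, ?_, ?_⟩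
  · rw [Submodule.disjoint_def]
    rintro x hxt ⟨y, hy⟩
    have hx0 : g (K.mkQ x) = 0 := by
      rw [← LinearMap.comp_apply, ← LinearMap.mem_ker, hg]
      exact Submodule.mem_sup_left hxt
    have hxK : x ∈ K := by
      rw [← Submodule.Quotient.mk_eq_zero, ← Submodule.mkQ_apply, ← hy, ← hgs y, hy, hx0,
        map_zero]
    exact Submodule.disjoint_def.mp hdisj x hxt hxK
  · rw [codisjoint_iff, Submodule.eq_top_iff']
    intro m
    obtain ⟨w, hw⟩ := K.mkQ_surjective (s (g (K.mkQ m)))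
    have hmw : m - w ∈ t ⊔ K := by
      rw [← hg, LinearMap.mem_ker, LinearMap.comp_apply, map_sub, map_sub, hw, hgs, sub_self]
    have hKN : K ≤ (LinearMap.range s).comap K.mkQ := fun k hk =>
      ⟨0, by rw [map_zero, eq_comm, Submodule.mkQ_apply, Submodule.Quotient.mk_eq_zero]; exact hk⟩
    rw [← sub_add_cancel m w]
    exact Submodule.add_mem _ (sup_le_sup_left hKN t hmw)
      (Submodule.mem_sup_right ⟨_, hw.symm⟩)

end ModuleTheory

namespace Ideal

variable {A} {I : Ideal A}

theorem addMonoidHom_eq_zero_of_isIdempotentElem (hI : IsIdempotentElem I) {G : Type*}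
    [AddZeroClass G] (f : I →+ G)
    (hf : ∀ b ∈ I, ∀ c (hc : c ∈ I), f ⟨b * c, I.mul_mem_left b hc⟩ = 0) : f = 0 := by
  ext ⟨x, hx⟩
  have hxII : x ∈ I * I := hI.symm ▸ hx
  obtain ⟨_, hfx⟩ : ∃ h : x ∈ I, f ⟨x, h⟩ = 0 := by
    refine Submodule.mul_induction_on hxII (fun b hb c hc => ⟨_, hf b hb c hc⟩) ?_
    rintro y z ⟨hy, hfy⟩ ⟨hz, hfz⟩
    exact ⟨I.add_mem hy hz, by
      rw [show (⟨y + z, _⟩ : I) = ⟨y, hy⟩ + ⟨z, hz⟩ from rfl, map_add, hfy, hfz, add_zero]⟩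
  exact hfx

variable (I) [I.IsTwoSided]

instance : SMul Aᵐᵒᵖ I where
  smul c x := ⟨x * c.unop, I.mul_mem_right _ x.2⟩

instance : Module Aᵐᵒᵖ I :=
  Subtype.coe_injective.module Aᵐᵒᵖ I.subtype.toAddMonoidHom fun _ _ => rfl

instance : SMulCommClass Aᵐᵒᵖ A I where
  smul_comm c a x := Subtype.ext (mul_assoc a x c.unop)

end Ideal

namespace RTensor

variable {A} {M M' N N' P : Type} [AddCommGroup M] [Module Aᵐᵒᵖ M] [AddCommGroup M']
  [Module Aᵐᵒᵖ M'] [AddCommGroup N] [Module A N] [AddCommGroup N'] [Module A N']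
  [AddCommGroup P]

variable (A) in
noncomputable def tmul : M →+ N →+ RTensor A M N :=
  AddMonoidHom.mk'
    (fun m => (QuotientAddGroup.mk' (balancedRel A M N)).comp
      (TensorProduct.mk ℤ M N m).toAddMonoidHom)
    fun m m' => by
      ext n
      show QuotientAddGroup.mk' _ ((m + m') ⊗ₜ[ℤ] n) = QuotientAddGroup.mk' _ (m ⊗ₜ[ℤ] n) +
        QuotientAddGroup.mk' _ (m' ⊗ₜ[ℤ] n)
      rw [TensorProduct.add_tmul, map_add]

theorem smul_tmul (m : M) (a : A) (n : N) :
    tmul A (op a • m) n = tmul A m (a • n) :=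
  (QuotientAddGroup.eq_iff_sub_mem).mpr (AddSubgroup.subset_closure ⟨m, a, n, rfl⟩)

@[elab_as_elim]
theorem induction_on {p : RTensor A M N → Prop} (x : RTensor A M N) (zero : p 0)
    (tmul : ∀ m n, p (tmul A m n)) (add : ∀ x y, p x → p y → p (x + y)) : p x := by
  obtain ⟨y, rfl⟩ := QuotientAddGroup.mk'_surjective (balancedRel A M N) x
  induction y with
  | zero => exact zero
  | tmul m n => exact tmul m n
  | add y z hy hz => rw [map_add]; exact add _ _ hy hz

theorem addHom_ext {f g : RTensor A M N →+ P} (h : ∀ m n, f (tmul A m n) = g (tmul A m n)) :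
    f = g := by
  ext x
  induction x using induction_on with
  | zero => rw [map_zero, map_zero]
  | tmul m n => exact h m n
  | add x y hx hy => rw [map_add, map_add, hx, hy]

noncomputable def lift (f : M →+ N →+ P) (hf : ∀ m (a : A) n, f (op a • m) n = f m (a • n)) :
    RTensor A M N →+ P :=
  QuotientAddGroup.lift _
    (TensorProduct.liftAddHom f fun r m n => by
      rw [map_zsmul, AddMonoidHom.smul_apply, map_zsmul])
    (by
      rw [balancedRel, AddSubgroup.closure_le]
      rintro _ ⟨m, a, n, rfl⟩
      simp [hf])

noncomputable def lTensor (g : N →ₗ[A] N') : RTensor A M N →+ RTensor A M N' :=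
  lift ((tmul A).compl₂ g.toAddMonoidHom) fun m a n => by simp [smul_tmul]

noncomputable def rTensor (f : M →ₗ[Aᵐᵒᵖ] M') : RTensor A M N →+ RTensor A M' N :=
  lift ((tmul A).comp f.toAddMonoidHom) fun m a n => by simp [smul_tmul]

/-- The left inverse is `f m ⊗ n ↦ m ⊗ n`, well defined because `ker f ⊗ N` vanishes. -/
theorem rTensor_injective_of_tmul_eq_zero (f : M →ₗ[Aᵐᵒᵖ] M') (hf : Function.Surjective f)
    (h : ∀ m ∈ LinearMap.ker f, ∀ n : N, tmul A m n = 0) :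
    Function.Injective (rTensor (N := N) f) := by
  let φ : M' →+ N →+ RTensor A M N :=
    f.toAddMonoidHom.liftOfSurjective hf ⟨tmul A, fun m hm => by ext n; exact h m hm n⟩
  have hφ : ∀ m, φ (f m) = tmul A m := fun m =>
    f.toAddMonoidHom.liftOfRightInverse_comp_apply _ _ _ m
  let g : RTensor A M' N →+ RTensor A M N := lift φ fun m' a n => by
    obtain ⟨m, rfl⟩ := hf m'
    rw [← map_smul, hφ, hφ, smul_tmul]
  have hgf : g.comp (rTensor f) = .id _ := addHom_ext fun m n => by
    show φ (f m) n = tmul A m n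
    rw [hφ]
  exact Function.LeftInverse.injective (g := g) (DFunLike.congr_fun hgf)

noncomputable def rid : RTensor A M A →+ M :=
  lift ((smulAddHom Aᵐᵒᵖ M).comp opAddEquiv.toAddMonoidHom).flip fun m a b => by
    simp [mul_smul]

theorem rid_injective : Function.Injective (rid (A := A) (M := M)) := by
  refine Function.LeftInverse.injective (g := fun m => tmul A m 1) fun ξ => ?_
  induction ξ using induction_on with
  | zero => simp
  | tmul m b => show tmul A (op b • m) 1 = tmul A m b; rw [smul_tmul, smul_eq_mul, mul_one]
  | add x y hx hy => simp only [map_add, AddMonoidHom.add_apply] at hx hy ⊢; rw [hx, hy]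

section RightModule

variable [Module Aᵐᵒᵖ N] [SMulCommClass Aᵐᵒᵖ A N]

noncomputable def rightAction : Aᵐᵒᵖ →+* AddMonoid.End (RTensor A M N) where
  toFun c := lTensor (DistribSMul.toLinearMap A N c)
  map_one' := addHom_ext fun m n => by
    show tmul A m ((1 : Aᵐᵒᵖ) • n) = tmul A m n
    rw [one_smul]
  map_mul' c c' := addHom_ext fun m n => by
    show tmul A m ((c * c') • n) = tmul A m (c • c' • n)
    rw [mul_smul]
  map_zero' := addHom_ext fun m n => by
    show tmul A m ((0 : Aᵐᵒᵖ) • n) = 0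
    rw [zero_smul, map_zero]
  map_add' c c' := addHom_ext fun m n => by
    show tmul A m ((c + c') • n) = tmul A m (c • n) + tmul A m (c' • n)
    rw [add_smul, map_add]

noncomputable instance : Module Aᵐᵒᵖ (RTensor A M N) :=
  Module.compHom _ (rightAction (M := M) (N := N))

theorem smul_tmul_right (c : Aᵐᵒᵖ) (m : M) (n : N) : c • tmul A m n = tmul A m (c • n) :=
  rfl

end RightModule

end RTensor

section Annihilator

variable {A} {I : Ideal A} {M M' : Type} [AddCommGroup M] [Module Aᵐᵒᵖ M] [AddCommGroup M']
  [Module Aᵐᵒᵖ M']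

theorem rIdealSMul_le_of_codisjoint {N' : Submodule Aᵐᵒᵖ M} (h : Codisjoint (rAnn A I M) N') :
    rIdealSMul A I M ≤ N' := by
  rw [rIdealSMul, Submodule.span_le]
  rintro _ ⟨m, a, ha, rfl⟩
  obtain ⟨t, ht, n, hn, rfl⟩ := Submodule.mem_sup.mp (h.eq_top ▸ Submodule.mem_top : m ∈ _)
  rw [smul_add, ht a ha, zero_add]
  exact N'.smul_mem _ hn

theorem map_rIdealSMul (f : M →ₗ[Aᵐᵒᵖ] M') (hf : Function.Surjective f) :
    (rIdealSMul A I M).map f = rIdealSMul A I M' := by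
  rw [rIdealSMul, rIdealSMul, Submodule.map_span]
  congr 1
  ext x
  constructor
  · rintro ⟨_, ⟨m, a, ha, rfl⟩, rfl⟩
    exact ⟨f m, a, ha, map_smul f _ m⟩
  · rintro ⟨m', a, ha, rfl⟩
    obtain ⟨m, rfl⟩ := hf m'
    exact ⟨op a • m, ⟨m, a, ha, rfl⟩, map_smul f _ m⟩

theorem rAnn_quotient_rAnn_eq_bot (hI : IsIdempotentElem I) :
    rAnn A I (M ⧸ rAnn A I M) = ⊥ := by
  rw [Submodule.eq_bot_iff]
  intro z hz
  obtain ⟨m, rfl⟩ := Submodule.Quotient.mk_surjective _ z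
  rw [Submodule.Quotient.mk_eq_zero]
  have hmI : ∀ b ∈ I, op b • m ∈ rAnn A I M := fun b hb => by
    rw [← Submodule.Quotient.mk_eq_zero, Submodule.Quotient.mk_smul]
    exact hz b hb
  let f : I →+ M := AddMonoidHom.mk' (fun x => op (x : A) • m) fun x y => by
    rw [Submodule.coe_add, op_add, add_smul]
  have hf : f = 0 := Ideal.addMonoidHom_eq_zero_of_isIdempotentElem hI f fun b hb c hc => by
    show op (b * c) • m = 0
    rw [op_mul, mul_smul]
    exact hmI b hb c hc
  exact fun a ha => DFunLike.congr_fun hf ⟨a, ha⟩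

end Annihilator

namespace RTensor

variable {A}

theorem tmul_eq_zero_of_mem_rAnn {I : Ideal A} {M : Type} [AddCommGroup M] [Module Aᵐᵒᵖ M]
    (hI : IsIdempotentElem I) {m : M} (hm : m ∈ rAnn A I M) (x : I) : tmul A m x = 0 := by
  have hf := Ideal.addMonoidHom_eq_zero_of_isIdempotentElem hI (tmul A m) fun b hb c hc => by
    show tmul A m (b • (⟨c, hc⟩ : I)) = 0
    rw [← smul_tmul, hm b hb, map_zero, AddMonoidHom.zero_apply]
  exact DFunLike.congr_fun hf x

variable (I : Ideal A) [I.IsTwoSided] {M M' : Type} [AddCommGroup M] [Module Aᵐᵒᵖ M]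
  [AddCommGroup M'] [Module Aᵐᵒᵖ M']

variable (M) in
noncomputable def mulIdeal : RTensor A M I →ₗ[Aᵐᵒᵖ] M where
  toFun := rid.comp (pureMap A I M)
  map_add' := map_add _
  map_smul' c ξ := by
    induction ξ using induction_on with
    | zero => simp
    | tmul m x =>
      show op ((x : A) * c.unop) • m = c • op (x : A) • m
      rw [← mul_smul, op_mul, op_unop]
    | add ξ ζ hξ hζ => simp only [smul_add, map_add, hξ, hζ]

theorem mulIdeal_tmul (m : M) (x : I) : mulIdeal I M (tmul A m x) = op (x : A) • m := rfl

theorem injective_mulIdeal_iff :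
    Function.Injective (mulIdeal I M) ↔ Function.Injective (pureMap A I M) :=
  rid_injective.of_comp_iff _

theorem mulIdeal_rTensor (f : M →ₗ[Aᵐᵒᵖ] M') (ξ : RTensor A M I) :
    mulIdeal I M' (rTensor f ξ) = f (mulIdeal I M ξ) := by
  induction ξ using induction_on with
  | zero => simp
  | tmul m x => exact (map_smul f _ m).symm
  | add ξ ζ hξ hζ => simp only [map_add, hξ, hζ]

theorem op_smul_eq_tmul_mulIdeal {a : A} (ha : a ∈ I) (ξ : RTensor A M I) :
    op a • ξ = tmul A (mulIdeal I M ξ) ⟨a, ha⟩ := by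
  induction ξ using induction_on with
  | zero => simp
  | tmul m x =>
    rw [smul_tmul_right, mulIdeal_tmul, smul_tmul]
    rfl
  | add ξ ζ hξ hζ => rw [smul_add, hξ, hζ, map_add, map_add, AddMonoidHom.add_apply]

theorem ker_mulIdeal_le_rAnn : LinearMap.ker (mulIdeal I M) ≤ rAnn A I (RTensor A M I) :=
  fun ξ hξ a ha => by
    rw [op_smul_eq_tmul_mulIdeal I ha, LinearMap.mem_ker.mp hξ, map_zero, AddMonoidHom.zero_apply]

theorem rIdealSMul_le_range_mulIdeal : rIdealSMul A I M ≤ LinearMap.range (mulIdeal I M) := by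
  rw [rIdealSMul, Submodule.span_le]
  rintro _ ⟨m, a, ha, rfl⟩
  exact ⟨tmul A m ⟨a, ha⟩, rfl⟩

variable {I}

theorem rIdealSMul_eq_top (hI : IsIdempotentElem I) :
    rIdealSMul A I (RTensor A M I) = ⊤ := by
  rw [Submodule.eq_top_iff']
  intro ξ
  induction ξ using induction_on with
  | zero => exact Submodule.zero_mem _
  | tmul m x =>
    rw [← Submodule.Quotient.mk_eq_zero]
    have hf := Ideal.addMonoidHom_eq_zero_of_isIdempotentElem hI
      ((rIdealSMul A I (RTensor A M I)).mkQ.toAddMonoidHom.comp (tmul A m)) fun b hb c hc => by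
        show Submodule.Quotient.mk (tmul A m (op c • (⟨b, hb⟩ : I))) = 0
        rw [Submodule.Quotient.mk_eq_zero, ← smul_tmul_right]
        exact Submodule.subset_span ⟨_, c, hc, rfl⟩
    exact DFunLike.congr_fun hf x
  | add ξ ζ hξ hζ => exact Submodule.add_mem _ hξ hζ

end RTensor

section Flatness

variable {A} {I : Ideal A} [I.IsTwoSided]

open RTensor

theorem injective_mulIdeal_of_disjoint (hI : IsIdempotentElem I) {M : Type} [AddCommGroup M]
    [Module Aᵐᵒᵖ M]
    (h : Disjoint (rAnn A I (RTensor A M I)) (rIdealSMul A I (RTensor A M I))) :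
    Function.Injective (mulIdeal I M) := by
  rw [← LinearMap.ker_eq_bot, Submodule.eq_bot_iff]
  intro ξ hξ
  exact Submodule.disjoint_def.mp h ξ (ker_mulIdeal_le_rAnn I hξ)
    (by rw [rIdealSMul_eq_top hI]; exact Submodule.mem_top)

theorem disjoint_rAnn_rIdealSMul_of_injective_mulIdeal (hI : IsIdempotentElem I) {M : Type}
    [AddCommGroup M] [Module Aᵐᵒᵖ M] (hμ : Function.Injective (mulIdeal I (M ⧸ rAnn A I M))) :
    Disjoint (rAnn A I M) (rIdealSMul A I M) := by
  rw [Submodule.disjoint_def]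
  intro x hxt hxMI
  obtain ⟨ξ, rfl⟩ := rIdealSMul_le_range_mulIdeal I hxMI
  let π := (rAnn A I M).mkQ
  have hπξ : rTensor π ξ = rTensor (N := I) π 0 := hμ <| by
    rw [mulIdeal_rTensor, map_zero, map_zero, Submodule.mkQ_apply,
      Submodule.Quotient.mk_eq_zero]
    exact hxt
  have hξ : ξ = 0 := rTensor_injective_of_tmul_eq_zero π (Submodule.mkQ_surjective _)
    (fun m hm => tmul_eq_zero_of_mem_rAnn hI (by rwa [Submodule.ker_mkQ] at hm)) hπξ
  rw [hξ, map_zero]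

theorem forall_injective_pureMap_iff_disjoint (hI : IsIdempotentElem I) :
    (∀ (M : Type) [AddCommGroup M] [Module Aᵐᵒᵖ M], Function.Injective (pureMap A I M)) ↔
      ∀ (M : Type) [AddCommGroup M] [Module Aᵐᵒᵖ M], Disjoint (rAnn A I M) (rIdealSMul A I M) :=
  ⟨fun h _ _ _ =>
      disjoint_rAnn_rIdealSMul_of_injective_mulIdeal hI ((injective_mulIdeal_iff I).mpr (h _)),
    fun h _ _ _ => (injective_mulIdeal_iff I).mp (injective_mulIdeal_of_disjoint hI (h _))⟩

end Flatness

section QuotientScalars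

variable {A} {I : Ideal A} (hright : ∀ a ∈ I, ∀ b : A, a * b ∈ I)

def IsQuotientAction (X : Type) [AddCommGroup X] [Module Aᵐᵒᵖ X]
    [Module (idealCon A I hright).Quotientᵐᵒᵖ X] : Prop :=
  ∀ (a : A) (x : X), (op (a : (idealCon A I hright).Quotient)) • x = op a • x

variable {hright} {X Y : Type} [AddCommGroup X] [Module Aᵐᵒᵖ X]
  [Module (idealCon A I hright).Quotientᵐᵒᵖ X] [AddCommGroup Y] [Module Aᵐᵒᵖ Y]
  [Module (idealCon A I hright).Quotientᵐᵒᵖ Y]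

theorem isQuotientAction_quotient (F : Type) [AddCommGroup F] [Module Aᵐᵒᵖ F] :
    IsQuotientAction hright (F ⧸ rIdealSMul A I F) :=
  fun _ _ => rfl

def LinearMap.toQuotientLinear (hX : IsQuotientAction hright X) (hY : IsQuotientAction hright Y)
    (f : X →ₗ[Aᵐᵒᵖ] Y) : X →ₗ[(idealCon A I hright).Quotientᵐᵒᵖ] Y where
  toFun := f
  map_add' := f.map_add
  map_smul' q x := by
    induction q using MulOpposite.rec' with
    | h q =>
      induction q using Quotient.inductionOn' with
      | h a => exact (congrArg f (hX a x)).trans ((f.map_smul _ x).trans (hY a (f x)).symm)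

def LinearMap.ofQuotientLinear (hX : IsQuotientAction hright X) (hY : IsQuotientAction hright Y)
    (f : X →ₗ[(idealCon A I hright).Quotientᵐᵒᵖ] Y) : X →ₗ[Aᵐᵒᵖ] Y where
  toFun := f
  map_add' := f.map_add
  map_smul' c x := by
    induction c using MulOpposite.rec' with
    | h a => exact (congrArg f (hX a x).symm).trans ((f.map_smul _ x).trans (hY a (f x)))

theorem exists_rightInverse_of_projective [Module.Projective (idealCon A I hright).Quotientᵐᵒᵖ Y]
    (hX : IsQuotientAction hright X) (hY : IsQuotientAction hright Y) (g : X →ₗ[Aᵐᵒᵖ] Y)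
    (hg : Function.Surjective g) : ∃ s : Y →ₗ[Aᵐᵒᵖ] X, g ∘ₗ s = LinearMap.id := by
  obtain ⟨s, hs⟩ := Module.projective_lifting_property (g.toQuotientLinear hX hY) .id hg
  exact ⟨s.ofQuotientLinear hY hX, LinearMap.ext fun y => LinearMap.congr_fun hs y⟩

end QuotientScalars

section Splitting

variable {A} {I : Ideal A}

theorem exists_isCompl_rAnn_of_projective (hright : ∀ a ∈ I, ∀ b : A, a * b ∈ I) {M : Type}
    [AddCommGroup M] [Module Aᵐᵒᵖ M] (hdisj : Disjoint (rAnn A I M) (rIdealSMul A I M))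
    [Module.Projective (idealCon A I hright).Quotientᵐᵒᵖ
      ((M ⧸ rAnn A I M) ⧸ rIdealSMul A I (M ⧸ rAnn A I M))] :
    ∃ N', IsCompl (rAnn A I M) N' := by
  set t := rAnn A I M
  have hmap := map_rIdealSMul (I := I) t.mkQ t.mkQ_surjective
  let g := (rIdealSMul A I M).mapQ _ t.mkQ (Submodule.map_le_iff_le_comap.mp hmap.le)
  have hg : g ∘ₗ (rIdealSMul A I M).mkQ = (rIdealSMul A I (M ⧸ t)).mkQ ∘ₗ t.mkQ :=
    Submodule.mapQ_mkQ _ _ _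
  have hker : LinearMap.ker (g ∘ₗ (rIdealSMul A I M).mkQ) = t ⊔ rIdealSMul A I M := by
    rw [hg, LinearMap.ker_comp, Submodule.ker_mkQ, ← hmap, Submodule.comap_map_eq,
      Submodule.ker_mkQ, sup_comm]
  have hg_surj : Function.Surjective g := by
    refine Function.Surjective.of_comp (g := (rIdealSMul A I M).mkQ) ?_
    rw [← LinearMap.coe_comp, hg, LinearMap.coe_comp]
    exact (Submodule.mkQ_surjective _).comp (Submodule.mkQ_surjective _)
  obtain ⟨s, hs⟩ := exists_rightInverse_of_projective
    (isQuotientAction_quotient (hright := hright) M) (isQuotientAction_quotient _) g hg_surj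
  exact Submodule.exists_isCompl_of_rightInverse hdisj g hker s hs

/-- The projection onto `F` of the pullback `F ×_P W` has kernel the `I`-torsion of the pullback;
splitting it off gives a section. -/
theorem exists_lift_of_forall_isCompl
    (hsplit : ∀ (E : Type) [AddCommGroup E] [Module Aᵐᵒᵖ E], ∃ N', IsCompl (rAnn A I E) N')
    {F W P : Type} [AddCommGroup F] [Module Aᵐᵒᵖ F] [AddCommGroup W] [Module Aᵐᵒᵖ W]
    [AddCommGroup P] [Module Aᵐᵒᵖ P] (hF : rAnn A I F = ⊥) (hW : rAnn A I W = ⊤)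
    (g : W →ₗ[Aᵐᵒᵖ] P) (hg : Function.Surjective g) (π : F →ₗ[Aᵐᵒᵖ] P) :
    ∃ σ : F →ₗ[Aᵐᵒᵖ] W, g ∘ₗ σ = π := by
  let E := LinearMap.ker (π.coprod (-g))
  let p : E →ₗ[Aᵐᵒᵖ] F := (LinearMap.fst _ F W).comp E.subtype
  have hmemE : ∀ e : E, π (e : F × W).1 = g (e : F × W).2 := fun e => by
    have := LinearMap.mem_ker.mp e.2
    rwa [LinearMap.coprod_apply, LinearMap.neg_apply, ← sub_eq_add_neg, sub_eq_zero] at this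
  have hker : LinearMap.ker p = rAnn A I E := by
    ext e
    constructor
    · intro he a ha
      refine Subtype.ext (Prod.ext ?_ ?_)
      · show op a • (e : F × W).1 = 0
        rw [show (e : F × W).1 = 0 from he, smul_zero]
      · have he₂ : (e : F × W).2 ∈ rAnn A I W := hW ▸ Submodule.mem_top
        exact he₂ a ha
    · intro he
      show (e : F × W).1 = 0
      rw [← Submodule.mem_bot Aᵐᵒᵖ, ← hF]
      exact fun a ha => congrArg (fun e : E => (e : F × W).1) (he a ha)
  have hp : Function.Surjective p := fun f => by
    obtain ⟨w, hw⟩ := hg (π f)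
    exact ⟨⟨(f, w), LinearMap.mem_ker.mpr (by simp [hw])⟩, rfl⟩
  obtain ⟨N', hN'⟩ := hsplit E
  obtain ⟨s, hs⟩ := p.exists_rightInverse_of_isCompl_ker hp (hker ▸ hN')
  refine ⟨(LinearMap.snd _ F W).comp (E.subtype.comp s), LinearMap.ext fun f => ?_⟩
  show g (s f : F × W).2 = π f
  rw [← hmemE]
  exact congrArg π (LinearMap.congr_fun hs f)

theorem projective_of_forall_isCompl (hright : ∀ a ∈ I, ∀ b : A, a * b ∈ I)
    (hsplit : ∀ (E : Type) [AddCommGroup E] [Module Aᵐᵒᵖ E], ∃ N', IsCompl (rAnn A I E) N')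
    (F : Type) [AddCommGroup F] [Module Aᵐᵒᵖ F] (hF : rAnn A I F = ⊥) :
    Module.Projective (idealCon A I hright).Quotientᵐᵒᵖ (F ⧸ rIdealSMul A I F) := by
  let Q := (idealCon A I hright).Quotientᵐᵒᵖ
  let P := F ⧸ rIdealSMul A I F
  let _ : Module Aᵐᵒᵖ (P →₀ Q) := Module.compHom _ (RingCon.mk' (idealCon A I hright)).op
  have hW : IsQuotientAction hright (P →₀ Q) := fun _ _ => rfl
  have hWI : rAnn A I (P →₀ Q) = ⊤ := by
    refine Submodule.eq_top_iff'.mpr fun w a ha => ?_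
    rw [← hW, show ((a : (idealCon A I hright).Quotient)) = 0 from
      (RingCon.eq _).mpr (show a - 0 ∈ I by rwa [sub_zero]), op_zero, zero_smul]
  let tot : (P →₀ Q) →ₗ[Q] P := Finsupp.linearCombination Q id
  obtain ⟨σ, hσ⟩ := exists_lift_of_forall_isCompl hsplit hF hWI
    (tot.ofQuotientLinear hW (isQuotientAction_quotient F))
    (fun z => ⟨Finsupp.single z 1, show tot (Finsupp.single z 1) = z by simp [tot]⟩)
    (rIdealSMul A I F).mkQ
  have hσI : rIdealSMul A I F ≤ LinearMap.ker σ := by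
    rw [rIdealSMul, Submodule.span_le]
    rintro _ ⟨m, a, ha, rfl⟩
    rw [SetLike.mem_coe, LinearMap.mem_ker, map_smul]
    have hσm : σ m ∈ rAnn A I (P →₀ Q) := hWI ▸ Submodule.mem_top
    exact hσm a ha
  refine Module.Projective.of_split
    (((rIdealSMul A I F).liftQ σ hσI).toQuotientLinear (isQuotientAction_quotient F) hW) tot
    (LinearMap.ext fun z => ?_)
  obtain ⟨m, rfl⟩ := Submodule.mkQ_surjective _ z
  exact LinearMap.congr_fun hσ m

end Splitting

theorem stmt_14 (I : Ideal A)
    (hright : ∀ a ∈ I, ∀ b : A, a * b ∈ I)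
    (hidem : ∀ a ∈ I, a ∈ AddSubgroup.closure {x : A | ∃ b ∈ I, ∃ c ∈ I, x = b * c}) :
    (∀ (M : Type) [AddCommGroup M] [Module Aᵐᵒᵖ M],
        ∃ N' : Submodule Aᵐᵒᵖ M, rAnn A I M ⊓ N' = ⊥ ∧ rAnn A I M ⊔ N' = ⊤)
    ↔
    ((∀ (M : Type) [AddCommGroup M] [Module Aᵐᵒᵖ M],
        Function.Injective (pureMap A I M)) ∧
     (∀ (F : Type) [AddCommGroup F] [Module Aᵐᵒᵖ F], rAnn A I F = ⊥ →
        Module.Projective (idealCon A I hright).Quotientᵐᵒᵖ (F ⧸ rIdealSMul A I F))) := by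
  have : I.IsTwoSided := ⟨fun b ha => hright _ ha b⟩
  have hI : IsIdempotentElem I := le_antisymm Ideal.mul_le_right fun a ha =>
    (AddSubgroup.closure_le (I * I).toAddSubgroup).mpr
      (by rintro _ ⟨b, hb, c, hc, rfl⟩; exact Ideal.mul_mem_mul hb hc) (hidem a ha)
  have hcompl : ∀ (M : Type) [AddCommGroup M] [Module Aᵐᵒᵖ M] (N' : Submodule Aᵐᵒᵖ M),
      IsCompl (rAnn A I M) N' ↔ rAnn A I M ⊓ N' = ⊥ ∧ rAnn A I M ⊔ N' = ⊤ := fun _ _ _ _ => by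
    rw [isCompl_iff, disjoint_iff, codisjoint_iff]
  simp only [← hcompl, forall_injective_pureMap_iff_disjoint hI]
  constructor
  · intro hsplit
    refine ⟨fun M _ _ => ?_, projective_of_forall_isCompl hright hsplit⟩
    obtain ⟨N', hN'⟩ := hsplit M
    exact hN'.disjoint.mono_right (rIdealSMul_le_of_codisjoint hN'.codisjoint)
  · rintro ⟨hdisj, hproj⟩ M _ _
    have := hproj _ (rAnn_quotient_rAnn_eq_bot (M := M) hI)
    exact exists_isCompl_rAnn_of_projective hright (hdisj M)
end
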